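/- arXiv:2302.06720 — 11 statements merged into one kernel-verified Lean document; each statement's English description precedes it below -/
import Mathlib

section
/- Let X be a real or complex Banach space and let (T_n)_{n≥0} be a sequence of bounded, finite-rank operators on X such that T_nT_m(X) ⊆ T_m(X) and T_n*T_m*(X*) ⊆ T_m*(X*) for all m,n ≥ 0. Let Y be the norm-closure in X of the linear span of ⋃_{m≥0} T_m(X) and let Z be the norm-closure in X* of the linear span of ⋃_{m≥0} T_m*(X*). Then the following are equivalent: (i) T_n x → x weakly for all x ∈ X; (ii) T_n x → x in norm for all x ∈ X; (iii) T_n*φ → φ in the weak* topology for all φ ∈ X*; (iv) T_n*φ → φ weak* for all φ ∈ Z, Z is weak*-sequentially dense in X*, and Y = X; (v) T_n*φ → φ in norm for all φ ∈ Z, Z is weak*-sequentially dense in X*, and Y = X. If, in addition, X is reflexive, these are also equivalent to: (vi) T_n*φ → φ in norm for all φ ∈ X*. -/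
open Filter Topology

section AUXINCLUDE

variable {𝕜 : Type*} [RCLike 𝕜] {W : Type*} [NormedAddCommGroup W] [NormedSpace 𝕜 W]

/-- In a finite-dimensional normed space, convergence tested by all linear functionals
implies norm convergence. -/
lemma aux_B [FiniteDimensional 𝕜 W] (u : ℕ → W) (l : W)
    (h : ∀ g : W →ₗ[𝕜] 𝕜, Tendsto (fun n => g (u n)) atTop (𝓝 (g l))) :
    Tendsto u atTop (𝓝 l) := by
  let b := Module.finBasis 𝕜 W
  let e : W ≃ₗ[𝕜] (Fin (Module.finrank 𝕜 W) → 𝕜) := b.equivFun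
  have hce : Continuous e := by exact LinearMap.continuous_of_finiteDimensional e.toLinearMap
  have hces : Continuous e.symm := by exact LinearMap.continuous_of_finiteDimensional e.symm.toLinearMap
  have h1 : Tendsto (fun n => e (u n)) atTop (𝓝 (e l)) := by
    rw [tendsto_pi_nhds]
    intro i
    exact h ((LinearMap.proj (R := 𝕜) (φ := fun _ => 𝕜) i).comp (e : W →ₗ[𝕜] _))
  have h2 := (hces.tendsto (e l)).comp h1
  have : (⇑e.symm ∘ fun n => e (u n)) = u := by
    funext n; simp
  rw [this] at h2; simpa using h2

/-- In a finite-dimensional normed space, convergence tested by a separating set of linear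
functionals implies norm convergence. -/
lemma aux_D [FiniteDimensional 𝕜 W] (s : Set (W →ₗ[𝕜] 𝕜))
    (hs : ∀ y : W, (∀ g ∈ s, g y = 0) → y = 0) (u : ℕ → W) (l : W)
    (h : ∀ g ∈ s, Tendsto (fun n => g (u n)) atTop (𝓝 (g l))) :
    Tendsto u atTop (𝓝 l) := by
  have hspan : Submodule.span 𝕜 s = (⊤ : Submodule 𝕜 (Module.Dual 𝕜 W)) := by
    have hbot : (Submodule.span 𝕜 s).dualCoannihilator = ⊥ := by
      rw [eq_bot_iff]
      intro y hy
      have hy' : y ∈ ((Submodule.span 𝕜 s).dualCoannihilator : Set W) := hy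
      rw [Submodule.coe_dualCoannihilator_span] at hy'
      exact hs y hy'
    apply Submodule.eq_top_of_finrank_eq
    have := Subspace.finrank_add_finrank_dualCoannihilator_eq (Submodule.span 𝕜 s)
    rw [hbot] at this
    simp only [finrank_bot, add_zero] at this
    rw [this, Subspace.dual_finrank_eq]
  have hall : ∀ g : W →ₗ[𝕜] 𝕜, Tendsto (fun n => g (u n)) atTop (𝓝 (g l)) := by
    intro g
    have hg : g ∈ Submodule.span 𝕜 s := hspan ▸ Submodule.mem_top
    induction hg using Submodule.span_induction with
    | mem g hg => exact h g hg
    | zero => simpa using tendsto_const_nhds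
    | add g₁ g₂ _ _ h₁ h₂ => simpa using h₁.add h₂
    | smul c g _ hg => simpa using hg.const_smul c
  exact aux_B u l hall

/-- Finite-dimensional subspace version: norm convergence from convergence against a family
of continuous functionals separating the points of the subspace. -/
lemma aux_E (E : Submodule 𝕜 W) [FiniteDimensional 𝕜 E] (v : ℕ → W) (w : W)
    (hv : ∀ n, v n ∈ E) (hw : w ∈ E) (s : Set (W →L[𝕜] 𝕜))
    (hs : ∀ y ∈ E, (∀ φ ∈ s, φ y = 0) → y = 0)
    (h : ∀ φ ∈ s, Tendsto (fun n => φ (v n)) atTop (𝓝 (φ w))) :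
    Tendsto v atTop (𝓝 w) := by
  set u : ℕ → E := fun n => ⟨v n, hv n⟩ with hu
  have key : Tendsto u atTop (𝓝 (⟨w, hw⟩ : E)) := by
    apply aux_D ((fun φ : W →L[𝕜] 𝕜 => (φ : W →ₗ[𝕜] 𝕜).comp E.subtype) '' s)
    · rintro y hy
      have : (y : W) = 0 := by
        apply hs y y.2
        intro φ hφ
        exact hy _ ⟨φ, hφ, rfl⟩
      exact Subtype.ext this
    · rintro g ⟨φ, hφ, rfl⟩
      exact h φ hφ
  have := (continuous_subtype_val.tendsto _).comp key
  exact this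

/-- Uniformly Lipschitz sequence of maps converging pointwise on a set converges pointwise
on its closure. -/
lemma aux_F (A : ℕ → W → W) (M : ℝ) (hM0 : 0 ≤ M)
    (hLip : ∀ n (u v : W), ‖A n u - A n v‖ ≤ M * ‖u - v‖) (D : Set W)
    (hconv : ∀ y ∈ D, Tendsto (fun n => A n y) atTop (𝓝 y)) (x : W)
    (hx : x ∈ closure D) : Tendsto (fun n => A n x) atTop (𝓝 x) := by
  rw [Metric.tendsto_atTop]
  intro ε hε
  have hδ : 0 < ε / (2 * (M + 1)) := by positivity
  obtain ⟨y, hyD, hxy⟩ := Metric.mem_closure_iff.mp hx _ hδ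
  obtain ⟨N, hN⟩ := (Metric.tendsto_atTop.mp (hconv y hyD)) (ε / 2) (by positivity)
  refine ⟨N, fun n hn => ?_⟩
  have h1 : ‖A n x - A n y‖ ≤ M * ‖x - y‖ := hLip n x y
  calc dist (A n x) x ≤ dist (A n x) (A n y) + dist (A n y) y + dist y x :=
        dist_triangle4 _ _ _ _
    _ ≤ M * dist x y + ε / 2 + dist x y := by
        have h2 := (hN n hn).le
        rw [dist_eq_norm, dist_comm y x]
        exact add_le_add (add_le_add (by simpa [dist_eq_norm] using h1) h2) le_rfl
    _ = (M + 1) * dist x y + ε / 2 := by ring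
    _ < (M + 1) * (ε / (2 * (M + 1))) + ε / 2 := by
        have : (0:ℝ) < M + 1 := by linarith
        gcongr
    _ = ε / 2 + ε / 2 := by field_simp
    _ = ε := by ring

/-- For a closed subspace `N` and `x ∉ N` there is a continuous functional vanishing on `N`
but not at `x`. -/
lemma aux_G (N : Submodule 𝕜 W) (hN : IsClosed (N : Set W)) (x : W)
    (hx : x ∉ N) : ∃ f : W →L[𝕜] 𝕜, (∀ y ∈ N, f y = 0) ∧ f x ≠ 0 := by
  haveI : IsClosed (N : Set W) := hN
  have hmk : (Submodule.Quotient.mk x : W ⧸ N) ≠ 0 := by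
    simpa [Submodule.Quotient.mk_eq_zero] using hx
  obtain ⟨g, hg1, hg2⟩ := exists_dual_vector 𝕜 (Submodule.Quotient.mk x : W ⧸ N) (norm_ne_zero_iff.mpr hmk)
  have hmkQcont : Continuous (N.mkQ) := continuous_quot_mk
  let q : W →L[𝕜] (W ⧸ N) := ⟨N.mkQ, hmkQcont⟩
  refine ⟨g.comp q, fun y hy => ?_, ?_⟩
  · have : q y = 0 := by
      simp only [q, ContinuousLinearMap.coe_mk', Submodule.mkQ_apply]
      simpa [Submodule.Quotient.mk_eq_zero] using hy
    simp [ContinuousLinearMap.comp_apply, this]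
  · have : g (q x) = (‖(Submodule.Quotient.mk x : W ⧸ N)‖ : 𝕜) := hg2
    simp only [ContinuousLinearMap.comp_apply, this]
    simpa using (norm_ne_zero_iff).mpr hmk

lemma aux_bdd_of_tendsto {u : ℕ → W} {a : W} (h : Tendsto u atTop (𝓝 a)) :
    ∃ C, ∀ n, ‖u n‖ ≤ C := by
  have := (h.norm).bddAbove_range
  obtain ⟨C, hC⟩ := this
  exact ⟨C, fun n => hC ⟨n, rfl⟩⟩

/-- Weakly bounded sequences are norm bounded. -/
lemma aux_bdd_of_weak (v : ℕ → W)
    (h : ∀ φ : W →L[𝕜] 𝕜, ∃ C, ∀ n, ‖φ (v n)‖ ≤ C) : ∃ C, ∀ n, ‖v n‖ ≤ C := by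
  have hub := banach_steinhaus (g := fun n => NormedSpace.inclusionInDoubleDual 𝕜 W (v n)) ?_
  · obtain ⟨C, hC⟩ := hub
    refine ⟨C, fun n => ?_⟩
    have h1 := hC n
    have h2 : ‖v n‖ = ‖NormedSpace.inclusionInDoubleDual 𝕜 W (v n)‖ := by
      rw [NormedSpace.inclusionInDoubleDual]
      exact ((NormedSpace.inclusionInDoubleDualLi 𝕜).norm_map (v n)).symm
    · rw [h2]; exact h1
  · intro φ
    obtain ⟨C, hC⟩ := h φ
    exact ⟨C, fun n => by simpa using hC n⟩

/-- The span of the range of the adjoint of a finite-rank operator is finite-dimensional. -/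
lemma aux_fd {X : Type*} [NormedAddCommGroup X] [NormedSpace 𝕜 X] (T : X →L[𝕜] X)
    (hfr : FiniteDimensional 𝕜 (LinearMap.range (T : X →ₗ[𝕜] X))) :
    FiniteDimensional 𝕜 (Submodule.span 𝕜
      (Set.range fun φ : StrongDual 𝕜 X => φ.comp T)) := by
  haveI := hfr
  set E := LinearMap.range (T : X →ₗ[𝕜] X)
  let Tcor : X →L[𝕜] E := T.codRestrict E (fun x => LinearMap.mem_range_self _ x)
  let A : (E →L[𝕜] 𝕜) →ₗ[𝕜] (X →L[𝕜] 𝕜) :=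
    { toFun := fun f => f.comp Tcor
      map_add' := fun f g => ContinuousLinearMap.add_comp f g Tcor
      map_smul' := fun c f => ContinuousLinearMap.smul_comp c f Tcor }
  haveI : FiniteDimensional 𝕜 (E →L[𝕜] 𝕜) := inferInstance
  have hle : Submodule.span 𝕜 (Set.range fun φ : StrongDual 𝕜 X => φ.comp T) ≤
      LinearMap.range A := by
    rw [Submodule.span_le]
    rintro _ ⟨φ, rfl⟩
    exact ⟨φ.comp E.subtypeL, rfl⟩
  exact Submodule.finiteDimensional_of_le hle
end AUXINCLUDE

set_option maxHeartbeats 1000000 in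
/-- **Theorem 2.1.** Let `X` be a Banach space and `(T n)` a sequence of bounded finite-rank
operators such that `T n (T m (X)) ⊆ T m (X)` and `T n * (T m * (X*)) ⊆ T m * (X*)` for all
`m, n`. With `Y` the norm-closure of the span of the ranges of the `T m`, and `Z` the
norm-closure of the span of the ranges of the adjoints `T m *`, the statements
(i) `T n x → x` weakly for all `x`; (ii) `T n x → x` in norm for all `x`;
(iii) `T n * φ → φ` weak* for all `φ ∈ X*`;
(iv) `T n * φ → φ` weak* for all `φ ∈ Z`, `Z` is weak*-sequentially dense in `X*`, and `Y = X`;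
(v) `T n * φ → φ` in norm for all `φ ∈ Z`, `Z` is weak*-sequentially dense in `X*`, and `Y = X`
are all equivalent; and if moreover `X` is reflexive, they are equivalent to
(vi) `T n * φ → φ` in norm for all `φ ∈ X*`. -/
theorem banach_norm_norm {𝕜 X : Type*} [RCLike 𝕜] [NormedAddCommGroup X] [NormedSpace 𝕜 X]
    [CompleteSpace X] (T : ℕ → X →L[𝕜] X)
    (hfr : ∀ n, FiniteDimensional 𝕜 (LinearMap.range (T n : X →ₗ[𝕜] X)))
    (hinv : ∀ m n : ℕ, ∀ x : X, T n (T m x) ∈ LinearMap.range (T m : X →ₗ[𝕜] X))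
    (hinv' : ∀ m n : ℕ, ∀ φ : StrongDual 𝕜 X, ∃ ψ : StrongDual 𝕜 X,
      (φ.comp (T m)).comp (T n) = ψ.comp (T m)) :
    let Y : Set X :=
      closure (Submodule.span 𝕜 (⋃ m, (LinearMap.range (T m : X →ₗ[𝕜] X) : Set X)) : Set X)
    let Z : Set (StrongDual 𝕜 X) :=
      closure (Submodule.span 𝕜
        (⋃ m, Set.range fun φ : StrongDual 𝕜 X => φ.comp (T m)) :
          Set (StrongDual 𝕜 X))
    ([(∀ x : X, ∀ φ : StrongDual 𝕜 X, Tendsto (fun n => φ (T n x)) atTop (𝓝 (φ x))),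
      (∀ x : X, Tendsto (fun n => T n x) atTop (𝓝 x)),
      (∀ φ : StrongDual 𝕜 X, ∀ x : X,
        Tendsto (fun n => (φ.comp (T n)) x) atTop (𝓝 (φ x))),
      ((∀ φ ∈ Z, ∀ x : X, Tendsto (fun n => (φ.comp (T n)) x) atTop (𝓝 (φ x))) ∧
        (∀ φ : StrongDual 𝕜 X, ∃ ψ : ℕ → StrongDual 𝕜 X,
          (∀ j, ψ j ∈ Z) ∧ ∀ x : X, Tendsto (fun j => ψ j x) atTop (𝓝 (φ x))) ∧
        Y = Set.univ),
      ((∀ φ ∈ Z, Tendsto (fun n => φ.comp (T n)) atTop (𝓝 φ)) ∧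
        (∀ φ : StrongDual 𝕜 X, ∃ ψ : ℕ → StrongDual 𝕜 X,
          (∀ j, ψ j ∈ Z) ∧ ∀ x : X, Tendsto (fun j => ψ j x) atTop (𝓝 (φ x))) ∧
        Y = Set.univ)].TFAE) ∧
    (Function.Surjective (NormedSpace.inclusionInDoubleDual 𝕜 X) →
      ((∀ x : X, ∀ φ : StrongDual 𝕜 X, Tendsto (fun n => φ (T n x)) atTop (𝓝 (φ x))) ↔
        (∀ φ : StrongDual 𝕜 X, Tendsto (fun n => φ.comp (T n)) atTop (𝓝 φ)))) := by
  intro Y Z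
  set S : Submodule 𝕜 X := Submodule.span 𝕜 (⋃ m, (LinearMap.range (T m : X →ₗ[𝕜] X) : Set X)) with hSdef
  set Zs : Submodule 𝕜 (StrongDual 𝕜 X) := Submodule.span 𝕜
    (⋃ m, Set.range fun φ : StrongDual 𝕜 X => φ.comp (T m)) with hZsdef
  -- basic membership facts
  have hTmem : ∀ (n : ℕ) (x : X), T n x ∈ S :=
    fun n x => Submodule.subset_span (Set.mem_iUnion.mpr ⟨n, ⟨x, rfl⟩⟩)
  have hZmem : ∀ (m : ℕ) (φ : StrongDual 𝕜 X), φ.comp (T m) ∈ Zs :=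
    fun m φ => Submodule.subset_span (Set.mem_iUnion.mpr ⟨m, ⟨φ, rfl⟩⟩)
  have hZmemZ : ∀ (m : ℕ) (φ : StrongDual 𝕜 X), φ.comp (T m) ∈ Z :=
    fun m φ => subset_closure (hZmem m φ)
  -- convergence on the span from convergence on the generators
  have span_conv : (∀ m, ∀ y ∈ LinearMap.range (T m : X →ₗ[𝕜] X), Tendsto (fun n => T n y) atTop (𝓝 y)) →
      ∀ y ∈ S, Tendsto (fun n => T n y) atTop (𝓝 y) := by
    intro hgen y hy
    rw [hSdef] at hy
    induction hy using Submodule.span_induction with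
    | mem y hy =>
      obtain ⟨m, hm⟩ := Set.mem_iUnion.mp hy
      exact hgen m y hm
    | zero => simpa using tendsto_const_nhds
    | add a b _ _ ha hb => simpa [map_add] using ha.add hb
    | smul c a _ ha => simpa [map_smul] using ha.const_smul c
  -- ε/3 extension to all of X
  have norm_of : (∃ C, 0 ≤ C ∧ ∀ n, ‖T n‖ ≤ C) → (∀ x : X, x ∈ closure (S : Set X)) →
      (∀ y ∈ S, Tendsto (fun n => T n y) atTop (𝓝 y)) →
      ∀ x : X, Tendsto (fun n => T n x) atTop (𝓝 x) := by
    rintro ⟨C, hC0, hC⟩ hdense hspan x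
    refine aux_F (fun n z => T n z) C hC0 (fun n u v => ?_) (S : Set X) hspan x (hdense x)
    have h1 := (T n).le_opNorm (u - v)
    rw [map_sub] at h1
    exact h1.trans (mul_le_mul_of_nonneg_right (hC n) (norm_nonneg _))
  -- uniform boundedness from weak convergence
  have bdd_of_P1 : (∀ x : X, ∀ φ : StrongDual 𝕜 X,
      Tendsto (fun n => φ (T n x)) atTop (𝓝 (φ x))) → ∃ C, 0 ≤ C ∧ ∀ n, ‖T n‖ ≤ C := by
    intro h1
    obtain ⟨C, hC⟩ := banach_steinhaus (g := T)
      (fun x => aux_bdd_of_weak (fun n => T n x) (fun φ => aux_bdd_of_tendsto (h1 x φ)))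
    exact ⟨max C 0, le_max_right _ _, fun n => (hC n).trans (le_max_left _ _)⟩
  -- density from weak convergence (Mazur-type argument)
  have dense_of_P1 : (∀ x : X, ∀ φ : StrongDual 𝕜 X,
      Tendsto (fun n => φ (T n x)) atTop (𝓝 (φ x))) →
      ∀ x : X, x ∈ closure (S : Set X) := by
    intro h1 x
    by_contra hx
    have hx' : x ∉ S.topologicalClosure := by
      intro hmem
      exact hx (by rwa [← Submodule.topologicalClosure_coe])
    obtain ⟨f, hf0, hfx⟩ := aux_G S.topologicalClosure
      (Submodule.isClosed_topologicalClosure S) x hx'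
    have hz : ∀ n, f (T n x) = 0 :=
      fun n => hf0 _ (Submodule.le_topologicalClosure S (hTmem n x))
    have hten := h1 x f
    rw [show (fun n => f (T n x)) = fun _ => (0 : 𝕜) from funext hz] at hten
    exact hfx (tendsto_nhds_unique tendsto_const_nhds hten).symm
  -- convergence on the generating ranges from weak convergence
  have gen_of_P1 : (∀ x : X, ∀ φ : StrongDual 𝕜 X,
      Tendsto (fun n => φ (T n x)) atTop (𝓝 (φ x))) →
      ∀ m, ∀ y ∈ LinearMap.range (T m : X →ₗ[𝕜] X), Tendsto (fun n => T n y) atTop (𝓝 y) := by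
    intro h1 m y hy
    haveI := hfr m
    obtain ⟨x, rfl⟩ := hy
    exact aux_E (LinearMap.range (T m : X →ₗ[𝕜] X)) (fun n => T n (T m x)) (T m x)
      (fun n => hinv m n x) (LinearMap.mem_range_self _ x) Set.univ
      (fun y _ hφ => NormedSpace.eq_zero_of_forall_dual_eq_zero 𝕜 (fun f => hφ f trivial))
      (fun φ _ => h1 (T m x) φ)
  -- (i) ⇒ (ii)
  have himp12 : (∀ x : X, ∀ φ : StrongDual 𝕜 X,
      Tendsto (fun n => φ (T n x)) atTop (𝓝 (φ x))) →
      ∀ x : X, Tendsto (fun n => T n x) atTop (𝓝 x) := by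
    intro h1
    exact norm_of (bdd_of_P1 h1) (dense_of_P1 h1) (span_conv (gen_of_P1 h1))
  -- (ii) ⇒ (i)
  have himp21 : (∀ x : X, Tendsto (fun n => T n x) atTop (𝓝 x)) →
      ∀ x : X, ∀ φ : StrongDual 𝕜 X,
        Tendsto (fun n => φ (T n x)) atTop (𝓝 (φ x)) :=
    fun h2 x φ => (φ.continuous.tendsto x).comp (h2 x)
  -- (ii) ⇒ (iv)
  have himp24 : (∀ x : X, Tendsto (fun n => T n x) atTop (𝓝 x)) →
      ((∀ φ ∈ Z, ∀ x : X, Tendsto (fun n => (φ.comp (T n)) x) atTop (𝓝 (φ x))) ∧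
        (∀ φ : StrongDual 𝕜 X, ∃ ψ : ℕ → StrongDual 𝕜 X,
          (∀ j, ψ j ∈ Z) ∧ ∀ x : X, Tendsto (fun j => ψ j x) atTop (𝓝 (φ x))) ∧
        Y = Set.univ) := by
    intro h2
    refine ⟨fun φ _ x => (φ.continuous.tendsto _).comp (h2 x),
      fun φ => ⟨fun j => φ.comp (T j), fun j => hZmemZ j φ,
        fun x => (φ.continuous.tendsto _).comp (h2 x)⟩, ?_⟩
    exact Set.eq_univ_iff_forall.mpr fun x =>
      mem_closure_of_tendsto (h2 x) (Eventually.of_forall fun n => hTmem n x)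
  -- (iv) ⇒ (ii)
  have himp42 : ((∀ φ ∈ Z, ∀ x : X, Tendsto (fun n => (φ.comp (T n)) x) atTop (𝓝 (φ x))) ∧
        (∀ φ : StrongDual 𝕜 X, ∃ ψ : ℕ → StrongDual 𝕜 X,
          (∀ j, ψ j ∈ Z) ∧ ∀ x : X, Tendsto (fun j => ψ j x) atTop (𝓝 (φ x))) ∧
        Y = Set.univ) → ∀ x : X, Tendsto (fun n => T n x) atTop (𝓝 x) := by
    rintro ⟨ha, hb, hc⟩
    -- Z separates the points of X
    have hsepZ : ∀ y : X, (∀ φ ∈ Z, φ y = 0) → y = 0 := by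
      intro y hy
      apply NormedSpace.eq_zero_of_forall_dual_eq_zero 𝕜
      intro ψ
      obtain ⟨ψj, hmem, hconv⟩ := hb ψ
      have h0 : ∀ j, ψj j y = 0 := fun j => hy _ (hmem j)
      have hten := hconv y
      rw [show (fun j => ψj j y) = fun _ => (0 : 𝕜) from funext h0] at hten
      exact (tendsto_nhds_unique tendsto_const_nhds hten).symm
    -- norm convergence on the generating ranges
    have hgen : ∀ m, ∀ y ∈ LinearMap.range (T m : X →ₗ[𝕜] X), Tendsto (fun n => T n y) atTop (𝓝 y) := by
      intro m y hy
      haveI := hfr m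
      obtain ⟨x, rfl⟩ := hy
      exact aux_E (LinearMap.range (T m : X →ₗ[𝕜] X)) (fun n => T n (T m x)) (T m x)
        (fun n => hinv m n x) (LinearMap.mem_range_self _ x) Z
        (fun y _ h => hsepZ y h) (fun φ hφ => ha φ hφ (T m x))
    -- pointwise boundedness
    have hbx : ∀ x : X, ∃ C, ∀ n, ‖T n x‖ ≤ C := by
      intro x
      haveI : CompleteSpace (Zs.topologicalClosure) :=
        (Submodule.isClosed_topologicalClosure Zs).completeSpace_coe
      set e : ℕ → (Zs.topologicalClosure) →L[𝕜] 𝕜 := fun n =>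
        (NormedSpace.inclusionInDoubleDual 𝕜 X (T n x)).comp
          (Zs.topologicalClosure).subtypeL with he
      have hptw : ∀ ψ : Zs.topologicalClosure, ∃ C, ∀ n, ‖e n ψ‖ ≤ C := by
        intro ψ
        have hmemZ : (ψ : StrongDual 𝕜 X) ∈ Z := by
          show (ψ : StrongDual 𝕜 X) ∈ closure (Zs : Set (StrongDual 𝕜 X))
          rw [← Submodule.topologicalClosure_coe]
          exact ψ.2
        exact aux_bdd_of_tendsto (ha (ψ : StrongDual 𝕜 X) hmemZ x)
      obtain ⟨M1, hM1⟩ := banach_steinhaus (𝕜 := 𝕜) (𝕜₂ := 𝕜) (E := Zs.topologicalClosure) (F := 𝕜) (σ₁₂ := RingHom.id 𝕜) (ι := ℕ) (g := e) (fun ψ => by convert hptw ψ using 0)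
      have hM10 : 0 ≤ M1 := le_trans (norm_nonneg _) (hM1 0)
      have hM1' : ∀ ψ : StrongDual 𝕜 X, ψ ∈ Z → ∀ n, ‖ψ (T n x)‖ ≤ M1 * ‖ψ‖ := by
        intro ψ hψ n
        have hmem : ψ ∈ Zs.topologicalClosure := by
          have : ψ ∈ (Zs.topologicalClosure : Set (StrongDual 𝕜 X)) := by
            rw [Submodule.topologicalClosure_coe]; exact hψ
          exact this
        calc ‖ψ (T n x)‖ = ‖e n ⟨ψ, hmem⟩‖ := rfl
          _ ≤ M1 * ‖(⟨ψ, hmem⟩ : Zs.topologicalClosure)‖ := ContinuousLinearMap.le_of_opNorm_le _ (hM1 n) _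
          _ ≤ M1 * ‖ψ‖ := le_rfl
      apply aux_bdd_of_weak (𝕜 := 𝕜)
      intro φ
      obtain ⟨ψj, hmemj, hconvj⟩ := hb φ
      obtain ⟨C0, hC0⟩ := banach_steinhaus (g := ψj)
        (fun x' => aux_bdd_of_tendsto (hconvj x'))
      refine ⟨1 + M1 * C0, fun n => ?_⟩
      have hev : ∃ j, ‖ψj j (T n x) - φ (T n x)‖ < 1 := by
        have h3 := Metric.tendsto_atTop.mp (hconvj (T n x)) 1 one_pos
        obtain ⟨N, hN⟩ := h3
        exact ⟨N, by simpa [dist_eq_norm] using hN N le_rfl⟩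
      obtain ⟨j, hj⟩ := hev
      have h4 : ‖φ (T n x)‖ ≤ ‖φ (T n x) - ψj j (T n x)‖ + ‖ψj j (T n x)‖ := by
        calc ‖φ (T n x)‖ = ‖(φ (T n x) - ψj j (T n x)) + ψj j (T n x)‖ := by ring_nf
          _ ≤ _ := norm_add_le _ _
      refine h4.trans (add_le_add ?_ ?_)
      · rw [norm_sub_rev]; exact hj.le
      · exact le_trans (hM1' (ψj j) (hmemj j) n)
          (mul_le_mul_of_nonneg_left (hC0 j) hM10)
    obtain ⟨C, hC⟩ := banach_steinhaus hbx
    refine norm_of ⟨max C 0, le_max_right _ _, fun n => (hC n).trans (le_max_left _ _)⟩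
      ?_ (span_conv hgen)
    intro x
    have hx : x ∈ Y := hc.symm ▸ Set.mem_univ x
    exact hx
  -- (ii) ⇒ (v)
  have himp25 : (∀ x : X, Tendsto (fun n => T n x) atTop (𝓝 x)) →
      ((∀ φ ∈ Z, Tendsto (fun n => φ.comp (T n)) atTop (𝓝 φ)) ∧
        (∀ φ : StrongDual 𝕜 X, ∃ ψ : ℕ → StrongDual 𝕜 X,
          (∀ j, ψ j ∈ Z) ∧ ∀ x : X, Tendsto (fun j => ψ j x) atTop (𝓝 (φ x))) ∧
        Y = Set.univ) := by
    intro h2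
    obtain ⟨C, hC0, hC⟩ := bdd_of_P1 (himp21 h2)
    refine ⟨?_, fun φ => ⟨fun j => φ.comp (T j), fun j => hZmemZ j φ,
        fun x => (φ.continuous.tendsto _).comp (h2 x)⟩,
      Set.eq_univ_iff_forall.mpr fun x =>
        mem_closure_of_tendsto (h2 x) (Eventually.of_forall fun n => hTmem n x)⟩
    intro φ hφ
    refine aux_F (fun n ψ => ψ.comp (T n)) C hC0 (fun n u v => ?_)
      (Zs : Set (StrongDual 𝕜 X)) ?_ φ hφ
    · rw [← ContinuousLinearMap.sub_comp]
      exact ((u - v).opNorm_comp_le (T n)).trans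
        (by rw [mul_comm]; exact mul_le_mul_of_nonneg_right (hC n) (norm_nonneg _))
    · intro χ hχ
      induction hχ using Submodule.span_induction with
      | mem χ hχ =>
        obtain ⟨m, hm⟩ := Set.mem_iUnion.mp hχ
        obtain ⟨ψ, rfl⟩ := hm
        haveI := aux_fd (𝕜 := 𝕜) (T m) (hfr m)
        refine aux_E (Submodule.span 𝕜
            (Set.range fun φ : StrongDual 𝕜 X => φ.comp (T m)))
          (fun n => (ψ.comp (T m)).comp (T n)) (ψ.comp (T m)) ?_
          (Submodule.subset_span ⟨ψ, rfl⟩)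
          (Set.range (NormedSpace.inclusionInDoubleDual 𝕜 X)) ?_ ?_
        · intro n
          obtain ⟨ψ', hψ'⟩ := hinv' m n ψ
          show (ψ.comp (T m)).comp (T n) ∈ _
          rw [hψ']
          exact Submodule.subset_span ⟨ψ', rfl⟩
        · rintro ξ _ h
          ext x
          have := h _ ⟨x, rfl⟩
          simpa using this
        · rintro g ⟨x, rfl⟩
          exact ((ψ.comp (T m)).continuous.tendsto x).comp (h2 x)
      | zero => simpa [ContinuousLinearMap.zero_comp] using tendsto_const_nhds
      | add a b _ _ ha hb => simpa [ContinuousLinearMap.add_comp] using ha.add hb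
      | smul c a _ ha => simpa [ContinuousLinearMap.smul_comp] using ha.const_smul c
  -- (v) ⇒ (iv)
  have himp54 : ((∀ φ ∈ Z, Tendsto (fun n => φ.comp (T n)) atTop (𝓝 φ)) ∧
        (∀ φ : StrongDual 𝕜 X, ∃ ψ : ℕ → StrongDual 𝕜 X,
          (∀ j, ψ j ∈ Z) ∧ ∀ x : X, Tendsto (fun j => ψ j x) atTop (𝓝 (φ x))) ∧
        Y = Set.univ) →
      ((∀ φ ∈ Z, ∀ x : X, Tendsto (fun n => (φ.comp (T n)) x) atTop (𝓝 (φ x))) ∧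
        (∀ φ : StrongDual 𝕜 X, ∃ ψ : ℕ → StrongDual 𝕜 X,
          (∀ j, ψ j ∈ Z) ∧ ∀ x : X, Tendsto (fun j => ψ j x) atTop (𝓝 (φ x))) ∧
        Y = Set.univ) := by
    rintro ⟨ha, hb, hc⟩
    exact ⟨fun φ hφ x =>
      ((NormedSpace.inclusionInDoubleDual 𝕜 X x).continuous.tendsto φ).comp (ha φ hφ),
      hb, hc⟩
  constructor
  · tfae_have 1 → 3 := fun h φ x => h x φ
    tfae_have 3 → 1 := fun h x φ => h φ x
    tfae_have 2 → 1 := himp21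
    tfae_have 1 → 2 := himp12
    tfae_have 2 → 4 := himp24
    tfae_have 4 → 2 := himp42
    tfae_have 2 → 5 := himp25
    tfae_have 5 → 4 := himp54
    tfae_finish
  · intro hsurj
    constructor
    · intro h1
      have h2 := himp12 h1
      have h5 := himp25 h2
      intro φ
      apply h5.1 φ
      by_contra hφ
      have hφ' : φ ∉ Zs.topologicalClosure := by
        intro hmem
        apply hφ
        show φ ∈ closure (Zs : Set (StrongDual 𝕜 X))
        rw [← Submodule.topologicalClosure_coe]
        exact hmem
      obtain ⟨f, hf0, hfx⟩ := aux_G Zs.topologicalClosure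
        (Submodule.isClosed_topologicalClosure Zs) φ hφ'
      obtain ⟨x, hx⟩ := hsurj f
      have hz : ∀ n, φ (T n x) = 0 := by
        intro n
        have h1' : f (φ.comp (T n)) = 0 :=
          hf0 _ (Submodule.le_topologicalClosure Zs (hZmem n φ))
        rw [← hx] at h1'
        simpa using h1'
      have hten := h1 x φ
      rw [show (fun n => φ (T n x)) = fun _ => (0 : 𝕜) from funext hz] at hten
      have hx0 : φ x = 0 := (tendsto_nhds_unique tendsto_const_nhds hten).symm
      apply hfx
      rw [← hx]
      simpa using hx0
    · intro h6 x φ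
      exact ((NormedSpace.inclusionInDoubleDual 𝕜 X x).continuous.tendsto φ).comp (h6 φ)
end

section
/- Let X be a real or complex Banach space and let (T_n)_{n≥0} be a sequence of bounded, finite-rank operators on X such that T_nT_m(X) ⊆ T_m(X) for all m,n ≥ 0. Then the following are equivalent: (i) T_n x → x weakly in X for all x ∈ X; (ii) T_n x → x in norm for all x ∈ X. -/
open Filter Topology

/-- **Lemma 2.3 (weak–norm).** For a sequence of bounded finite-rank operators `T n` on a Banach
space `X` whose ranges satisfy `T n (T m (X)) ⊆ T m (X)`, weak convergence `T n x → x` for all `x`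
is equivalent to norm convergence `T n x → x` for all `x`. -/
theorem weak_iff_norm {𝕜 X : Type*} [RCLike 𝕜] [NormedAddCommGroup X] [NormedSpace 𝕜 X]
    [CompleteSpace X] (T : ℕ → X →L[𝕜] X)
    (hfr : ∀ n, FiniteDimensional 𝕜 (LinearMap.range (T n : X →ₗ[𝕜] X)))
    (hinv : ∀ m n : ℕ, ∀ x : X, T n (T m x) ∈ LinearMap.range (T m : X →ₗ[𝕜] X)) :
    (∀ x : X, ∀ φ : StrongDual 𝕜 X, Tendsto (fun n => φ (T n x)) atTop (𝓝 (φ x))) ↔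
      (∀ x : X, Tendsto (fun n => T n x) atTop (𝓝 x)) := by
  constructor
  · intro h x
    -- Step 1: uniform bound on the operator norms, via Banach–Steinhaus (twice).
    have hb : ∀ y : X, ∃ C, ∀ n, ‖T n y‖ ≤ C := by
      intro y
      obtain ⟨C, hC⟩ := banach_steinhaus
        (g := fun n => NormedSpace.inclusionInDoubleDual 𝕜 X (T n y))
        (fun φ => by
          obtain ⟨C, hC⟩ := (h y φ).norm.bddAbove_range
          exact ⟨C, fun n => hC ⟨n, rfl⟩⟩)
      refine ⟨C, fun n => ?_⟩
      calc ‖T n y‖ = ‖NormedSpace.inclusionInDoubleDualLi 𝕜 (T n y)‖ :=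
            ((NormedSpace.inclusionInDoubleDualLi 𝕜 (E := X)).norm_map _).symm
        _ ≤ C := hC n
    obtain ⟨C, hC⟩ := banach_steinhaus hb
    have hC0 : (0 : ℝ) ≤ C := le_trans (norm_nonneg _) (hC 0)
    -- Step 2: on each finite-dimensional range, weak convergence upgrades to norm convergence.
    have hfd : ∀ m : ℕ, Tendsto (fun n => T n (T m x)) atTop (𝓝 (T m x)) := by
      intro m
      haveI := hfr m
      set Y := LinearMap.range (T m : X →ₗ[𝕜] X) with hY
      let b := Module.finBasis 𝕜 Y
      -- extend the coordinate functionals to the whole space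
      have hext : ∀ i, ∃ g : X →L[𝕜] 𝕜,
          ∀ z : Y, g z = LinearMap.toContinuousLinearMap (b.coord i) z := by
        intro i
        obtain ⟨g, hg, -⟩ :=
          exists_extension_norm_eq (Y : Subspace 𝕜 X)
            (LinearMap.toContinuousLinearMap (b.coord i))
        exact ⟨g, hg⟩
      choose Φ hΦ using hext
      have key : ∀ z : Y, (z : X) = ∑ i, Φ i (z : X) • ((b i : Y) : X) := by
        intro z
        have h1 : ∀ i, Φ i (z : X) = b.repr z i := by
          intro i
          rw [hΦ i z]
          simp [LinearMap.toContinuousLinearMap, Module.Basis.coord_apply]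
        calc (z : X) = ((∑ i, b.repr z i • b i : Y) : X) := by rw [b.sum_repr z]
          _ = ∑ i, b.repr z i • ((b i : Y) : X) := by
              push_cast [Submodule.coe_sum]
              rfl
          _ = ∑ i, Φ i (z : X) • ((b i : Y) : X) := by
              simp only [h1]
      have heq : ∀ n, T n (T m x) = ∑ i, Φ i (T n (T m x)) • ((b i : Y) : X) := by
        intro n
        exact key ⟨T n (T m x), hinv m n x⟩
      have heq0 : T m x = ∑ i, Φ i (T m x) • ((b i : Y) : X) :=
        key ⟨T m x, LinearMap.mem_range_self _ x⟩
      rw [show (fun n => T n (T m x)) = fun n => ∑ i, Φ i (T n (T m x)) • ((b i : Y) : X) from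
          funext heq]
      conv in 𝓝 _ => rw [heq0]
      exact tendsto_finset_sum _ fun i _ => (h (T m x) (Φ i)).smul_const _
    -- Step 3: convergence on the span of the `T m x`.
    set V := Submodule.span 𝕜 (Set.range fun m => T m x) with hVdef
    have hV : ∀ z ∈ V, Tendsto (fun n => T n z) atTop (𝓝 z) := by
      intro z hz
      induction hz using Submodule.span_induction with
      | mem z hz =>
          obtain ⟨m, rfl⟩ := hz
          exact hfd m
      | zero => simp only [map_zero]; exact (tendsto_const_nhds :
          Tendsto (fun _ : ℕ => (0 : X)) atTop (𝓝 0))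
      | add a b _ _ ha hb => simpa using ha.add hb
      | smul c a _ ha => simpa using ha.const_smul c
    -- Step 4: `x` lies in the norm closure of `V`.
    have hx : x ∈ closure (V : Set X) := by
      by_contra hx
      set W := V.topologicalClosure with hW
      have hxW : x ∉ W := by
        rwa [hW, ← SetLike.mem_coe, Submodule.topologicalClosure_coe]
      haveI : IsClosed (W : Set X) := V.isClosed_topologicalClosure
      let π : X →L[𝕜] X ⧸ W :=
        LinearMap.mkContinuous W.mkQ 1 fun z => by
          simpa using Submodule.Quotient.norm_mk_le W z
      have hπ : ∀ z : X, π z = Submodule.Quotient.mk z := fun z => rfl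
      have hπx : π x ≠ 0 := by
        rw [hπ]
        simpa [Submodule.Quotient.mk_eq_zero] using hxW
      obtain ⟨g, -, hgx⟩ := exists_dual_vector 𝕜 (π x) (norm_ne_zero_iff.mpr hπx)
      have hconv := h x (g.comp π)
      have hzero : ∀ n, (g.comp π) (T n x) = 0 := by
        intro n
        have hmem : T n x ∈ W := V.le_topologicalClosure
          (Submodule.subset_span ⟨n, rfl⟩)
        rw [ContinuousLinearMap.comp_apply, hπ, (Submodule.Quotient.mk_eq_zero W).mpr hmem,
          map_zero]
      rw [show (fun n => (g.comp π) (T n x)) = fun _ => (0 : 𝕜) from funext hzero] at hconv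
      have : (g.comp π) x = 0 := tendsto_nhds_unique hconv tendsto_const_nhds
      rw [ContinuousLinearMap.comp_apply, hgx] at this
      exact hπx (norm_eq_zero.mp (by exact_mod_cast this))
    -- Step 5: conclude by an ε/3 argument using the uniform bound.
    rw [Metric.tendsto_atTop]
    intro ε hε
    have hδ : (0 : ℝ) < ε / (2 * (C + 2)) := by positivity
    obtain ⟨z, hzV, hz⟩ : ∃ z ∈ (V : Set X), dist x z < ε / (2 * (C + 2)) := by
      simpa using Metric.mem_closure_iff.mp hx _ hδ
    rw [dist_eq_norm] at hz
    have hTz := hV z hzV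
    rw [Metric.tendsto_atTop] at hTz
    obtain ⟨N, hN⟩ := hTz (ε / 2) (by positivity)
    refine ⟨N, fun n hn => ?_⟩
    have h1 : dist (T n x) (T n z) ≤ C * ‖x - z‖ := by
      rw [dist_eq_norm, ← map_sub]
      exact le_trans ((T n).le_opNorm _)
        (mul_le_mul_of_nonneg_right (hC n) (norm_nonneg _))
    have h2 : dist (T n z) z < ε / 2 := hN n hn
    have h3 : dist z x = ‖x - z‖ := by rw [dist_eq_norm, norm_sub_rev]
    have h4 := dist_triangle4 (T n x) (T n z) z x
    have hb2 : C * ‖x - z‖ + ‖x - z‖ < ε / 2 := by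
      have : (C + 1) * ‖x - z‖ < (C + 2) * (ε / (2 * (C + 2))) := by
        apply mul_lt_mul' (by linarith) hz (norm_nonneg _) (by linarith)
      have heq2 : (C + 2) * (ε / (2 * (C + 2))) = ε / 2 := by
        field_simp
      nlinarith [norm_nonneg (x - z)]
    calc dist (T n x) x ≤ dist (T n x) (T n z) + dist (T n z) z + dist z x := h4
      _ ≤ C * ‖x - z‖ + dist (T n z) z + ‖x - z‖ := by rw [h3]; linarith
      _ < C * ‖x - z‖ + ε / 2 + ‖x - z‖ := by linarith
      _ < ε := by linarith
  · intro h x φ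
    exact (φ.continuous.tendsto x).comp (h x)
end

section
/- On the complex Hilbert space ℓ²(ℤ⁺) with standard orthonormal basis (e_k)_{k≥0}, define T_n := Σ_{j=0}^n (e_j ⊗ e_j) + (e_n ⊗ e_0), i.e. T_n x = Σ_{j=0}^n ⟨x, e_j⟩ e_j + ⟨x, e_0⟩ e_n. Then each T_n is a bounded finite-rank operator, T_n x → x weakly for every x ∈ ℓ²(ℤ⁺), but ‖T_n e₀ − e₀‖₂ = 1 for all n ≥ 1, so T_n e₀ does not converge to e₀ in norm. (This shows the invariance hypothesis T_nT_m(X) ⊆ T_m(X) cannot be dropped.) -/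
open Filter Topology

/-- **Remark (2) after Lemma 2.3.** On `ℓ²(ℤ⁺)` with orthonormal basis `(e k)`, the operators
`T n := Σ_{j=0}^n (e j ⊗ e j) + (e n ⊗ e 0)` are bounded and finite-rank, `T n x → x` weakly for
every `x`, but `‖T n e₀ − e₀‖ = 1` for `n ≥ 1`, so `T n e₀` does not converge in norm. -/
theorem rankOne_counterexample {H : Type*} [NormedAddCommGroup H] [InnerProductSpace ℂ H]
    [CompleteSpace H] (e : HilbertBasis ℕ ℂ H)
    (T : ℕ → H →L[ℂ] H)
    (hT : ∀ n : ℕ, T n =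
      (∑ j ∈ Finset.range (n + 1), (innerSL ℂ (e j)).smulRight (e j)) +
        (innerSL ℂ (e 0)).smulRight (e n)) :
    (∀ n, FiniteDimensional ℂ (LinearMap.range (T n : H →ₗ[ℂ] H))) ∧
    (∀ x y : H, Tendsto (fun n : ℕ => (inner ℂ (T n x) y : ℂ)) atTop (𝓝 (inner ℂ x y))) ∧
    (∀ n : ℕ, 1 ≤ n → ‖T n (e 0) - e 0‖ = 1) ∧
    ¬ Tendsto (fun n : ℕ => T n (e 0)) atTop (𝓝 (e 0)) := by
  have ho := e.orthonormal
  have hoi := orthonormal_iff_ite.mp ho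
  -- apply formula
  have happ : ∀ (n : ℕ) (x : H),
      T n x = (∑ j ∈ Finset.range (n + 1), (inner ℂ (e j) x : ℂ) • e j)
        + (inner ℂ (e 0) x : ℂ) • e n := by
    intro n x
    rw [hT n]
    simp [ContinuousLinearMap.sum_apply]
  -- part 3 helper
  have hval : ∀ n : ℕ, 1 ≤ n → T n (e 0) - e 0 = e n := by
    intro n hn
    rw [happ n (e 0)]
    have hsum : (∑ j ∈ Finset.range (n + 1), (inner ℂ (e j) (e 0) : ℂ) • e j) = e 0 := by
      rw [Finset.sum_eq_single 0]
      · rw [hoi 0 0]; simp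
      · intro j _ hj
        rw [hoi j 0]; simp [hj]
      · intro h
        exact absurd (Finset.mem_range.mpr (Nat.succ_pos n)) h
    rw [hsum, hoi 0 0]
    simp
  have h3 : ∀ n : ℕ, 1 ≤ n → ‖T n (e 0) - e 0‖ = 1 := by
    intro n hn
    rw [hval n hn]
    exact ho.1 n
  refine ⟨?_, ?_, h3, ?_⟩
  · -- finite rank
    intro n
    have hfin : (Set.range fun j : Fin (n + 1) => e j).Finite := Set.finite_range _
    have : FiniteDimensional ℂ
        (Submodule.span ℂ (Set.range fun j : Fin (n + 1) => e j)) :=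
      FiniteDimensional.span_of_finite ℂ hfin
    refine Submodule.finiteDimensional_of_le (S₂ := Submodule.span ℂ
      (Set.range fun j : Fin (n + 1) => e j)) ?_
    rintro y ⟨x, rfl⟩
    show T n x ∈ _
    rw [happ n x]
    refine Submodule.add_mem _ (Submodule.sum_mem _ fun j hj => ?_) ?_
    · exact Submodule.smul_mem _ _ (Submodule.subset_span
        ⟨⟨j, Finset.mem_range.mp hj⟩, rfl⟩)
    · exact Submodule.smul_mem _ _ (Submodule.subset_span
        ⟨⟨n, Nat.lt_succ_self n⟩, rfl⟩)
  · -- weak convergence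
    intro x y
    have key : ∀ n : ℕ, (inner ℂ (T n x) y : ℂ) =
        (∑ j ∈ Finset.range (n + 1), (inner ℂ x (e j) : ℂ) * inner ℂ (e j) y)
          + (inner ℂ x (e 0) : ℂ) * inner ℂ (e n) y := by
      intro n
      rw [happ n x]
      rw [inner_add_left, sum_inner]
      simp [inner_smul_left, inner_conj_symm]
    have h1 : Tendsto (fun n : ℕ =>
        ∑ j ∈ Finset.range (n + 1), (inner ℂ x (e j) : ℂ) * inner ℂ (e j) y)
        atTop (𝓝 (inner ℂ x y)) := by
      have := (e.hasSum_inner_mul_inner x y).tendsto_sum_nat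
      exact this.comp (tendsto_add_atTop_nat 1)
    have h2 : Tendsto (fun n : ℕ => (inner ℂ (e n) y : ℂ)) atTop (𝓝 0) := by
      have hsum : Summable (fun i : ℕ => (inner ℂ y (e i) : ℂ) * inner ℂ (e i) y) :=
        (e.hasSum_inner_mul_inner y y).summable
      have h0 := hsum.tendsto_atTop_zero
      have h0' : Tendsto (fun i : ℕ => ‖(inner ℂ (e i) y : ℂ)‖ ^ 2) atTop (𝓝 0) := by
        have hn0 := tendsto_zero_iff_norm_tendsto_zero.mp h0
        refine hn0.congr fun i => ?_
        rw [norm_mul, norm_inner_symm y (e i), sq]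
      have hnorm : Tendsto (fun i : ℕ => ‖(inner ℂ (e i) y : ℂ)‖) atTop (𝓝 0) := by
        have h' := (Real.continuous_sqrt.tendsto 0).comp h0'
        rw [Real.sqrt_zero] at h'
        exact h'.congr fun i => Real.sqrt_sq (norm_nonneg _)
      exact tendsto_zero_iff_norm_tendsto_zero.mpr hnorm
    have h2' : Tendsto (fun n : ℕ => (inner ℂ x (e 0) : ℂ) * inner ℂ (e n) y) atTop (𝓝 0) := by
      simpa using h2.const_mul (inner ℂ x (e 0) : ℂ)
    have := h1.add h2'
    rw [add_zero] at this
    exact this.congr fun n => (key n).symm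
  · -- no norm convergence
    intro h
    have hd : Tendsto (fun n : ℕ => ‖T n (e 0) - e 0‖) atTop (𝓝 0) := by
      have := (h.sub (tendsto_const_nhds (x := e 0)))
      rw [sub_self] at this
      exact (tendsto_zero_iff_norm_tendsto_zero.mp this)
    have h1 : Tendsto (fun _ : ℕ => (1 : ℝ)) atTop (𝓝 0) := by
      refine Tendsto.congr' ?_ hd
      filter_upwards [eventually_ge_atTop 1] with n hn using (h3 n hn)
    exact zero_ne_one (tendsto_nhds_unique h1 tendsto_const_nhds)
end

section
/- Let X be a reflexive real or complex Banach space and let (T_n)_{n≥0} be a sequence of bounded, finite-rank operators on X such that T_n*T_m*(X*) ⊆ T_m*(X*) for all m,n ≥ 0. Then the following are equivalent: (i) T_n*φ → φ in the weak* topology of X* for all φ ∈ X*; (ii) T_n*φ → φ in norm for all φ ∈ X*. -/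
open Filter Topology

set_option maxHeartbeats 1000000 in
set_option synthInstance.maxHeartbeats 400000 in
/-- On a finite-dimensional subspace of the dual, pointwise (weak-*) convergence implies
norm convergence. -/
private lemma findim_weakstar_to_norm {𝕜 X : Type*} [RCLike 𝕜] [NormedAddCommGroup X]
    [NormedSpace 𝕜 X] (F : Submodule 𝕜 (StrongDual 𝕜 X)) (hF : FiniteDimensional 𝕜 F)
    (a : ℕ → StrongDual 𝕜 X) (b : StrongDual 𝕜 X)
    (ha : ∀ n, a n ∈ F) (hb : b ∈ F)
    (h : ∀ x : X, Tendsto (fun n => a n x) atTop (𝓝 (b x))) :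
    Tendsto a atTop (𝓝 b) := by
  classical
  haveI := hF
  set e : StrongDual 𝕜 X ≃ₗ[𝕜] WeakDual 𝕜 X :=
    StrongDual.toWeakDual (𝕜 := 𝕜) (E := X) with he
  set F' : Submodule 𝕜 (WeakDual 𝕜 X) := F.map (e : StrongDual 𝕜 X →ₗ[𝕜] WeakDual 𝕜 X)
    with hF'
  haveI : FiniteDimensional 𝕜 F' := Module.Finite.map F (e : StrongDual 𝕜 X →ₗ[𝕜] WeakDual 𝕜 X)
  let u : F' →ₗ[𝕜] StrongDual 𝕜 X := e.symm.toLinearMap.comp F'.subtype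
  have hu : Continuous u :=
    LinearMap.continuous_of_finiteDimensional (𝕜 := 𝕜) (E := F') (F' := StrongDual 𝕜 X) u
  let ab : ℕ → F' := fun n => ⟨e (a n), Submodule.mem_map_of_mem (ha n)⟩
  let bb : F' := ⟨e b, Submodule.mem_map_of_mem hb⟩
  have h1 : Tendsto (fun n => (e (a n) : WeakDual 𝕜 X)) atTop (𝓝 (e b)) := by
    rw [tendsto_iff_forall_eval_tendsto_topDualPairing]
    intro y
    exact h y
  have h2 : Tendsto ab atTop (𝓝 bb) := by
    rw [tendsto_subtype_rng]
    exact h1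
  have h3 := (hu.tendsto bb).comp h2
  have h4 : (fun n => u (ab n)) = a := by
    funext n
    rfl
  have h5 : u bb = b := rfl
  rw [← h4, ← h5]
  exact h3

/-- The range of the Banach-space adjoint of a finite-rank operator is contained in a
finite-dimensional subspace of the dual. -/
private lemma comp_mem_findim {𝕜 X : Type*} [RCLike 𝕜] [NormedAddCommGroup X]
    [NormedSpace 𝕜 X] (t : X →L[𝕜] X) (hfr : FiniteDimensional 𝕜 (LinearMap.range (t : X →ₗ[𝕜] X))) :
    ∃ F : Submodule 𝕜 (StrongDual 𝕜 X), FiniteDimensional 𝕜 F ∧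
      ∀ ψ : StrongDual 𝕜 X, ψ.comp t ∈ F := by
  haveI := hfr
  set R : Submodule 𝕜 X := LinearMap.range (t : X →ₗ[𝕜] X) with hR
  let g : X →L[𝕜] R := t.codRestrict R (fun x => LinearMap.mem_range_self (t : X →ₗ[𝕜] X) x)
  let G : StrongDual 𝕜 R →L[𝕜] StrongDual 𝕜 X :=
    (ContinuousLinearMap.compL 𝕜 X R 𝕜).flip g
  refine ⟨LinearMap.range (G : StrongDual 𝕜 R →ₗ[𝕜] StrongDual 𝕜 X), inferInstance, fun ψ => ?_⟩
  refine ⟨ψ.comp R.subtypeL, ?_⟩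
  ext x
  rfl

/-- A point outside a closed subspace of a normed space can be separated from it by a
continuous linear functional vanishing on the subspace. -/
private lemma exists_dual_annihilator {𝕜 E : Type*} [RCLike 𝕜] [NormedAddCommGroup E]
    [NormedSpace 𝕜 E] (S : Submodule 𝕜 E) (hS : IsClosed (S : Set E)) {φ : E} (hφ : φ ∉ S) :
    ∃ Ψ : StrongDual 𝕜 E, Ψ φ ≠ 0 ∧ ∀ ψ ∈ S, Ψ ψ = 0 := by
  haveI : IsClosed (S : Set E) := hS
  set z : E ⧸ S := Submodule.Quotient.mk φ with hz
  have hz0 : z ≠ 0 := by simpa [hz, Submodule.Quotient.mk_eq_zero] using hφ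
  obtain ⟨g, -, hg⟩ := exists_dual_vector 𝕜 z (norm_ne_zero_iff.2 hz0)
  let mkc : E →L[𝕜] E ⧸ S :=
    S.mkQ.mkContinuous 1 (fun ψ => by
      simpa [one_mul] using Submodule.Quotient.norm_mk_le S ψ)
  refine ⟨g.comp mkc, ?_, ?_⟩
  · have hval : g (mkc φ) = (‖z‖ : 𝕜) := hg
    have : (g.comp mkc) φ = (‖z‖ : 𝕜) := hval
    rw [this]
    exact_mod_cast (RCLike.ofReal_ne_zero).2 (norm_ne_zero_iff.2 hz0)
  · intro ψ hψ
    have hmk : mkc ψ = 0 := (Submodule.Quotient.mk_eq_zero S).2 hψ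
    have : (g.comp mkc) ψ = g (mkc ψ) := rfl
    rw [this, hmk, map_zero]

set_option maxHeartbeats 1000000 in
/-- **Corollary 2.4.** If `X` is a reflexive Banach space and `(T n)` are bounded finite-rank
operators whose adjoint ranges satisfy `T n * (T m * (X*)) ⊆ T m * (X*)`, then weak*-convergence
`T n * φ → φ` for all `φ ∈ X*` is equivalent to norm convergence `T n * φ → φ` for all `φ`. -/
theorem weakStar_iff_norm_of_reflexive {𝕜 X : Type*} [RCLike 𝕜] [NormedAddCommGroup X]
    [NormedSpace 𝕜 X] [CompleteSpace X]
    (hrefl : Function.Surjective (NormedSpace.inclusionInDoubleDual 𝕜 X))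
    (T : ℕ → X →L[𝕜] X)
    (hfr : ∀ n, FiniteDimensional 𝕜 (LinearMap.range (T n : X →ₗ[𝕜] X)))
    (hinv' : ∀ m n : ℕ, ∀ φ : StrongDual 𝕜 X, ∃ ψ : StrongDual 𝕜 X,
      (φ.comp (T m)).comp (T n) = ψ.comp (T m)) :
    (∀ φ : StrongDual 𝕜 X, ∀ x : X,
        Tendsto (fun n => (φ.comp (T n)) x) atTop (𝓝 (φ x))) ↔
      (∀ φ : StrongDual 𝕜 X, Tendsto (fun n => φ.comp (T n)) atTop (𝓝 φ)) := by
  constructor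
  · intro h
    -- Step 1: pointwise bound on `‖T n x‖` via Banach–Steinhaus in the double dual.
    have hptbd : ∀ x : X, ∃ C, ∀ n, ‖T n x‖ ≤ C := by
      intro x
      have key : ∀ φ : StrongDual 𝕜 X, ∃ C, ∀ n,
          ‖(NormedSpace.inclusionInDoubleDual 𝕜 X (T n x)) φ‖ ≤ C := by
        intro φ
        have hb : BddAbove (Set.range fun n => ‖φ (T n x)‖) :=
          ((h φ x).norm).isBoundedUnder_le.bddAbove_range
        obtain ⟨C, hCb⟩ := hb
        exact ⟨C, fun n => hCb (Set.mem_range_self n)⟩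
      obtain ⟨C, hC⟩ := banach_steinhaus
        (g := fun n => NormedSpace.inclusionInDoubleDual 𝕜 X (T n x)) key
      refine ⟨C, fun n => ?_⟩
      have hiso : ‖NormedSpace.inclusionInDoubleDual 𝕜 X (T n x)‖ = ‖T n x‖ :=
        (NormedSpace.inclusionInDoubleDualLi 𝕜 (E := X)).norm_map (T n x)
      rw [← hiso]
      exact hC n
    -- Step 2: uniform bound on `‖T n‖`.
    obtain ⟨C0, hC0⟩ := banach_steinhaus hptbd
    set C : ℝ := max C0 0 with hCdef
    have hCnn : 0 ≤ C := le_max_right _ _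
    have hC : ∀ (n : ℕ) (ψ : StrongDual 𝕜 X), ‖ψ.comp (T n)‖ ≤ ‖ψ‖ * C := by
      intro n ψ
      calc ‖ψ.comp (T n)‖ ≤ ‖ψ‖ * ‖T n‖ := ContinuousLinearMap.opNorm_comp_le _ _
        _ ≤ ‖ψ‖ * C := by
            have : ‖T n‖ ≤ C := (hC0 n).trans (le_max_left _ _)
            exact mul_le_mul_of_nonneg_left this (norm_nonneg _)
    -- Step 3: the set of functionals with norm-convergent images is a closed subspace.
    set S : Submodule 𝕜 (StrongDual 𝕜 X) :=
      { carrier := {ψ | Tendsto (fun n => ψ.comp (T n)) atTop (𝓝 ψ)}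
        add_mem' := by
          intro ψ χ hψ hχ
          have := hψ.add hχ
          simpa [ContinuousLinearMap.add_comp] using this
        zero_mem' := by
          simp only [Set.mem_setOf_eq, ContinuousLinearMap.zero_comp]
          exact tendsto_const_nhds
        smul_mem' := by
          intro c ψ hψ
          have := hψ.const_smul c
          simpa [ContinuousLinearMap.smul_comp] using this } with hSdef
    have hSc : IsClosed (S : Set (StrongDual 𝕜 X)) := by
      rw [← isSeqClosed_iff_isClosed]
      intro ψs ψ hmem hlim
      have hgoal : Tendsto (fun n => ψ.comp (T n)) atTop (𝓝 ψ) := by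
        rw [Metric.tendsto_atTop]
        intro ε hε
        have hC1 : (0 : ℝ) < C + 1 := by positivity
        obtain ⟨k, hk⟩ := (Metric.tendsto_atTop.1 hlim) (ε / (3 * (C + 1))) (by positivity)
        have hk' : ‖ψ - ψs k‖ < ε / (3 * (C + 1)) := by
          have := hk k le_rfl
          rw [dist_eq_norm] at this
          rwa [norm_sub_rev]
        have hmemk : Tendsto (fun n => (ψs k).comp (T n)) atTop (𝓝 (ψs k)) := hmem k
        obtain ⟨N, hN⟩ := (Metric.tendsto_atTop.1 hmemk) (ε / 3) (by positivity)
        refine ⟨N, fun n hn => ?_⟩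
        have h1 : ‖(ψ - ψs k).comp (T n)‖ ≤ ‖ψ - ψs k‖ * C := hC n _
        have h2 : ‖(ψs k).comp (T n) - ψs k‖ < ε / 3 := by
          have := hN n hn
          rwa [dist_eq_norm] at this
        have htri : dist (ψ.comp (T n)) ψ ≤
            ‖(ψ - ψs k).comp (T n)‖ + ‖(ψs k).comp (T n) - ψs k‖ + ‖ψ - ψs k‖ := by
          rw [dist_eq_norm]
          calc ‖ψ.comp (T n) - ψ‖
              = ‖(ψ - ψs k).comp (T n) + ((ψs k).comp (T n) - ψs k) + (ψs k - ψ)‖ := by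
                congr 1
                simp only [ContinuousLinearMap.sub_comp]
                abel
            _ ≤ ‖(ψ - ψs k).comp (T n)‖ + ‖(ψs k).comp (T n) - ψs k‖ + ‖ψs k - ψ‖ := by
                refine (norm_add_le _ _).trans ?_
                gcongr
                exact norm_add_le _ _
            _ = ‖(ψ - ψs k).comp (T n)‖ + ‖(ψs k).comp (T n) - ψs k‖ + ‖ψ - ψs k‖ := by
                rw [norm_sub_rev (ψs k) ψ]
        have hb1 : ‖ψ - ψs k‖ * C ≤ ε / (3 * (C + 1)) * (C + 1) :=
          mul_le_mul hk'.le (by linarith) hCnn (by positivity)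
        have hb1' : ε / (3 * (C + 1)) * (C + 1) = ε / 3 := by
          field_simp
        have hb3 : ‖ψ - ψs k‖ ≤ ε / 3 := by
          refine hk'.le.trans ?_
          rw [div_le_div_iff₀ (by positivity) (by positivity)]
          nlinarith
        have e1 : ‖(ψ - ψs k).comp (T n)‖ ≤ ε / 3 := by
          rw [← hb1']
          exact h1.trans hb1
        linarith
      exact hgoal
    -- Step 4: every adjoint image lies in `S` (finite-dimensional argument).
    have hTS : ∀ (m : ℕ) (ψ : StrongDual 𝕜 X), ψ.comp (T m) ∈ S := by
      intro m ψ
      obtain ⟨F, hFfd, hFmem⟩ := comp_mem_findim (T m) (hfr m)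
      have : Tendsto (fun n => (ψ.comp (T m)).comp (T n)) atTop (𝓝 (ψ.comp (T m))) := by
        refine findim_weakstar_to_norm F hFfd _ _ ?_ (hFmem ψ) ?_
        · intro n
          obtain ⟨χ, hχ⟩ := hinv' m n ψ
          rw [hχ]
          exact hFmem χ
        · intro x
          exact h (ψ.comp (T m)) x
      exact this
    -- Step 5: conclude `φ ∈ S` for every `φ` using reflexivity and Hahn–Banach.
    intro φ
    by_contra hφS
    have hφ : φ ∉ S := hφS
    obtain ⟨Ψ, hΨne, hΨ0⟩ := exists_dual_annihilator S hSc hφ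
    obtain ⟨x, hx⟩ := hrefl Ψ
    have hTx : ∀ m : ℕ, T m x = 0 := by
      intro m
      apply NormedSpace.eq_zero_of_forall_dual_eq_zero 𝕜
      intro ψ
      have h1 : Ψ (ψ.comp (T m)) = 0 := hΨ0 _ (hTS m ψ)
      have h2 : Ψ (ψ.comp (T m)) = ψ (T m x) := by
        rw [← hx]
        rfl
      rw [← h2, h1]
    have hφx : φ x = 0 := by
      have h0 : Tendsto (fun n => (φ.comp (T n)) x) atTop (𝓝 (φ x)) := h φ x
      have hzero : (fun n => (φ.comp (T n)) x) = fun _ => (0 : 𝕜) := by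
        funext n
        simp [hTx n]
      rw [hzero] at h0
      exact (tendsto_nhds_unique h0 tendsto_const_nhds)
    have hΨφ : Ψ φ = φ x := by
      rw [← hx]
      rfl
    rw [hΨφ, hφx] at hΨne
    exact hΨne rfl
  · intro h φ x
    have hc : Continuous fun ψ : StrongDual 𝕜 X => ψ x :=
      (ContinuousLinearMap.apply 𝕜 𝕜 x).continuous
    exact (hc.tendsto φ).comp (h φ)
end

section
/- Let X be a real or complex Banach space and let (T_n)_{n≥0} be a sequence of bounded, finite-rank operators on X such that T_nT_m(X) ⊆ T_m(X) and T_n*T_m*(X*) ⊆ T_m*(X*) for all m,n ≥ 0. Let Y be the norm-closure in X of the linear span of ⋃_{m≥0} T_m(X) and let Z be the norm-closure in X* of the linear span of ⋃_{m≥0} T_m*(X*). Then the following are equivalent: (i) T_n*φ → φ weak* for all φ ∈ X*; (ii) T_n*φ → φ weak* for all φ ∈ Z, Z is weak*-sequentially dense in X*, and Y = X; (iii) T_n*φ → φ in norm for all φ ∈ Z, Z is weak*-sequentially dense in X*, and Y = X. -/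
open Filter Topology

section Aux
variable {𝕜 X : Type*} [RCLike 𝕜] [NormedAddCommGroup X] [NormedSpace 𝕜 X]

lemma lemA (p : Submodule 𝕜 X) [FiniteDimensional 𝕜 p]
    (S : Set (X →L[𝕜] 𝕜))
    (hsep : ∀ v : X, v ∈ p → (∀ ψ ∈ S, ψ v = 0) → v = 0)
    (u : ℕ → X) (hu : ∀ n, u n ∈ p) {y : X} (hy : y ∈ p)
    (hconv : ∀ ψ ∈ S, Tendsto (fun n => ψ (u n)) atTop (𝓝 (ψ y))) :
    Tendsto u atTop (𝓝 y) := by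
  classical
  let r : (X →L[𝕜] 𝕜) →ₗ[𝕜] Module.Dual 𝕜 p :=
    (LinearMap.domRestrict' p).comp (ContinuousLinearMap.coeLM 𝕜)
  let G : Submodule 𝕜 (Module.Dual 𝕜 p) := Submodule.map r (Submodule.span 𝕜 S)
  have hconv' : ∀ ψ ∈ Submodule.span 𝕜 S,
      Tendsto (fun n => ψ (u n)) atTop (𝓝 (ψ y)) := by
    intro ψ hψ
    induction hψ using Submodule.span_induction with
    | mem ψ hψ => exact hconv ψ hψ
    | zero => simp
    | add f g hf hg ihf ihg => simpa using ihf.add ihg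
    | smul c f hf ih => simpa using ih.const_mul c
  haveI : FiniteDimensional 𝕜 G := FiniteDimensional.finiteDimensional_submodule G
  have hG : G = ⊤ := by
    have hco : G.dualCoannihilator = ⊥ := by
      rw [eq_bot_iff]
      intro v hv
      rw [Submodule.mem_dualCoannihilator] at hv
      have : (v : X) = 0 := by
        refine hsep v v.2 fun ψ hψ => ?_
        exact hv (r ψ) ⟨ψ, Submodule.subset_span hψ, rfl⟩
      exact Submodule.coe_eq_zero.mp this
    have := Subspace.dualCoannihilator_dualAnnihilator_eq (V := p) (W := G)
    rw [hco, Submodule.dualAnnihilator_bot] at this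
    exact this.symm
  let b := Module.finBasis 𝕜 p
  have hcoord : ∀ i, ∃ ψ ∈ Submodule.span 𝕜 S, r ψ = b.coord i := by
    intro i
    have : b.coord i ∈ G := hG ▸ Submodule.mem_top
    obtain ⟨ψ, hψ, hr⟩ := this
    exact ⟨ψ, hψ, hr⟩
  choose ψ hψmem hψeq using hcoord
  have hrepr : ∀ v : p, (v : X) = ∑ i, (ψ i (v : X)) • ((b i : p) : X) := by
    intro v
    have h2 : ∀ i, ψ i (v : X) = b.repr v i := by
      intro i
      have := congrArg (fun f => f v) (hψeq i)
      simpa [r, Module.Basis.coord_apply] using this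
    calc (v : X) = ((∑ i, b.repr v i • b i : p) : X) := by rw [b.sum_repr v]
      _ = ∑ i, (ψ i (v : X)) • ((b i : p) : X) := by
          push_cast
          exact Finset.sum_congr rfl fun i _ => by rw [h2]
  have key : ∀ n, u n = ∑ i, (ψ i (u n)) • ((b i : p) : X) := fun n => hrepr ⟨u n, hu n⟩
  have keyy : y = ∑ i, (ψ i y) • ((b i : p) : X) := hrepr ⟨y, hy⟩
  rw [keyy, show u = fun n => ∑ i, (ψ i (u n)) • ((b i : p) : X) from funext key]
  exact tendsto_finset_sum _ fun i _ => (hconv' (ψ i) (hψmem i)).smul_const _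

lemma fd_precomp (S : X →L[𝕜] X) (h : FiniteDimensional 𝕜 (LinearMap.range (S : X →ₗ[𝕜] X))) :
    FiniteDimensional 𝕜 (Submodule.span 𝕜
      (Set.range fun φ : StrongDual 𝕜 X => φ.comp S)) := by
  haveI := h
  set V := LinearMap.range (S : X →ₗ[𝕜] X) with hV
  let Sc : X →L[𝕜] V := S.codRestrict V fun x => LinearMap.mem_range_self _ x
  let Φ : Module.Dual 𝕜 V →ₗ[𝕜] StrongDual 𝕜 X :=
    (((ContinuousLinearMap.compL 𝕜 X V 𝕜).flip Sc).toLinearMap).comp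
      (LinearMap.toContinuousLinearMap.toLinearMap)
  have hle : Submodule.span 𝕜 (Set.range fun φ : StrongDual 𝕜 X => φ.comp S)
      ≤ LinearMap.range Φ := by
    rw [Submodule.span_le]
    rintro _ ⟨φ, rfl⟩
    refine ⟨(φ : X →ₗ[𝕜] 𝕜).domRestrict V, ?_⟩
    ext x
    simp [Φ, Sc]
  exact Submodule.finiteDimensional_of_le hle
end Aux

set_option maxHeartbeats 1000000 in
/-- **Lemma 2.6.** Let `X` be a Banach space and `(T n)` a sequence of bounded finite-rank
operators with `T n (T m (X)) ⊆ T m (X)` and `T n * (T m * (X*)) ⊆ T m * (X*)` for all `m, n`.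
With `Y` the norm-closure of the span of the ranges of the `T m` and `Z` the norm-closure of the
span of the ranges of the adjoints, the following are equivalent:
(i) `T n * φ → φ` weak* for all `φ ∈ X*`;
(ii) `T n * φ → φ` weak* for all `φ ∈ Z`, `Z` is weak*-sequentially dense in `X*`, and `Y = X`;
(iii) `T n * φ → φ` in norm for all `φ ∈ Z`, `Z` is weak*-sequentially dense in `X*`, and
`Y = X`. -/
theorem weakStar_norm {𝕜 X : Type*} [RCLike 𝕜] [NormedAddCommGroup X] [NormedSpace 𝕜 X]
    [CompleteSpace X] (T : ℕ → X →L[𝕜] X)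
    (hfr : ∀ n, FiniteDimensional 𝕜 (LinearMap.range (T n : X →ₗ[𝕜] X)))
    (hinv : ∀ m n : ℕ, ∀ x : X, T n (T m x) ∈ LinearMap.range (T m : X →ₗ[𝕜] X))
    (hinv' : ∀ m n : ℕ, ∀ φ : StrongDual 𝕜 X, ∃ ψ : StrongDual 𝕜 X,
      (φ.comp (T m)).comp (T n) = ψ.comp (T m)) :
    let Y : Set X :=
      closure (Submodule.span 𝕜 (⋃ m, (LinearMap.range (T m : X →ₗ[𝕜] X) : Set X)) : Set X)
    let Z : Set (StrongDual 𝕜 X) :=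
      closure (Submodule.span 𝕜
        (⋃ m, Set.range fun φ : StrongDual 𝕜 X => φ.comp (T m)) :
          Set (StrongDual 𝕜 X))
    List.TFAE
      [(∀ φ : StrongDual 𝕜 X, ∀ x : X,
          Tendsto (fun n => (φ.comp (T n)) x) atTop (𝓝 (φ x))),
        ((∀ φ ∈ Z, ∀ x : X, Tendsto (fun n => (φ.comp (T n)) x) atTop (𝓝 (φ x))) ∧
          (∀ φ : StrongDual 𝕜 X, ∃ ψ : ℕ → StrongDual 𝕜 X,
            (∀ j, ψ j ∈ Z) ∧ ∀ x : X, Tendsto (fun j => ψ j x) atTop (𝓝 (φ x))) ∧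
          Y = Set.univ),
        ((∀ φ ∈ Z, Tendsto (fun n => φ.comp (T n)) atTop (𝓝 φ)) ∧
          (∀ φ : StrongDual 𝕜 X, ∃ ψ : ℕ → StrongDual 𝕜 X,
            (∀ j, ψ j ∈ Z) ∧ ∀ x : X, Tendsto (fun j => ψ j x) atTop (𝓝 (φ x))) ∧
          Y = Set.univ)] := by
  intro Y Z
  classical
  set SX : Submodule 𝕜 X :=
    Submodule.span 𝕜 (⋃ m, (LinearMap.range (T m : X →ₗ[𝕜] X) : Set X)) with hSXdef
  set W : Submodule 𝕜 (StrongDual 𝕜 X) :=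
    Submodule.span 𝕜
      (⋃ m, Set.range fun φ : StrongDual 𝕜 X => φ.comp (T m)) with hWdef
  have hY : Y = closure (SX : Set X) := rfl
  have hZ : Z = closure (W : Set (StrongDual 𝕜 X)) := rfl
  set Zc : Submodule 𝕜 (StrongDual 𝕜 X) := W.topologicalClosure with hZcdef
  have hZZc : Z = (Zc : Set (StrongDual 𝕜 X)) :=
    (W.topologicalClosure_coe).symm
  haveI : CompleteSpace Zc := (Submodule.isClosed_topologicalClosure W).completeSpace_coe
  -- uniform bound via Banach–Steinhaus
  have bound : (∀ φ ∈ Z, ∀ x : X,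
        Tendsto (fun n => (φ.comp (T n)) x) atTop (𝓝 (φ x))) →
      ∃ M : ℝ, 0 ≤ M ∧ ∀ n, ∀ ψ ∈ Z, ‖ψ.comp (T n)‖ ≤ M * ‖ψ‖ := by
    intro h1
    let Q : ℕ → Zc →L[𝕜] StrongDual 𝕜 X := fun n =>
      ((ContinuousLinearMap.compL 𝕜 X X 𝕜).flip (T n)).comp Zc.subtypeL
    have hQ : ∀ n (ψ : Zc), Q n ψ = (ψ : StrongDual 𝕜 X).comp (T n) :=
      fun _ _ => rfl
    have step1 : ∀ ψ : Zc, ∃ C, ∀ n, ‖Q n ψ‖ ≤ C := by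
      intro ψ
      have hψZ : (ψ : StrongDual 𝕜 X) ∈ Z := by rw [hZZc]; exact ψ.2
      have hpb : ∀ x : X, ∃ C, ∀ n,
          ‖((ψ : StrongDual 𝕜 X).comp (T n)) x‖ ≤ C := by
        intro x
        obtain ⟨c, hc⟩ := (h1 _ hψZ x).norm.bddAbove_range
        exact ⟨c, fun n => hc ⟨n, rfl⟩⟩
      obtain ⟨C, hC⟩ := banach_steinhaus
        (g := fun n => ((ψ : StrongDual 𝕜 X).comp (T n))) hpb
      exact ⟨C, fun n => by rw [hQ]; exact hC n⟩
    obtain ⟨M, hM⟩ := @banach_steinhaus Zc (StrongDual 𝕜 X) 𝕜 𝕜 _ _ _ _ _ _ (RingHom.id 𝕜) _ ℕ _ Q (fun ψ => by exact step1 ψ)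
    refine ⟨max M 0, le_max_right _ _, fun n ψ hψ => ?_⟩
    have hψ' : ψ ∈ Zc := by rw [← SetLike.mem_coe, ← hZZc]; exact hψ
    have hle := @ContinuousLinearMap.le_opNorm 𝕜 𝕜 Zc (StrongDual 𝕜 X) _ _ _ _ _ _ (RingHom.id 𝕜) _ (Q n) ⟨ψ, hψ'⟩
    calc ‖ψ.comp (T n)‖ = ‖Q n ⟨ψ, hψ'⟩‖ := rfl
      _ ≤ max M 0 * ‖ψ‖ := hle.trans
          (mul_le_mul ((hM n).trans (le_max_left _ _)) le_rfl (norm_nonneg (⟨ψ, hψ'⟩ : Zc))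
            (le_max_right _ _))
  -- separation from weak* sequential density
  have sep : (∀ φ : StrongDual 𝕜 X, ∃ ψ : ℕ → StrongDual 𝕜 X,
        (∀ j, ψ j ∈ Z) ∧ ∀ x : X, Tendsto (fun j => ψ j x) atTop (𝓝 (φ x))) →
      ∀ v : X, (∀ ψ ∈ Z, ψ v = 0) → v = 0 := by
    intro h2 v hv
    by_contra hv0
    obtain ⟨g, hg1, hgv⟩ := exists_dual_vector 𝕜 v (norm_ne_zero_iff.mpr hv0)
    obtain ⟨ψs, hψs, hpt⟩ := h2 g
    have hlim : Tendsto (fun j => ψs j v) atTop (𝓝 (g v)) := hpt v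
    have h0 : (fun j => ψs j v) = fun _ => (0 : 𝕜) := funext fun j => hv _ (hψs j)
    rw [h0] at hlim
    have : g v = 0 := tendsto_nhds_unique hlim tendsto_const_nhds
    rw [hgv] at this
    exact hv0 (norm_eq_zero.mp (by exact_mod_cast this))
  -- fact 1 : strong convergence on the span of the ranges
  have fact1 : (∀ φ ∈ Z, ∀ x : X,
        Tendsto (fun n => (φ.comp (T n)) x) atTop (𝓝 (φ x))) →
      (∀ φ : StrongDual 𝕜 X, ∃ ψ : ℕ → StrongDual 𝕜 X,
        (∀ j, ψ j ∈ Z) ∧ ∀ x : X, Tendsto (fun j => ψ j x) atTop (𝓝 (φ x))) →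
      ∀ y ∈ SX, Tendsto (fun n => T n y) atTop (𝓝 y) := by
    intro h1 h2 y hy
    induction hy using Submodule.span_induction with
    | mem y hy =>
        obtain ⟨m, hm⟩ := Set.mem_iUnion.mp hy
        haveI := hfr m
        obtain ⟨w, rfl⟩ := hm
        refine lemA (LinearMap.range (T m : X →ₗ[𝕜] X)) Z (fun v _ hv => sep h2 v hv)
          (fun n => T n (T m w)) (fun n => hinv m n w)
          (LinearMap.mem_range_self _ w) fun ψ hψ => h1 ψ hψ (T m w)
    | zero => simpa using tendsto_const_nhds
    | add a b ha hb iha ihb => simpa [map_add] using iha.add ihb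
    | smul c a ha ih => simpa [map_smul] using ih.const_smul c
  -- fact 2 : norm convergence of the adjoints on W
  have fact2 : (∀ φ ∈ Z, ∀ x : X,
        Tendsto (fun n => (φ.comp (T n)) x) atTop (𝓝 (φ x))) →
      ∀ ψ0 ∈ W, Tendsto (fun n => ψ0.comp (T n)) atTop (𝓝 ψ0) := by
    intro h1 ψ0 hψ0
    have hψ0Z : ψ0 ∈ Z := hZ ▸ subset_closure hψ0
    set F : ℕ → Submodule 𝕜 (StrongDual 𝕜 X) := fun m =>
      Submodule.span 𝕜
        (Set.range fun φ : StrongDual 𝕜 X => φ.comp (T m)) with hFdef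
    haveI : ∀ m, FiniteDimensional 𝕜 (F m) := fun m => fd_precomp (T m) (hfr m)
    have hWsup : W = ⨆ m, F m := Submodule.span_iUnion _
    obtain ⟨s, hs⟩ := Submodule.mem_iSup_iff_exists_finset.mp (hWsup ▸ hψ0)
    set G : Submodule 𝕜 (StrongDual 𝕜 X) := s.sup F with hGdef
    have hsG : ψ0 ∈ G := by rwa [hGdef, Finset.sup_eq_iSup]
    haveI : FiniteDimensional 𝕜 G := Submodule.finiteDimensional_finset_sup s F
    have hFinv : ∀ m n, ∀ χ ∈ F m, χ.comp (T n) ∈ F m := by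
      intro m n χ hχ
      induction hχ using Submodule.span_induction with
      | mem χ hχ =>
          obtain ⟨φ, rfl⟩ := hχ
          obtain ⟨ρ, hρ⟩ := hinv' m n φ
          rw [hρ]
          exact Submodule.subset_span ⟨ρ, rfl⟩
      | zero => rw [ContinuousLinearMap.zero_comp]; exact zero_mem _
      | add f g _ _ ihf ihg => rw [ContinuousLinearMap.add_comp]; exact add_mem ihf ihg
      | smul c f _ ih => rw [ContinuousLinearMap.smul_comp]; exact Submodule.smul_mem _ c ih
    have hGinv : ∀ n, ∀ χ ∈ G, χ.comp (T n) ∈ G := by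
      intro n χ hχ
      rw [hGdef, Finset.sup_eq_iSup, iSup_subtype'] at hχ ⊢
      refine Submodule.iSup_induction _
        (motive := fun χ => χ.comp (T n) ∈ ⨆ i : {m // m ∈ s}, F i) hχ ?_ ?_ ?_
      · intro i χ hχi
        exact le_iSup (fun i : {m // m ∈ s} => F i) i (hFinv i n χ hχi)
      · show ((0 : StrongDual 𝕜 X).comp (T n)) ∈ _
        rw [ContinuousLinearMap.zero_comp]; exact zero_mem _
      · intro a b iha ihb
        show ((a + b).comp (T n)) ∈ _
        rw [ContinuousLinearMap.add_comp]; exact add_mem iha ihb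
    refine lemA G (Set.range (NormedSpace.inclusionInDoubleDual 𝕜 X)) ?_
      (fun n => ψ0.comp (T n)) (fun n => hGinv n ψ0 hsG) hsG ?_
    · intro v _ hv
      ext x
      have := hv _ ⟨x, rfl⟩
      simpa [NormedSpace.dual_def] using this
    · rintro _ ⟨x, rfl⟩
      simpa [NormedSpace.dual_def] using h1 ψ0 hψ0Z x
  tfae_have 1 → 2 := by
    intro h
    refine ⟨fun ψ _ x => h ψ x, fun φ => ⟨fun j => φ.comp (T j), fun j => ?_, fun x => h φ x⟩, ?_⟩
    · exact hZ ▸ subset_closure (Submodule.subset_span (Set.mem_iUnion.mpr ⟨j, ⟨φ, rfl⟩⟩))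
    · rw [hY, Set.eq_univ_iff_forall]
      intro x
      by_contra hx
      set P : Submodule 𝕜 X := SX.topologicalClosure with hPdef
      haveI : IsClosed (P : Set X) := Submodule.isClosed_topologicalClosure _
      have hxP : x ∉ P := by rwa [← SetLike.mem_coe, Submodule.topologicalClosure_coe]
      have hx' : P.mkQ x ≠ 0 := by
        rw [Submodule.mkQ_apply, Ne, Submodule.Quotient.mk_eq_zero]
        exact hxP
      let q : X →L[𝕜] (X ⧸ P) := ⟨P.mkQ, continuous_quot_mk⟩
      obtain ⟨g, hg1, hgx⟩ := exists_dual_vector 𝕜 (P.mkQ x) (norm_ne_zero_iff.mpr hx')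
      have hφ0 : ∀ n, (g.comp q) (T n x) = 0 := by
        intro n
        have hTn : T n x ∈ P := by
          apply SX.le_topologicalClosure
          exact Submodule.subset_span (Set.mem_iUnion.mpr ⟨n, SetLike.mem_coe.mpr
            (LinearMap.mem_range_self _ x)⟩)
        have : q (T n x) = 0 := (Submodule.Quotient.mk_eq_zero _).mpr hTn
        simp [this]
      have hlim := h (g.comp q) x
      have h0 : (fun n => ((g.comp q).comp (T n)) x) = fun _ => (0 : 𝕜) :=
        funext fun n => hφ0 n
      rw [h0] at hlim
      have : (g.comp q) x = 0 := tendsto_nhds_unique hlim tendsto_const_nhds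
      have : g (P.mkQ x) = 0 := this
      rw [hgx] at this
      exact hx' (norm_eq_zero.mp (by exact_mod_cast this))
  tfae_have 2 → 3 := by
    rintro ⟨h1, h2, h3⟩
    refine ⟨?_, h2, h3⟩
    obtain ⟨M, hM0, hM⟩ := bound h1
    intro ψ hψ
    rw [Metric.tendsto_atTop]
    intro ε hε
    have hD : (0:ℝ) < M + 2 := by linarith
    set δ := ε / (M + 2) with hδdef
    have hδ : 0 < δ := div_pos hε hD
    have hψcl : ψ ∈ closure (W : Set (StrongDual 𝕜 X)) := by rw [← hZ]; exact hψ
    obtain ⟨ψ', hψ'W, hdist⟩ := Metric.mem_closure_iff.mp hψcl δ hδ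
    have hconv := fact2 h1 ψ' hψ'W
    rw [Metric.tendsto_atTop] at hconv
    obtain ⟨N, hN⟩ := hconv δ hδ
    refine ⟨N, fun n hn => ?_⟩
    have hsub : ψ - ψ' ∈ Z := by
      rw [hZZc]
      refine SetLike.mem_coe.mpr (Submodule.sub_mem Zc ?_ (W.le_topologicalClosure hψ'W))
      rw [← SetLike.mem_coe, ← hZZc]; exact hψ
    have e1 : ‖(ψ - ψ').comp (T n)‖ ≤ M * ‖ψ - ψ'‖ := hM n _ hsub
    have e2 : ‖ψ'.comp (T n) - ψ'‖ < δ := by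
      have := hN n hn; rwa [dist_eq_norm] at this
    have e3 : ‖ψ - ψ'‖ < δ := by
      have := hdist; rwa [dist_eq_norm] at this
    have hsplit : ψ.comp (T n) - ψ =
        (ψ - ψ').comp (T n) + (ψ'.comp (T n) - ψ') + (ψ' - ψ) := by
      rw [ContinuousLinearMap.sub_comp]; abel
    rw [dist_eq_norm, hsplit]
    have hne : M * ‖ψ - ψ'‖ ≤ M * δ := mul_le_mul_of_nonneg_left e3.le hM0
    have hnorm : ‖(ψ - ψ').comp (T n) + (ψ'.comp (T n) - ψ') + (ψ' - ψ)‖ ≤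
        ‖(ψ - ψ').comp (T n)‖ + ‖ψ'.comp (T n) - ψ'‖ + ‖ψ' - ψ‖ := norm_add₃_le
    have h4 : ‖ψ' - ψ‖ < δ := by rwa [norm_sub_rev]
    have hDδ : (M + 2) * δ = ε := by
      rw [hδdef]; field_simp
    linarith
  tfae_have 3 → 2 := by
    rintro ⟨h1, h2, h3⟩
    refine ⟨fun ψ hψ x => ?_, h2, h3⟩
    have := ((ContinuousLinearMap.apply 𝕜 𝕜 x).continuous.tendsto ψ).comp (h1 ψ hψ)
    exact this
  tfae_have 2 → 1 := by
    rintro ⟨h1, h2, h3⟩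
    intro φ x
    obtain ⟨M, hM0, hM⟩ := bound h1
    obtain ⟨ψs, hψsZ, hpt⟩ := h2 φ
    have hCb : ∀ x' : X, ∃ C, ∀ j, ‖ψs j x'‖ ≤ C := by
      intro x'
      obtain ⟨c, hc⟩ := ((hpt x').norm).bddAbove_range
      exact ⟨c, fun j => hc ⟨j, rfl⟩⟩
    obtain ⟨C0, hC0⟩ := banach_steinhaus hCb
    set C := max C0 0 with hCdef
    have hC : ∀ j, ‖ψs j‖ ≤ C := fun j => (hC0 j).trans (le_max_left _ _)
    have hCnn : (0:ℝ) ≤ C := le_max_right _ _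
    have B1 : ∀ n (v : X), ‖φ (T n v)‖ ≤ M * C * ‖v‖ := by
      intro n v
      refine le_of_tendsto ((hpt (T n v)).norm) (Eventually.of_forall fun j => ?_)
      calc ‖ψs j (T n v)‖ ≤ ‖(ψs j).comp (T n)‖ * ‖v‖ := ((ψs j).comp (T n)).le_opNorm v
        _ ≤ (M * ‖ψs j‖) * ‖v‖ :=
            mul_le_mul_of_nonneg_right (hM n _ (hψsZ j)) (norm_nonneg v)
        _ ≤ M * C * ‖v‖ :=
            mul_le_mul_of_nonneg_right (mul_le_mul_of_nonneg_left (hC j) hM0)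
              (norm_nonneg v)
    rw [Metric.tendsto_atTop]
    intro ε hε
    have hMC : (0:ℝ) ≤ M * C := mul_nonneg hM0 hCnn
    have hD : (0:ℝ) < M * C + 2 * ‖φ‖ + 1 := by
      have := norm_nonneg φ; linarith
    set δ := ε / (M * C + 2 * ‖φ‖ + 1) with hδdef
    have hδ : 0 < δ := div_pos hε hD
    have h3' : closure (SX : Set X) = Set.univ := hY ▸ h3
    have hxcl : x ∈ closure (SX : Set X) := h3' ▸ Set.mem_univ x
    obtain ⟨y, hySX, hxy⟩ := Metric.mem_closure_iff.mp hxcl δ hδ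
    have hfy := fact1 h1 h2 y hySX
    rw [Metric.tendsto_atTop] at hfy
    obtain ⟨N, hN⟩ := hfy δ hδ
    refine ⟨N, fun n hn => ?_⟩
    have hsplit : φ (T n x) - φ x = φ (T n (x - y)) + φ (T n y - y) + φ (y - x) := by
      have hv : T n x - x = T n (x - y) + (T n y - y) + (y - x) := by
        rw [map_sub]; abel
      calc φ (T n x) - φ x = φ (T n x - x) := (map_sub φ _ _).symm
        _ = φ (T n (x - y)) + φ (T n y - y) + φ (y - x) := by
            rw [hv, map_add, map_add]
    rw [dist_eq_norm]
    have goal1 : ‖(φ.comp (T n)) x - φ x‖ ≤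
        ‖φ (T n (x - y))‖ + ‖φ (T n y - y)‖ + ‖φ (y - x)‖ := by
      have : (φ.comp (T n)) x - φ x = φ (T n (x - y)) + φ (T n y - y) + φ (y - x) := hsplit
      rw [this]; exact norm_add₃_le
    have b1 : ‖φ (T n (x - y))‖ ≤ M * C * ‖x - y‖ := B1 n (x - y)
    have b2 : ‖φ (T n y - y)‖ ≤ ‖φ‖ * ‖T n y - y‖ := φ.le_opNorm _
    have b3 : ‖φ (y - x)‖ ≤ ‖φ‖ * ‖y - x‖ := φ.le_opNorm _
    have d1 : ‖x - y‖ < δ := by rw [← dist_eq_norm]; exact hxy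
    have d2 : ‖T n y - y‖ < δ := by rw [← dist_eq_norm]; exact hN n hn
    have d3 : ‖y - x‖ < δ := by rw [norm_sub_rev, ← dist_eq_norm]; exact hxy
    have hDδ : (M * C + 2 * ‖φ‖ + 1) * δ = ε := by
      rw [hδdef]; field_simp
    have c1 : M * C * ‖x - y‖ ≤ M * C * δ := mul_le_mul_of_nonneg_left d1.le hMC
    have c2 : ‖φ‖ * ‖T n y - y‖ ≤ ‖φ‖ * δ :=
      mul_le_mul_of_nonneg_left d2.le (norm_nonneg φ)
    have c3 : ‖φ‖ * ‖y - x‖ ≤ ‖φ‖ * δ :=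
      mul_le_mul_of_nonneg_left d3.le (norm_nonneg φ)
    linarith
  tfae_finish
end

section
/- Let X be a real or complex Banach space and let Z be a linear subspace of X* that is weak*-sequentially dense in X*. Then the closure of the unit ball of Z in the weak* topology of X* contains rB_{X*} for some r > 0, where B_{X*} is the closed unit ball of X*. -/
set_option synthInstance.maxHeartbeats 1000000
set_option maxHeartbeats 1000000

open Filter Topology Pointwise

open NormedSpace in
private lemma half_diff_mem_closure {𝕜 X : Type*} [RCLike 𝕜] [NormedAddCommGroup X]
    [NormedSpace 𝕜 X] (Z : Submodule 𝕜 (StrongDual 𝕜 X))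
    {a b : WeakDual 𝕜 X}
    (ha : a ∈ closure (StrongDual.toWeakDual '' {ψ : StrongDual 𝕜 X | ψ ∈ Z ∧ ‖ψ‖ ≤ 1}))
    (hb : b ∈ closure (StrongDual.toWeakDual '' {ψ : StrongDual 𝕜 X | ψ ∈ Z ∧ ‖ψ‖ ≤ 1})) :
    (2⁻¹ : 𝕜) • (a - b) ∈
      closure (StrongDual.toWeakDual '' {ψ : StrongDual 𝕜 X | ψ ∈ Z ∧ ‖ψ‖ ≤ 1}) := by
  set S := StrongDual.toWeakDual '' {ψ : StrongDual 𝕜 X | ψ ∈ Z ∧ ‖ψ‖ ≤ 1} with hS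
  have hcont : Continuous fun p : WeakDual 𝕜 X × WeakDual 𝕜 X => (2⁻¹ : 𝕜) • (p.1 - p.2) := by
    apply WeakDual.continuous_of_continuous_eval
    intro y
    have h1 : Continuous fun p : WeakDual 𝕜 X × WeakDual 𝕜 X => p.1 y :=
      (WeakDual.eval_continuous y).comp continuous_fst
    have h2 : Continuous fun p : WeakDual 𝕜 X × WeakDual 𝕜 X => p.2 y :=
      (WeakDual.eval_continuous y).comp continuous_snd
    exact ((h1.sub h2).const_smul (2⁻¹ : 𝕜))
  refine map_mem_closure₂ (f := fun a b : WeakDual 𝕜 X => (2⁻¹ : 𝕜) • (a - b)) hcont ha hb ?_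
  rintro _ ⟨ψ₁, ⟨hψ₁Z, hψ₁n⟩, rfl⟩ _ ⟨ψ₂, ⟨hψ₂Z, hψ₂n⟩, rfl⟩
  refine ⟨(2⁻¹ : 𝕜) • (ψ₁ - ψ₂), ⟨Z.smul_mem _ (Z.sub_mem hψ₁Z hψ₂Z), ?_⟩, by
    simp [map_smul, map_sub]⟩
  calc ‖(2⁻¹ : 𝕜) • (ψ₁ - ψ₂)‖ = ‖(2⁻¹ : 𝕜)‖ * ‖ψ₁ - ψ₂‖ := norm_smul _ _
    _ ≤ 2⁻¹ * (‖ψ₁‖ + ‖ψ₂‖) := by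
        rw [show ‖(2⁻¹ : 𝕜)‖ = 2⁻¹ by
          rw [norm_inv, RCLike.norm_ofNat]]
        exact mul_le_mul_of_nonneg_left (norm_sub_le _ _) (by norm_num)
    _ ≤ 2⁻¹ * (1 + 1) := by nlinarith
    _ = 1 := by norm_num

/-- **Lemma 2.7.** If `Z` is a subspace of `X*` that is weak*-sequentially dense in `X*`, then the
weak*-closure of the unit ball of `Z` contains a positive multiple of the unit ball of `X*`. -/
theorem ball_subset_weakStar_closure {𝕜 X : Type*} [RCLike 𝕜] [NormedAddCommGroup X]
    [NormedSpace 𝕜 X] [CompleteSpace X] (Z : Submodule 𝕜 (StrongDual 𝕜 X))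
    (hdense : ∀ φ : StrongDual 𝕜 X, ∃ ψ : ℕ → StrongDual 𝕜 X,
      (∀ n, ψ n ∈ Z) ∧ ∀ x : X, Tendsto (fun n => ψ n x) atTop (𝓝 (φ x))) :
    ∃ r : ℝ, 0 < r ∧ ∀ φ : StrongDual 𝕜 X, ‖φ‖ ≤ r →
      StrongDual.toWeakDual φ ∈
        closure (StrongDual.toWeakDual ''
          {ψ : StrongDual 𝕜 X | ψ ∈ Z ∧ ‖ψ‖ ≤ 1}) := by
  classical
  open NormedSpace in
  set S := StrongDual.toWeakDual '' {ψ : StrongDual 𝕜 X | ψ ∈ Z ∧ ‖ψ‖ ≤ 1} with hS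
  set T : Set (StrongDual 𝕜 X) := StrongDual.toWeakDual ⁻¹' closure S with hT
  have hTclosed : IsClosed T :=
    isClosed_closure.preimage NormedSpace.Dual.toWeakDual_continuous
  -- The scaled copies cover the dual space
  have hcov : ⋃ n : ℕ, (((n : 𝕜) + 1) • T) = Set.univ := by
    rw [Set.eq_univ_iff_forall]
    intro φ
    obtain ⟨ψ, hψZ, hψt⟩ := hdense φ
    obtain ⟨C, hC⟩ := banach_steinhaus (g := ψ) (fun x =>
      (((hψt x).norm).bddAbove_range).imp (fun c hc n => hc ⟨n, rfl⟩))
    refine Set.mem_iUnion.2 ⟨⌈C⌉₊, ?_⟩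
    have hk1 : (1 : ℝ) ≤ (⌈C⌉₊ : ℝ) + 1 := by
      have := Nat.cast_nonneg (α := ℝ) ⌈C⌉₊; linarith
    have hkC : C ≤ (⌈C⌉₊ : ℝ) + 1 := (Nat.le_ceil C).trans (by linarith)
    have hk0 : ((⌈C⌉₊ : 𝕜) + 1) ≠ 0 := by
      intro h
      have := congrArg norm h
      rw [norm_zero] at this
      have : ‖((⌈C⌉₊ : 𝕜) + 1)‖ = (⌈C⌉₊ : ℝ) + 1 := by
        rw [show ((⌈C⌉₊ : 𝕜) + 1) = ((((⌈C⌉₊ : ℝ) + 1) : ℝ) : 𝕜) by push_cast; ring,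
          RCLike.norm_ofReal, abs_of_nonneg (by positivity)]
      linarith [this ▸ ‹‖((⌈C⌉₊ : 𝕜) + 1)‖ = 0›]
    rw [Set.mem_smul_set_iff_inv_smul_mem₀ hk0]
    -- show the scaled φ is a weak* limit of elements of the unit ball of Z
    have hnormk : ‖((⌈C⌉₊ : 𝕜) + 1)⁻¹‖ = ((⌈C⌉₊ : ℝ) + 1)⁻¹ := by
      rw [norm_inv, show ((⌈C⌉₊ : 𝕜) + 1) = ((((⌈C⌉₊ : ℝ) + 1) : ℝ) : 𝕜) by push_cast; ring,
        RCLike.norm_ofReal, abs_of_nonneg (by positivity)]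
    have hmem : ∀ n, StrongDual.toWeakDual (((⌈C⌉₊ : 𝕜) + 1)⁻¹ • ψ n) ∈ S := by
      intro n
      refine ⟨((⌈C⌉₊ : 𝕜) + 1)⁻¹ • ψ n, ⟨Z.smul_mem _ (hψZ n), ?_⟩, rfl⟩
      rw [norm_smul, hnormk]
      have h1 : ‖ψ n‖ ≤ (⌈C⌉₊ : ℝ) + 1 := (hC n).trans hkC
      have h2 : (0 : ℝ) < (⌈C⌉₊ : ℝ) + 1 := by positivity
      rw [inv_mul_le_iff₀ h2, mul_one]
      exact h1
    have htend : Tendsto (fun n => StrongDual.toWeakDual (((⌈C⌉₊ : 𝕜) + 1)⁻¹ • ψ n)) atTop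
        (𝓝 (StrongDual.toWeakDual (((⌈C⌉₊ : 𝕜) + 1)⁻¹ • φ))) := by
      rw [tendsto_iff_forall_eval_tendsto_topDualPairing]
      intro y
      have h := (hψt y).const_smul (((⌈C⌉₊ : 𝕜) + 1)⁻¹)
      show Tendsto (fun n => (((⌈C⌉₊ : 𝕜) + 1)⁻¹ • ψ n) y) atTop
        (𝓝 ((((⌈C⌉₊ : 𝕜) + 1)⁻¹ • φ) y))
      simpa using h
    have hmm : StrongDual.toWeakDual ((((⌈C⌉₊ : 𝕜) + 1)⁻¹ : 𝕜) • φ) ∈ closure S :=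
      mem_closure_of_tendsto htend (Eventually.of_forall hmem)
    exact hmm
  -- Baire category
  have hclosed : ∀ n : ℕ, IsClosed (((n : 𝕜) + 1) • T) := by
    intro n
    exact IsClosed.smul₀ ((n : 𝕜) + 1) hTclosed
  obtain ⟨m, hm⟩ := nonempty_interior_of_iUnion_of_closed hclosed hcov
  have hm0 : ((m : 𝕜) + 1) ≠ 0 := by
    intro h
    have h2 := congrArg norm h
    rw [norm_zero, show ((m : 𝕜) + 1) = ((((m : ℝ) + 1) : ℝ) : 𝕜) by push_cast; ring,
      RCLike.norm_ofReal, abs_of_nonneg (by positivity)] at h2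
    have : (0:ℝ) < (m : ℝ) + 1 := by positivity
    linarith
  rw [interior_smul₀ hm0] at hm
  obtain ⟨_, φ₀, hφ₀, rfl⟩ := hm
  obtain ⟨ε, hε, hball⟩ := Metric.isOpen_iff.1 isOpen_interior φ₀ hφ₀
  have hballT : Metric.ball φ₀ ε ⊆ T := hball.trans interior_subset
  refine ⟨ε / 2, by positivity, ?_⟩
  intro φ hφ
  have h1 : φ₀ + φ ∈ T := by
    apply hballT
    simp only [Metric.mem_ball, dist_eq_norm]
    have : φ₀ + φ - φ₀ = φ := by abel
    rw [this]; linarith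
  have h2 : φ₀ - φ ∈ T := by
    apply hballT
    simp only [Metric.mem_ball, dist_eq_norm]
    have : φ₀ - φ - φ₀ = -φ := by abel
    rw [this, norm_neg]; linarith
  have key := half_diff_mem_closure Z h1 h2
  have heq : StrongDual.toWeakDual φ = (2⁻¹ : 𝕜) •
      (StrongDual.toWeakDual (φ₀ + φ) - StrongDual.toWeakDual (φ₀ - φ)) := by
    rw [← map_sub, ← map_smul]
    congr 1
    module
  rw [heq]
  exact key
end

section
/- Let X := ℓ¹(ℕ), so X* = ℓ^∞(ℕ). For n ≥ 1 define T_n := P_{2n}(Sⁿ + I) on ℓ¹(ℕ), where S is the unilateral shift and P_{2n} is the projection onto the first 2n coordinates; its adjoint is T_n* = (S*ⁿ + I)P_{2n} on ℓ^∞(ℕ). Then: (a) for every φ ∈ c₀(ℕ), ‖T_n*φ − φ‖_∞ → 0 as n → ∞; (b) for every φ ∈ ℓ^∞(ℕ) \ c₀(ℕ), T_n*φ does not converge to φ in the weak* topology of ℓ^∞(ℕ) = (ℓ¹(ℕ))*; indeed ⟨T_n e₁ − e₁, φ⟩ = ⟨e_{n+1}, φ⟩ does not tend to 0. -/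
/-! `Tstar n φ - φ` is `φ` shifted by `n` on `[0, n)`, zero on `[n, 2n)` and `-φ` on `[2n, ∞)`, so
every coordinate is a value of `φ` at an index `≥ n` (or zero), which is uniformly small when
`φ ∈ c₀`. Its `0`-th coordinate is `φ n`, so pairing with `e₁` already detects `φ ∉ c₀`. -/

open Filter Topology

/-- The adjoint operator `T n * = (S*ⁿ + I) P_{2n}` on `ℓ^∞`, acting on a bounded sequence `φ`
(written with 0-based indices: coordinate `k` here is coordinate `k+1` in the paper). -/
noncomputable def Tstar (n : ℕ) (φ : ℕ → ℂ) (k : ℕ) : ℂ :=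
  (if k < n then φ (k + n) else 0) + (if k < 2 * n then φ k else 0)

theorem Tstar_sub_self_apply (n : ℕ) (φ : ℕ → ℂ) (k : ℕ) :
    Tstar n φ k - φ k = if k < n then φ (k + n) else if k < 2 * n then 0 else -φ k := by
  unfold Tstar
  split_ifs <;> first | omega | ring

theorem norm_Tstar_sub_self_le {φ : ℕ → ℂ} {N n : ℕ} {ε : ℝ} (hε : 0 ≤ ε)
    (hφ : ∀ j ≥ N, ‖φ j‖ ≤ ε) (hn : N ≤ n) (k : ℕ) : ‖Tstar n φ k - φ k‖ ≤ ε := by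
  rw [Tstar_sub_self_apply]
  split_ifs
  · exact hφ _ (by omega)
  · simpa using hε
  · rw [norm_neg]
    exact hφ _ (by omega)

theorem tendsto_iSup_norm_Tstar_sub_self {φ : ℕ → ℂ} (hφ : Tendsto φ atTop (𝓝 0)) :
    Tendsto (fun n => ⨆ k, ‖Tstar n φ k - φ k‖) atTop (𝓝 0) := by
  rw [Metric.nhds_basis_closedBall.tendsto_right_iff] at hφ ⊢
  intro ε hε
  obtain ⟨N, hN⟩ := eventually_atTop.mp (hφ ε hε)
  have hφN : ∀ j ≥ N, ‖φ j‖ ≤ ε := fun j hj => by simpa using hN j hj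
  filter_upwards [eventually_ge_atTop N] with n hn
  have hsup : (⨆ k, ‖Tstar n φ k - φ k‖) ≤ ε :=
    ciSup_le (norm_Tstar_sub_self_le hε.le hφN hn)
  rw [Metric.mem_closedBall, Real.dist_0_eq_abs,
    abs_of_nonneg (Real.iSup_nonneg fun _ => norm_nonneg _)]
  exact hsup

theorem Tstar_apply_zero_sub {n : ℕ} (hn : 0 < n) (φ : ℕ → ℂ) : Tstar n φ 0 - φ 0 = φ n := by
  simp [Tstar_sub_self_apply, hn]

theorem tsum_single_mul {ι R : Type*} [DecidableEq ι] [NonAssocSemiring R] [TopologicalSpace R]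
    (i : ι) (f : ι → R) : ∑' k, (Pi.single i 1 : ι → R) k * f k = f i := by
  rw [tsum_eq_single i fun k hk => by simp [hk]]
  simp

theorem not_weakStar_tendsto_Tstar {φ : ℕ → ℂ} (hφ : ¬ Tendsto φ atTop (𝓝 0)) :
    ¬ ∀ x : ℕ → ℂ, Summable (fun k => ‖x k‖) →
      Tendsto (fun n => ∑' k, x k * Tstar n φ k) atTop (𝓝 (∑' k, x k * φ k)) := by
  intro h
  have he₁ : Summable fun k => ‖(Pi.single 0 1 : ℕ → ℂ) k‖ :=
    summable_of_ne_finset_zero (s := {0}) fun k hk => by simp_all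
  have hpair := (h _ he₁).sub_const (φ 0)
  simp only [tsum_single_mul, sub_self] at hpair
  refine hφ (hpair.congr' ?_)
  filter_upwards [eventually_gt_atTop 0] with n hn
  exact Tstar_apply_zero_sub hn φ

/-- **Remark after Corollary 2.4.** On `X = ℓ¹(ℕ)` with `X* = ℓ^∞(ℕ)`, for
`T n := P_{2n}(Sⁿ + I)` with adjoint `T n * = (S*ⁿ + I) P_{2n}`:
(a) for every `φ ∈ c₀(ℕ)`, `‖T n * φ − φ‖_∞ → 0`;
(b) for every bounded `φ ∉ c₀(ℕ)`, the pairing `⟨e₁, T n * φ − φ⟩` equals `φ` at index `n`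
(which does not tend to `0`), and `T n * φ` does not converge to `φ` in the weak*-topology of
`ℓ^∞ = (ℓ¹)*`. -/
theorem ellInfty_counterexample :
    (∀ φ : ℕ → ℂ, Tendsto φ atTop (𝓝 0) →
      Tendsto (fun n : ℕ => ⨆ k : ℕ, ‖Tstar n φ k - φ k‖) atTop (𝓝 0)) ∧
    (∀ φ : ℕ → ℂ, (∃ C : ℝ, ∀ k, ‖φ k‖ ≤ C) → ¬ Tendsto φ atTop (𝓝 0) →
      ((∀ n : ℕ, 1 ≤ n → Tstar n φ 0 - φ 0 = φ n) ∧
        ¬ (∀ x : ℕ → ℂ, Summable (fun k => ‖x k‖) →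
          Tendsto (fun n : ℕ => ∑' k : ℕ, x k * Tstar n φ k) atTop
            (𝓝 (∑' k : ℕ, x k * φ k))))) :=
  ⟨fun _ hφ => tendsto_iSup_norm_Tstar_sub_self hφ,
    fun φ _ hφ => ⟨fun _ hn => Tstar_apply_zero_sub hn φ, not_weakStar_tendsto_Tstar hφ⟩⟩
end

section
/- In the Banach summability setup, let A = (a_{nk}) be a matrix with Σ_k |a_{nk}|‖P_k‖ < ∞ for each n, and suppose A admits a left inverse B = (b_{jn}). If S_n^A x → x (weakly or in norm) for all x ∈ X, then, writing B_j := Σ_n |b_{jn}|, there is a constant C such that ‖e_j‖‖ψ_j‖/|⟨e_j, ψ_j⟩| ≤ C·B_j for all j. -/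
open Filter Topology

variable {𝕜 X : Type*} [RCLike 𝕜] [NormedAddCommGroup X] [NormedSpace 𝕜 X] [CompleteSpace X]

/-- The summation operator `S n ^ A x = Σ_k a n k (⟨x, ψ k⟩/⟨e k, ψ k⟩) e k`. -/
noncomputable def summationOp (a : ℕ → ℕ → 𝕜) (e : ℕ → X) (ψ : ℕ → StrongDual 𝕜 X)
    (n : ℕ) (x : X) : X :=
  ∑' k : ℕ, (a n k * (ψ k x / ψ k (e k))) • e k

/-- **Theorem 3.2 (limitation theorem).** In the Banach summability set-up, if
`S n ^ A x → x` (weakly or in norm) for all `x ∈ X` and the matrix `A` admits a left inverse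
`B = (b j n)`, then `‖e j‖‖ψ j‖/|⟨e j, ψ j⟩| = O(B j)` where `B j := Σ_n |b j n|`. -/
theorem limitation_theorem (e : ℕ → X) (ψ : ℕ → StrongDual 𝕜 X)
    (horth : ∀ j k : ℕ, j ≠ k → ψ k (e j) = 0) (hnz : ∀ k, ψ k (e k) ≠ 0)
    (a b : ℕ → ℕ → 𝕜)
    (hA : ∀ n, Summable fun k => ‖a n k‖ * (‖e k‖ * ‖ψ k‖ / ‖ψ k (e k)‖))
    (hBsum : ∀ j, Summable fun n => ‖b j n‖)
    (hBinv : ∀ j k : ℕ, ∑' n : ℕ, b j n * a n k = if j = k then (1 : 𝕜) else 0)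
    (hconv : (∀ x : X, ∀ φ : StrongDual 𝕜 X,
        Tendsto (fun n => φ (summationOp a e ψ n x)) atTop (𝓝 (φ x))) ∨
      (∀ x : X, Tendsto (fun n => summationOp a e ψ n x) atTop (𝓝 x))) :
    ∃ C : ℝ, ∀ j : ℕ, ‖e j‖ * ‖ψ j‖ / ‖ψ j (e j)‖ ≤ C * ∑' n : ℕ, ‖b j n‖ := by
  classical
  set P : ℕ → X →L[𝕜] X := fun k => (ψ k).smulRight ((ψ k (e k))⁻¹ • e k) with hPdef
  have hPapply : ∀ k (x : X), P k x = (ψ k x / ψ k (e k)) • e k := by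
    intro k x
    simp only [hPdef, ContinuousLinearMap.smulRight_apply, smul_smul, div_eq_mul_inv]
  have hcpos : ∀ k, 0 < ‖ψ k (e k)‖ := fun k => norm_pos_iff.mpr (hnz k)
  -- summability of the vector families defining `summationOp`
  have hfs : ∀ n (x : X), Summable fun k => (a n k * (ψ k x / ψ k (e k))) • e k := by
    intro n x
    refine Summable.of_norm (Summable.of_nonneg_of_le (fun k => norm_nonneg _)
      (fun k => ?_) ((hA n).mul_right ‖x‖))
    rw [norm_smul, norm_mul, norm_div]
    calc ‖a n k‖ * (‖ψ k x‖ / ‖ψ k (e k)‖) * ‖e k‖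
        = ‖a n k‖ * ‖ψ k x‖ * ‖e k‖ / ‖ψ k (e k)‖ := by ring
      _ ≤ ‖a n k‖ * (‖ψ k‖ * ‖x‖) * ‖e k‖ / ‖ψ k (e k)‖ := by
          gcongr
          exact (ψ k).le_opNorm x
      _ = ‖a n k‖ * (‖e k‖ * ‖ψ k‖ / ‖ψ k (e k)‖) * ‖x‖ := by ring
  -- summability of the operator family
  have hPsum : ∀ n, Summable fun k => a n k • P k := by
    intro n
    refine Summable.of_norm (Summable.of_nonneg_of_le (fun k => norm_nonneg _)
      (fun k => le_of_eq ?_) (hA n))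
    simp only [hPdef]
    rw [norm_smul (a n k) (ContinuousLinearMap.smulRight (ψ k) (((ψ k) (e k))⁻¹ • e k)),
      ContinuousLinearMap.norm_smulRight_apply,
      norm_smul (((ψ k) (e k))⁻¹) (e k), norm_inv]
    ring
  set S : ℕ → X →L[𝕜] X := fun n => ∑' k, a n k • P k with hSdef
  have hSapply : ∀ n (x : X), S n x = summationOp a e ψ n x := by
    intro n x
    have h := ContinuousLinearMap.map_tsum (ContinuousLinearMap.apply 𝕜 X x) (hPsum n)
    simp only [ContinuousLinearMap.apply_apply] at h
    calc S n x = ∑' k, (a n k • P k) x := h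
      _ = ∑' k, (a n k * (ψ k x / ψ k (e k))) • e k := by
          refine tsum_congr fun k => ?_
          rw [ContinuousLinearMap.smul_apply, hPapply, smul_smul]
      _ = summationOp a e ψ n x := rfl
  -- action of the coordinate functionals on `summationOp`
  have hψS : ∀ (j n : ℕ) (x : X), ψ j (summationOp a e ψ n x) = a n j * ψ j x := by
    intro j n x
    unfold summationOp
    rw [ContinuousLinearMap.map_tsum (ψ j) (hfs n x), tsum_eq_single j]
    · rw [map_smul, smul_eq_mul]
      have h := hnz j
      field_simp
    · intro k hk
      rw [map_smul, horth k j hk, smul_zero]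
  -- convergence always holds weakly
  have hconv' : ∀ (x : X) (φ : StrongDual 𝕜 X),
      Tendsto (fun n => φ (summationOp a e ψ n x)) atTop (𝓝 (φ x)) := by
    rcases hconv with h | h
    · exact h
    · exact fun x φ => (φ.continuous.tendsto x).comp (h x)
  -- pointwise boundedness of the operators S n
  have hbdd : ∀ x : X, ∃ M, ∀ n, ‖S n x‖ ≤ M := by
    intro x
    have h1 : ∀ φ : StrongDual 𝕜 X, ∃ M, ∀ n,
        ‖NormedSpace.inclusionInDoubleDual 𝕜 X (S n x) φ‖ ≤ M := by
      intro φ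
      have h2 : Tendsto (fun n => ‖φ (S n x)‖) atTop (𝓝 ‖φ x‖) := by
        simpa only [hSapply] using (hconv' x φ).norm
      obtain ⟨M, hM⟩ := h2.bddAbove_range
      exact ⟨M, fun n => hM ⟨n, rfl⟩⟩
    obtain ⟨M, hM⟩ :=
      banach_steinhaus (g := fun n => NormedSpace.inclusionInDoubleDual 𝕜 X (S n x)) h1
    refine ⟨M, fun n => ?_⟩
    have hnorm : ‖NormedSpace.inclusionInDoubleDual 𝕜 X (S n x)‖ = ‖S n x‖ :=
      (NormedSpace.inclusionInDoubleDualLi 𝕜).norm_map (S n x)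
    rw [← hnorm]
    exact hM n
  obtain ⟨C0, hC0⟩ := banach_steinhaus hbdd
  set C : ℝ := max C0 0 with hCdef
  have hCnn : 0 ≤ C := le_max_right _ _
  have hSx : ∀ n (x : X), ‖S n x‖ ≤ C * ‖x‖ := fun n x =>
    (S n).le_of_opNorm_le ((hC0 n).trans (le_max_left _ _)) x
  refine ⟨C, fun j => ?_⟩
  set Bj : ℝ := ∑' n, ‖b j n‖ with hBj
  have hBjnn : 0 ≤ Bj := tsum_nonneg fun n => norm_nonneg _
  -- the key pointwise bound
  have key : ∀ x : X, ‖(ψ j x / ψ j (e j)) • e j‖ ≤ C * Bj * ‖x‖ := by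
    intro x
    by_cases hx : ψ j x = 0
    · simp only [hx, zero_div, zero_smul, norm_zero]
      positivity
    · have hbound : ∀ n, ‖b j n • S n x‖ ≤ ‖b j n‖ * (C * ‖x‖) := by
        intro n
        rw [norm_smul]
        exact mul_le_mul_of_nonneg_left (hSx n x) (norm_nonneg _)
      have hnorms : Summable fun n => ‖b j n • S n x‖ :=
        Summable.of_nonneg_of_le (fun n => norm_nonneg _) hbound ((hBsum j).mul_right (C * ‖x‖))
      have hySummable : Summable fun n => b j n • S n x := hnorms.of_norm
      set y : X := ∑' n, b j n • S n x with hy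
      have hψy : ∀ k, ψ k y = (if j = k then (1 : 𝕜) else 0) * ψ k x := by
        intro k
        rw [hy, ContinuousLinearMap.map_tsum (ψ k) hySummable]
        have h3 : ∀ n, ψ k (b j n • S n x) = b j n * a n k * ψ k x := by
          intro n
          rw [map_smul, smul_eq_mul, hSapply n x, hψS k n x]
          ring
        simp_rw [h3]
        rw [tsum_mul_right, hBinv j k]
      have hSy : ∀ m, summationOp a e ψ m y = a m j • ((ψ j x / ψ j (e j)) • e j) := by
        intro m
        unfold summationOp
        rw [tsum_eq_single j]
        · rw [hψy j, if_pos rfl, one_mul, mul_smul]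
        · intro k hk
          rw [hψy k, if_neg fun h => hk h.symm, zero_mul, zero_div, mul_zero, zero_smul]
      have haj : Tendsto (fun m => a m j) atTop (𝓝 1) := by
        have h1 := hconv' x (ψ j)
        simp_rw [hψS j] at h1
        have h2 := h1.mul_const (ψ j x)⁻¹
        simpa [mul_assoc, mul_inv_cancel₀ hx] using h2
      have hlim : Tendsto (fun m => summationOp a e ψ m y) atTop
          (𝓝 ((ψ j x / ψ j (e j)) • e j)) := by
        simp_rw [hSy]
        simpa using haj.smul (tendsto_const_nhds (x := (ψ j x / ψ j (e j)) • e j))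
      have hyP : (ψ j x / ψ j (e j)) • e j = y := by
        rcases hconv with hw | hn
        · rw [SeparatingDual.eq_iff_forall_dual_eq (R := 𝕜)]
          intro φ
          exact tendsto_nhds_unique ((φ.continuous.tendsto _).comp hlim) (hw y φ)
        · exact tendsto_nhds_unique hlim (hn y)
      rw [hyP, hy]
      calc ‖∑' n, b j n • S n x‖ ≤ ∑' n, ‖b j n • S n x‖ := norm_tsum_le_tsum_norm hnorms
        _ ≤ ∑' n, ‖b j n‖ * (C * ‖x‖) :=
            Summable.tsum_le_tsum hbound hnorms ((hBsum j).mul_right (C * ‖x‖))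
        _ = Bj * (C * ‖x‖) := tsum_mul_right
        _ = C * Bj * ‖x‖ := by ring
  have hej : e j ≠ 0 := fun h => hnz j (by simp [h])
  have hejn : 0 < ‖e j‖ := norm_pos_iff.mpr hej
  have hψje : 0 < ‖ψ j (e j)‖ := hcpos j
  have hψnorm : ‖ψ j‖ ≤ C * Bj * ‖ψ j (e j)‖ / ‖e j‖ := by
    refine (ψ j).opNorm_le_bound (by positivity) fun x => ?_
    have h := key x
    rw [norm_smul, norm_div, div_mul_eq_mul_div, div_le_iff₀ hψje] at h
    rw [div_mul_eq_mul_div, le_div_iff₀ hejn]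
    calc ‖ψ j x‖ * ‖e j‖ ≤ C * Bj * ‖x‖ * ‖ψ j (e j)‖ := h
      _ = C * Bj * ‖ψ j (e j)‖ * ‖x‖ := by ring
  calc ‖e j‖ * ‖ψ j‖ / ‖ψ j (e j)‖
      ≤ ‖e j‖ * (C * Bj * ‖ψ j (e j)‖ / ‖e j‖) / ‖ψ j (e j)‖ := by gcongr
    _ = C * Bj := by field_simp
end

section
/- In the Banach summability setup, let α ≥ 0 and let σ_n^α denote the Cesàro means of order α, i.e. the summation operators S_n^A for the Cesàro matrix of order α. If σ_n^α(x) → x (weakly or in norm) for all x ∈ X, then there is a constant C such that ‖e_j‖‖ψ_j‖/|⟨e_j, ψ_j⟩| ≤ C·(j+1)^α for all j ≥ 0. -/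
open Filter Topology

/-- The entry `a n k = C(n,k)/C(n+α,k)` of the Cesàro matrix of order `α`, where binomial
coefficients with non-integer arguments are defined via the Gamma function:
`C(x,k) = Γ(x+1)/(Γ(k+1)Γ(x−k+1))`. -/
noncomputable def cesaroEntry (α : ℝ) (n k : ℕ) : ℝ :=
  (n.choose k : ℝ) /
    (Real.Gamma ((n : ℝ) + α + 1) /
      (Real.Gamma ((k : ℝ) + 1) * Real.Gamma ((n : ℝ) + α - k + 1)))

section CesaroAux
open Finset

noncomputable def ascR (x : ℝ) : ℕ → ℝ
  | 0 => 1
  | (m+1) => ascR x m * (x + m)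

lemma ascR_zero (x : ℝ) : ascR x 0 = 1 := rfl
lemma ascR_succ (x : ℝ) (m : ℕ) : ascR x (m+1) = ascR x m * (x + m) := rfl

lemma ascR_pos {x : ℝ} (hx : 0 < x) (m : ℕ) : 0 < ascR x m := by
  induction m with
  | zero => norm_num [ascR_zero]
  | succ m ih => exact mul_pos ih (by positivity)

lemma ascR_zero_base (m : ℕ) (hm : m ≠ 0) : ascR (0:ℝ) m = 0 := by
  cases m with
  | zero => simp at hm
  | succ m =>
    induction m with
    | zero => simp [ascR_succ, ascR_zero]
    | succ m ih => rw [ascR_succ, ih (by simp)]; ring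

lemma Gamma_ascR {x : ℝ} (hx : 0 < x) (m : ℕ) :
    Real.Gamma (x + m) = Real.Gamma x * ascR x m := by
  induction m with
  | zero => simp [ascR_zero]
  | succ m ih =>
    have h1 : x + (m+1 : ℕ) = (x + m) + 1 := by push_cast; ring
    rw [h1, Real.Gamma_add_one (by positivity), ih, ascR_succ]; ring

/-- Vandermonde convolution for rising factorials. -/
lemma ascR_vandermonde (x y : ℝ) (p : ℕ) :
    ∑ m ∈ range (p+1), (p.choose m : ℝ) * ascR x m * ascR y (p - m) = ascR (x+y) p := by
  induction p with
  | zero => simp [ascR_zero]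
  | succ p ih =>
    have split : ∀ m ∈ range (p+1), (p.choose m : ℝ) * ascR x m * ascR y (p - m) * ((x+y) + p)
        = ((p.choose m : ℝ) * ascR x (m+1) * ascR y (p - m))
          + ((p.choose m : ℝ) * ascR x m * ascR y (p + 1 - m)) := by
      intro m hm
      have hmp : m ≤ p := by simpa [Nat.lt_succ_iff] using hm
      have hc : ((p - m : ℕ) : ℝ) = (p : ℝ) - m := by
        push_cast [Nat.cast_sub hmp]; ring
      have h2 : p + 1 - m = (p - m) + 1 := by omega
      rw [h2, ascR_succ, ascR_succ, hc]; ring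
    have lhs_eq : ascR (x+y) (p+1)
        = (∑ m ∈ range (p+1), (p.choose m : ℝ) * ascR x (m+1) * ascR y (p - m))
          + ∑ m ∈ range (p+1), (p.choose m : ℝ) * ascR x m * ascR y (p + 1 - m) := by
      rw [ascR_succ, ← ih, Finset.sum_mul, Finset.sum_congr rfl split,
        Finset.sum_add_distrib]
    rw [lhs_eq]
    -- now the goal is to show LHS sum over range (p+2) equals these two sums
    rw [Finset.sum_range_succ' (fun m => ((p+1).choose m : ℝ) * ascR x m * ascR y (p + 1 - m)) (p+1)]
    have e0 : ((p+1).choose 0 : ℝ) * ascR x 0 * ascR y (p+1-0) = ascR y (p+1) := by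
      simp [ascR_zero]
    rw [e0]
    have epascal : ∀ i ∈ range (p+1),
        ((p+1).choose (i+1) : ℝ) * ascR x (i+1) * ascR y (p + 1 - (i+1))
        = ((p.choose i : ℝ) * ascR x (i+1) * ascR y (p - i))
          + ((p.choose (i+1) : ℝ) * ascR x (i+1) * ascR y (p - i)) := by
      intro i hi
      have : p + 1 - (i+1) = p - i := by omega
      rw [this, Nat.choose_succ_succ]
      push_cast; ring
    rw [Finset.sum_congr rfl epascal, Finset.sum_add_distrib]
    have esecond : ∑ i ∈ range (p+1), (p.choose (i+1) : ℝ) * ascR x (i+1) * ascR y (p - i)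
        = (∑ m ∈ range (p+1), (p.choose m : ℝ) * ascR x m * ascR y (p + 1 - m)) - ascR y (p+1) := by
      have : ∑ m ∈ range (p+2), (p.choose m : ℝ) * ascR x m * ascR y (p + 1 - m)
          = ∑ m ∈ range (p+1), (p.choose m : ℝ) * ascR x m * ascR y (p + 1 - m) := by
        rw [Finset.sum_range_succ, Nat.choose_succ_self]; simp
      rw [← this, Finset.sum_range_succ' (fun m => (p.choose m : ℝ) * ascR x m * ascR y (p + 1 - m)) (p+1)]
      have : (p.choose 0 : ℝ) * ascR x 0 * ascR y (p+1-0) = ascR y (p+1) := by simp [ascR_zero]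
      rw [this]
      have h4 : ∀ i ∈ range (p+1), (p.choose (i+1) : ℝ) * ascR x (i+1) * ascR y (p + 1 - (i+1))
          = (p.choose (i+1) : ℝ) * ascR x (i+1) * ascR y (p - i) := by
        intro i _; rw [show p + 1 - (i+1) = p - i by omega]
      rw [Finset.sum_congr rfl h4]
      ring
    rw [esecond]
    ring

noncomputable def AA (α : ℝ) (m : ℕ) : ℝ := ascR (α+1) m / m.factorial
noncomputable def bb (α : ℝ) (m : ℕ) : ℝ := ascR (-α-1) m / m.factorial

lemma AA_pos {α : ℝ} (hα : 0 ≤ α) (m : ℕ) : 0 < AA α m := by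
  have := ascR_pos (x := α+1) (by linarith) m
  have : (0:ℝ) < m.factorial := by positivity
  unfold AA; positivity

lemma AA_zero (α : ℝ) : AA α 0 = 1 := by simp [AA, ascR_zero]

lemma bb_zero (α : ℝ) : bb α 0 = 1 := by simp [bb, ascR_zero]

lemma AA_succ (α : ℝ) (m : ℕ) : AA α (m+1) = AA α m * ((α + 1 + m) / (m+1)) := by
  unfold AA
  rw [ascR_succ, Nat.factorial_succ]
  have h1 : ((m.factorial :ℝ)) ≠ 0 := by positivity
  have h2 : ((m:ℝ)+1) ≠ 0 := by positivity
  push_cast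
  field_simp

lemma bb_succ (α : ℝ) (m : ℕ) : bb α (m+1) = bb α m * ((-α - 1 + m) / (m+1)) := by
  unfold bb
  rw [ascR_succ, Nat.factorial_succ]
  have h1 : ((m.factorial :ℝ)) ≠ 0 := by positivity
  have h2 : ((m:ℝ)+1) ≠ 0 := by positivity
  push_cast
  field_simp

/-- the key inverse identity -/
lemma bb_conv_AA {α : ℝ} (p : ℕ) :
    ∑ m ∈ range (p+1), bb α (p - m) * AA α m = if p = 0 then 1 else 0 := by
  have hv := ascR_vandermonde (α+1) (-α-1) p
  rw [show α + 1 + (-α-1) = 0 by ring] at hv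
  have hterm : ∀ m ∈ range (p+1), bb α (p - m) * AA α m
      = (p.choose m : ℝ) * ascR (α+1) m * ascR (-α-1) (p - m) / p.factorial := by
    intro m hm
    have hmp : m ≤ p := by simpa [Nat.lt_succ_iff] using hm
    have hfac : ((p.choose m : ℕ) : ℝ) * (m.factorial : ℝ) * ((p-m).factorial : ℝ)
        = (p.factorial : ℝ) := by
      exact_mod_cast congrArg Nat.cast (Nat.choose_mul_factorial_mul_factorial hmp)
    have h1 : (0:ℝ) < m.factorial := by positivity
    have h2 : (0:ℝ) < (p-m).factorial := by positivity
    have h3 : (0:ℝ) < p.factorial := by positivity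
    unfold bb AA
    rw [div_mul_div_comm, div_eq_div_iff (by positivity) (ne_of_gt h3)]
    linear_combination (-(ascR (α+1) m * ascR (-α-1) (p-m))) * hfac
  rw [Finset.sum_congr rfl hterm, ← Finset.sum_div, hv]
  rcases Nat.eq_zero_or_pos p with hp | hp
  · subst hp; simp [ascR_zero]
  · rw [ascR_zero_base p (by omega)]
    simp [hp.ne']

lemma cesaroEntry_eq_AA {α : ℝ} (hα : 0 ≤ α) {n k : ℕ} (hk : k ≤ n) :
    cesaroEntry α n k = AA α (n - k) / AA α n := by
  have hΓpos : 0 < Real.Gamma (α+1) := Real.Gamma_pos_of_pos (by linarith)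
  have h1 : Real.Gamma ((n:ℝ) + α + 1) = Real.Gamma (α+1) * ascR (α+1) n := by
    rw [show (n:ℝ) + α + 1 = (α+1) + n by ring, Gamma_ascR (by linarith)]
  have h2 : Real.Gamma ((n:ℝ) + α - k + 1) = Real.Gamma (α+1) * ascR (α+1) (n-k) := by
    rw [show (n:ℝ) + α - k + 1 = (α+1) + ((n-k : ℕ) : ℝ) by
      push_cast [Nat.cast_sub hk]; ring, Gamma_ascR (by linarith)]
  have h3 : Real.Gamma ((k:ℝ) + 1) = k.factorial := Real.Gamma_nat_eq_factorial k
  have hfac : ((n.choose k : ℕ) : ℝ) * (k.factorial : ℝ) * ((n-k).factorial : ℝ)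
      = (n.factorial : ℝ) := by
    exact_mod_cast congrArg Nat.cast (Nat.choose_mul_factorial_mul_factorial hk)
  have ha1 : 0 < ascR (α+1) n := ascR_pos (by linarith) n
  have ha2 : 0 < ascR (α+1) (n-k) := ascR_pos (by linarith) (n-k)
  have hf1 : (0:ℝ) < k.factorial := by positivity
  have hf2 : (0:ℝ) < (n-k).factorial := by positivity
  have hf3 : (0:ℝ) < n.factorial := by positivity
  unfold cesaroEntry AA
  rw [h1, h2, h3]
  field_simp
  linear_combination hfac

lemma AA_mono {α : ℝ} (hα : 0 ≤ α) : Monotone (AA α) := by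
  apply monotone_nat_of_le_succ
  intro m
  rw [AA_succ]
  have hpos := AA_pos hα m
  have hfac : (1:ℝ) ≤ (α + 1 + m) / (m+1) := by
    rw [le_div_iff₀ (by positivity)]; linarith
  nlinarith

lemma harm_le (j : ℕ) : ∑ i ∈ range (j+1), (1:ℝ)/(i+1) ≤ 1 + Real.log (j+1) := by
  induction j with
  | zero => simp
  | succ j ih =>
    rw [Finset.sum_range_succ]
    have hlog : Real.log ((j:ℝ)+1) + 1/((j:ℝ)+1+1) ≤ Real.log ((j:ℝ)+1+1) := by
      have hx : (0:ℝ) < ((j:ℝ)+1)/((j:ℝ)+2) := by positivity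
      have := Real.log_le_sub_one_of_pos hx
      rw [Real.log_div (by positivity) (by positivity)] at this
      have harith : ((j:ℝ)+1)/((j:ℝ)+2) - 1 = -(1/((j:ℝ)+2)) := by
        field_simp
        norm_num
      rw [harith] at this
      have : Real.log ((j:ℝ)+1) - Real.log ((j:ℝ)+2) ≤ -(1/((j:ℝ)+2)) := this
      have hc : ((j:ℝ)+1+1) = (j:ℝ)+2 := by ring
      rw [hc]
      linarith
    push_cast
    push_cast at ih
    linarith

lemma AA_le_exp_harm {α : ℝ} (hα : 0 ≤ α) (j : ℕ) :
    AA α j ≤ Real.exp (α * ∑ i ∈ range j, (1:ℝ)/(i+1)) := by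
  induction j with
  | zero => simp [AA_zero]
  | succ j ih =>
    rw [AA_succ, Finset.sum_range_succ, mul_add, Real.exp_add]
    have hpos := AA_pos hα j
    have h1 : (α + 1 + (j:ℝ)) / ((j:ℝ)+1) = 1 + α * (1/((j:ℝ)+1)) := by
      field_simp
      ring
    have h2 : 1 + α * (1/((j:ℝ)+1)) ≤ Real.exp (α * (1/((j:ℝ)+1))) := by
      have := Real.add_one_le_exp (α * (1/((j:ℝ)+1))); linarith
    rw [h1]
    have hf : (0:ℝ) ≤ 1 + α * (1/((j:ℝ)+1)) := by positivity
    calc AA α j * (1 + α * (1/((j:ℝ)+1)))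
        ≤ Real.exp (α * ∑ i ∈ range j, (1:ℝ)/(i+1)) * (1 + α * (1/((j:ℝ)+1))) := by
          exact mul_le_mul_of_nonneg_right ih hf
      _ ≤ Real.exp (α * ∑ i ∈ range j, (1:ℝ)/(i+1)) * Real.exp (α * (1/((j:ℝ)+1))) := by
          exact mul_le_mul_of_nonneg_left h2 (Real.exp_nonneg _)

lemma AA_le {α : ℝ} (hα : 0 ≤ α) (j : ℕ) :
    AA α j ≤ Real.exp α * ((j:ℝ)+1) ^ α := by
  cases j with
  | zero =>
    rw [AA_zero]
    norm_num
    nlinarith [Real.add_one_le_exp α]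
  | succ i =>
    have h1 := AA_le_exp_harm hα (i+1)
    have h2 : α * ∑ t ∈ range (i+1), (1:ℝ)/(t+1) ≤ α * (1 + Real.log ((i:ℝ)+1)) := by
      apply mul_le_mul_of_nonneg_left _ hα
      exact_mod_cast harm_le i
    have h3 : AA α (i+1) ≤ Real.exp (α * (1 + Real.log ((i:ℝ)+1))) :=
      le_trans h1 (by exact Real.exp_le_exp.mpr h2)
    have h4 : Real.exp (α * (1 + Real.log ((i:ℝ)+1)))
        = Real.exp α * ((i:ℝ)+1) ^ α := by
      rw [Real.rpow_def_of_pos (by positivity), ← Real.exp_add]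
      ring_nf
    have h5 : ((i:ℝ)+1) ^ α ≤ (((i+1:ℕ):ℝ)+1) ^ α := by
      apply Real.rpow_le_rpow (by positivity) _ hα
      push_cast; linarith
    calc AA α (i+1) ≤ Real.exp α * ((i:ℝ)+1) ^ α := by rw [← h4]; exact h3
      _ ≤ Real.exp α * (((i+1:ℕ):ℝ)+1) ^ α :=
          mul_le_mul_of_nonneg_left h5 (Real.exp_nonneg _)

lemma bb_abs_succ (α : ℝ) (m : ℕ) :
    |bb α (m+1)| = |bb α m| * |(m:ℝ) - α - 1| / ((m:ℝ)+1) := by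
  rw [bb_succ, abs_mul, abs_div, abs_of_pos (show (0:ℝ) < (m:ℝ)+1 by positivity),
    show -α - 1 + (m:ℝ) = (m:ℝ) - α - 1 by ring, mul_div_assoc]

lemma bb_sum_bound {α : ℝ} (hα : 0 ≤ α) :
    ∃ K : ℝ, 0 ≤ K ∧ ∀ j, ∑ m ∈ range (j+1), |bb α m| ≤ K := by
  obtain ⟨N, hN2, hNα⟩ : ∃ N : ℕ, 2 ≤ N ∧ α + 2 ≤ (N:ℝ) :=
    ⟨⌈α⌉₊ + 2, by omega, by have := Nat.le_ceil α; push_cast; linarith⟩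
  have hN1 : (2:ℝ) ≤ (N:ℝ) := by exact_mod_cast hN2
  obtain ⟨D, hD⟩ : ∃ D : ℝ, D = |bb α N| * ((N:ℝ)-1) * N := ⟨_, rfl⟩
  have hD0 : 0 ≤ D := by
    rw [hD]
    have := abs_nonneg (bb α N)
    exact mul_nonneg (mul_nonneg this (by linarith)) (by linarith)
  have claim : ∀ t : ℕ, |bb α (N + t)| ≤ D / ((N:ℝ) + (t:ℝ) - 1) / ((N:ℝ) + (t:ℝ)) := by
    intro t
    induction t with
    | zero =>
      have h1 : ((N:ℝ) - 1) ≠ 0 := by linarith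
      have h2 : ((N:ℝ)) ≠ 0 := by linarith
      apply le_of_eq
      rw [Nat.cast_zero, add_zero, hD]
      symm; simp only [add_zero]; rw [div_div, div_eq_iff (mul_ne_zero h1 h2)]; ring
    | succ t ih =>
      have ht0 : (0:ℝ) ≤ (t:ℝ) := Nat.cast_nonneg t
      have hq1 : (1:ℝ) < (N:ℝ)+(t:ℝ) := by linarith
      have hq0 : (0:ℝ) < (N:ℝ)+(t:ℝ) := by linarith
      have hstep := bb_abs_succ α (N+t)
      have hcast : (((N+t:ℕ)):ℝ) = (N:ℝ)+(t:ℝ) := by push_cast; ring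
      rw [hcast] at hstep
      have habs : |((N:ℝ)+(t:ℝ)) - α - 1| ≤ ((N:ℝ)+(t:ℝ)) - 1 := by
        rw [abs_of_nonneg (by linarith)]
        linarith
      have hmono : |bb α (N+t)| * |((N:ℝ)+(t:ℝ)) - α - 1| / (((N:ℝ)+(t:ℝ))+1)
          ≤ (D / (((N:ℝ)+(t:ℝ)) - 1) / ((N:ℝ)+(t:ℝ))) * (((N:ℝ)+(t:ℝ)) - 1) / (((N:ℝ)+(t:ℝ))+1) := by
        apply div_le_div_of_nonneg_right _ (by linarith)
        · exact mul_le_mul ih habs (abs_nonneg _)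
            (div_nonneg (div_nonneg hD0 (by linarith)) (by linarith))
      have heq : (D / (((N:ℝ)+(t:ℝ)) - 1) / ((N:ℝ)+(t:ℝ))) * (((N:ℝ)+(t:ℝ)) - 1) / (((N:ℝ)+(t:ℝ))+1)
          = D / ((N:ℝ) + ((t:ℝ)+1) - 1) / ((N:ℝ) + ((t:ℝ)+1)) := by
        have h1 : ((N:ℝ)+(t:ℝ)) - 1 ≠ 0 := by linarith
        have h2 : ((N:ℝ)+(t:ℝ)) ≠ 0 := by linarith
        have h3 : ((N:ℝ)+(t:ℝ)) + 1 ≠ 0 := by linarith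
        rw [show (N:ℝ) + ((t:ℝ)+1) - 1 = (N:ℝ)+(t:ℝ) by ring,
          show (N:ℝ) + ((t:ℝ)+1) = ((N:ℝ)+(t:ℝ)) + 1 by ring]
        field_simp
      have hfin : |bb α (N + (t+1))| ≤ D / ((N:ℝ) + ((t:ℝ)+1) - 1) / ((N:ℝ) + ((t:ℝ)+1)) := by
        rw [show N + (t+1) = (N+t)+1 by ring, hstep, ← heq]
        exact hmono
      rw [Nat.cast_succ]
      exact hfin
  refine ⟨(∑ m ∈ range N, |bb α m|) + D / ((N:ℝ)-1), ?_, ?_⟩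
  · have h2 : (0:ℝ) ≤ D / ((N:ℝ)-1) := div_nonneg hD0 (by linarith)
    have h3 : (0:ℝ) ≤ ∑ m ∈ range N, |bb α m| :=
      Finset.sum_nonneg fun _ _ => abs_nonneg _
    linarith
  intro j
  rcases le_or_gt (j+1) N with hle | hlt
  · have h1 : ∑ m ∈ range (j+1), |bb α m| ≤ ∑ m ∈ range N, |bb α m| :=
      Finset.sum_le_sum_of_subset_of_nonneg
        (Finset.range_subset_range.mpr hle) (fun _ _ _ => abs_nonneg _)
    have h2 : (0:ℝ) ≤ D / ((N:ℝ)-1) := div_nonneg hD0 (by linarith)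
    linarith
  · obtain ⟨s, hs⟩ : ∃ s, j + 1 = N + s := ⟨j+1-N, by omega⟩
    rw [hs, Finset.sum_range_add]
    have htail : ∑ t ∈ range s, |bb α (N + t)|
        ≤ ∑ t ∈ range s, (D/((N:ℝ)+(t:ℝ)-1) - D/((N:ℝ)+(t:ℝ))) := by
      apply Finset.sum_le_sum
      intro t _
      have ht0 : (0:ℝ) ≤ (t:ℝ) := Nat.cast_nonneg t
      have hq1 : (1:ℝ) < (N:ℝ)+(t:ℝ) := by linarith
      have hsplit : D / ((N:ℝ)+(t:ℝ) - 1) / ((N:ℝ)+(t:ℝ))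
          = D/((N:ℝ)+(t:ℝ)-1) - D/((N:ℝ)+(t:ℝ)) := by
        have h1 : ((N:ℝ)+(t:ℝ)) - 1 ≠ 0 := by linarith
        have h2 : ((N:ℝ)+(t:ℝ)) ≠ 0 := by linarith
        field_simp
        ring
      rw [← hsplit]
      exact claim t
    have htel : ∑ t ∈ range s, (D/((N:ℝ)+(t:ℝ)-1) - D/((N:ℝ)+(t:ℝ)))
        ≤ D / ((N:ℝ)-1) := by
      have hEq : ∀ t ∈ range s, D/((N:ℝ)+(t:ℝ)-1) - D/((N:ℝ)+(t:ℝ))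
          = (fun u : ℕ => D/((N:ℝ)+(u:ℝ)-1)) t - (fun u : ℕ => D/((N:ℝ)+(u:ℝ)-1)) (t+1) := by
        intro t _
        simp only
        push_cast
        ring_nf
      rw [Finset.sum_congr rfl hEq, Finset.sum_range_sub']
      simp only [Nat.cast_zero, add_zero]
      have hlast : 0 ≤ D/(((N:ℝ)+(s:ℝ))-1) := by
        have : (0:ℝ) ≤ (s:ℝ) := Nat.cast_nonneg s
        exact div_nonneg hD0 (by linarith)
      linarith
    have h4 := le_trans htail htel
    linarith


lemma bbAA_inner_sum {α : ℝ} (hα : 0 ≤ α) {j k : ℕ} (hk : k ≤ j) :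
    ∑ n ∈ Finset.Ico k (j+1), (bb α (j-n) * AA α n) * cesaroEntry α n k
      = if j = k then 1 else 0 := by
  rw [Finset.sum_Ico_eq_sum_range]
  have hjk : j + 1 - k = (j - k) + 1 := by omega
  rw [hjk]
  have hterm : ∀ m ∈ range ((j-k)+1), (bb α (j-(k+m)) * AA α (k+m)) * cesaroEntry α (k+m) k
      = bb α ((j-k) - m) * AA α m := by
    intro m hm
    have h1 : j - (k+m) = (j-k) - m := by omega
    rw [h1, cesaroEntry_eq_AA hα (Nat.le_add_right k m), show (k+m) - k = m by omega]
    have hA := AA_pos hα (k+m)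
    field_simp
  rw [Finset.sum_congr rfl hterm, bb_conv_AA]
  rcases eq_or_ne j k with h | h
  · simp [h]
  · have h2 : j - k ≠ 0 := by omega
    simp [h, h2]


end CesaroAux

open Finset in
/-- **Theorem 3.5 (Cesàro limitation theorem).** In the Banach summability set-up, let `α ≥ 0`.
If the Cesàro means `σ n ^ α x = Σ_{k=0}^n a n k (⟨x, ψ k⟩/⟨e k, ψ k⟩) e k` converge to `x`
(weakly or in norm) for every `x ∈ X`, then `‖e j‖‖ψ j‖/|⟨e j, ψ j⟩| = O(j^α)`. -/
theorem cesaro_limitation {𝕜 X : Type*} [RCLike 𝕜] [NormedAddCommGroup X] [NormedSpace 𝕜 X]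
    [CompleteSpace X] (e : ℕ → X) (ψ : ℕ → StrongDual 𝕜 X)
    (horth : ∀ j k : ℕ, j ≠ k → ψ k (e j) = 0) (hnz : ∀ k, ψ k (e k) ≠ 0)
    (α : ℝ) (hα : 0 ≤ α)
    (hconv :
      (∀ x : X, ∀ φ : StrongDual 𝕜 X,
        Tendsto (fun n : ℕ => φ (∑ k ∈ Finset.range (n + 1),
          (algebraMap ℝ 𝕜 (cesaroEntry α n k) * (ψ k x / ψ k (e k))) • e k))
          atTop (𝓝 (φ x))) ∨
      (∀ x : X,
        Tendsto (fun n : ℕ => ∑ k ∈ Finset.range (n + 1),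
          (algebraMap ℝ 𝕜 (cesaroEntry α n k) * (ψ k x / ψ k (e k))) • e k)
          atTop (𝓝 x))) :
    ∃ C : ℝ, ∀ j : ℕ, ‖e j‖ * ‖ψ j‖ / ‖ψ j (e j)‖ ≤ C * ((j : ℝ) + 1) ^ α := by
  classical
  set S : ℕ → X →L[𝕜] X := fun n =>
    ∑ k ∈ Finset.range (n+1),
      (algebraMap ℝ 𝕜 (cesaroEntry α n k) * (ψ k (e k))⁻¹) • (ψ k).smulRight (e k) with hSdef
  have hSapp : ∀ (n : ℕ) (x : X), S n x = ∑ k ∈ Finset.range (n+1),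
      (algebraMap ℝ 𝕜 (cesaroEntry α n k) * (ψ k x / ψ k (e k))) • e k := by
    intro n x
    rw [hSdef]
    simp only [ContinuousLinearMap.coe_sum', Finset.sum_apply,
      ContinuousLinearMap.smul_apply, ContinuousLinearMap.smulRight_apply]
    refine Finset.sum_congr rfl fun k _ => ?_
    rw [smul_smul]
    congr 1
    rw [div_eq_mul_inv]
    ring
  -- Step A : pointwise boundedness
  have hbdd : ∀ x : X, ∃ C : ℝ, ∀ n, ‖S n x‖ ≤ C := by
    intro x
    rcases hconv with hw | hn
    · have hten : ∀ φ : StrongDual 𝕜 X,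
          Tendsto (fun n => φ (S n x)) atTop (𝓝 (φ x)) := by
        intro φ
        refine (hw x φ).congr fun n => ?_
        rw [hSapp]
      have hptw : ∀ φ : StrongDual 𝕜 X, ∃ C : ℝ, ∀ n,
          ‖NormedSpace.inclusionInDoubleDual 𝕜 X (S n x) φ‖ ≤ C := by
        intro φ
        obtain ⟨C, hC⟩ := (hten φ).norm.bddAbove_range
        exact ⟨C, fun n => by
          rw [NormedSpace.dual_def]
          exact hC (Set.mem_range_self n)⟩
      obtain ⟨C, hC⟩ := banach_steinhaus hptw
      refine ⟨C, fun n => ?_⟩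
      have heq : ‖NormedSpace.inclusionInDoubleDual 𝕜 X (S n x)‖ = ‖S n x‖ :=
        (NormedSpace.inclusionInDoubleDualLi 𝕜 (E := X)).norm_map (S n x)
      rw [← heq]
      exact hC n
    · have hten : Tendsto (fun n => S n x) atTop (𝓝 x) := by
        refine (hn x).congr fun n => ?_
        rw [hSapp]
      obtain ⟨C, hC⟩ := hten.norm.bddAbove_range
      exact ⟨C, fun n => hC (Set.mem_range_self n)⟩
  -- Step B : uniform boundedness
  obtain ⟨M, hM⟩ := banach_steinhaus hbdd
  have hM0 : 0 ≤ M := le_trans (norm_nonneg (S 0)) (hM 0)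
  -- Step C : inversion identity
  have key : ∀ (j : ℕ) (x : X), (ψ j x / ψ j (e j)) • e j
      = ∑ n ∈ Finset.range (j+1), algebraMap ℝ 𝕜 (bb α (j-n) * AA α n) • S n x := by
    intro j x
    have expand : ∀ n ∈ Finset.range (j+1),
        algebraMap ℝ 𝕜 (bb α (j-n) * AA α n) • S n x
        = ∑ k ∈ Finset.range (n+1),
            algebraMap ℝ 𝕜 ((bb α (j-n) * AA α n) * cesaroEntry α n k)
              • ((ψ k x / ψ k (e k)) • e k) := by
      intro n _
      rw [hSapp, Finset.smul_sum]
      refine Finset.sum_congr rfl fun k _ => ?_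
      simp only [smul_smul, map_mul]
      congr 1
      ring
    rw [Finset.sum_congr rfl expand]
    have hswap :
        ∑ n ∈ Finset.range (j+1), ∑ k ∈ Finset.range (n+1),
            algebraMap ℝ 𝕜 ((bb α (j-n) * AA α n) * cesaroEntry α n k)
              • ((ψ k x / ψ k (e k)) • e k)
        = ∑ k ∈ Finset.range (j+1), ∑ n ∈ Finset.Ico k (j+1),
            algebraMap ℝ 𝕜 ((bb α (j-n) * AA α n) * cesaroEntry α n k)
              • ((ψ k x / ψ k (e k)) • e k) := by
      simp only [Finset.range_eq_Ico]
      rw [← Finset.sum_Ico_Ico_comm 0 (j+1)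
        (fun k n => algebraMap ℝ 𝕜 ((bb α (j-n) * AA α n) * cesaroEntry α n k)
              • ((ψ k x / ψ k (e k)) • e k))]
    rw [hswap]
    have hinner : ∀ k ∈ Finset.range (j+1),
        ∑ n ∈ Finset.Ico k (j+1),
            algebraMap ℝ 𝕜 ((bb α (j-n) * AA α n) * cesaroEntry α n k)
              • ((ψ k x / ψ k (e k)) • e k)
        = algebraMap ℝ 𝕜 (if j = k then (1:ℝ) else 0) • ((ψ k x / ψ k (e k)) • e k) := by
      intro k hk
      rw [← Finset.sum_smul, ← map_sum (algebraMap ℝ 𝕜),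
        bbAA_inner_sum hα (by simpa [Nat.lt_succ_iff] using hk)]
    rw [Finset.sum_congr rfl hinner]
    have hite : ∀ k ∈ Finset.range (j+1),
        algebraMap ℝ 𝕜 (if j = k then (1:ℝ) else 0) • ((ψ k x / ψ k (e k)) • e k)
        = if j = k then ((ψ k x / ψ k (e k)) • e k) else 0 := by
      intro k _
      rcases eq_or_ne j k with h | h <;> simp [h]
    rw [Finset.sum_congr rfl hite, Finset.sum_ite_eq (Finset.range (j+1)) j
      (fun k => ((ψ k x / ψ k (e k)) • e k))]
    simp [Finset.mem_range]
  -- step D: bounds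
  obtain ⟨K, hK0, hK⟩ := bb_sum_bound (α := α) hα
  refine ⟨M * K * Real.exp α, fun j => ?_⟩
  have hBj : ∀ x : X, ‖(ψ j x / ψ j (e j)) • e j‖
      ≤ ((∑ n ∈ Finset.range (j+1), |bb α (j-n)| * AA α n) * M) * ‖x‖ := by
    intro x
    rw [key j x]
    calc ‖∑ n ∈ Finset.range (j+1), algebraMap ℝ 𝕜 (bb α (j-n) * AA α n) • S n x‖
        ≤ ∑ n ∈ Finset.range (j+1), ‖algebraMap ℝ 𝕜 (bb α (j-n) * AA α n) • S n x‖ :=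
          norm_sum_le _ _
      _ ≤ ∑ n ∈ Finset.range (j+1), (|bb α (j-n)| * AA α n) * (M * ‖x‖) := by
          refine Finset.sum_le_sum fun n _ => ?_
          rw [norm_smul, norm_algebraMap']
          have h1 : ‖S n x‖ ≤ M * ‖x‖ :=
            le_trans ((S n).le_opNorm x)
              (mul_le_mul_of_nonneg_right (hM n) (norm_nonneg x))
          have h2 : ‖bb α (j-n) * AA α n‖ = |bb α (j-n)| * AA α n := by
            rw [Real.norm_eq_abs, abs_mul, abs_of_pos (AA_pos hα n)]
          rw [h2]
          exact mul_le_mul_of_nonneg_left h1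
            (mul_nonneg (abs_nonneg _) (AA_pos hα n).le)
      _ = ((∑ n ∈ Finset.range (j+1), |bb α (j-n)| * AA α n) * M) * ‖x‖ := by
          rw [← Finset.sum_mul, mul_assoc]
  set B : ℝ := (∑ n ∈ Finset.range (j+1), |bb α (j-n)| * AA α n) * M with hBdef
  have hB0 : 0 ≤ B := by
    apply mul_nonneg _ hM0
    exact Finset.sum_nonneg fun n _ =>
      mul_nonneg (abs_nonneg _) (AA_pos hα n).le
  have hBle : B ≤ M * K * Real.exp α * ((j:ℝ)+1)^α := by
    have h1 : ∑ n ∈ Finset.range (j+1), |bb α (j-n)| * AA α n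
        ≤ (∑ n ∈ Finset.range (j+1), |bb α (j-n)|) * AA α j := by
      rw [Finset.sum_mul]
      refine Finset.sum_le_sum fun n hn => ?_
      exact mul_le_mul_of_nonneg_left
        (AA_mono hα (by simpa [Nat.lt_succ_iff] using hn)) (abs_nonneg _)
    have h2 : ∑ n ∈ Finset.range (j+1), |bb α (j-n)|
        = ∑ n ∈ Finset.range (j+1), |bb α n| := by
      have := Finset.sum_range_reflect (fun n => |bb α n|) (j+1)
      simpa using this
    have h3 : ∑ n ∈ Finset.range (j+1), |bb α n| ≤ K := hK j
    have h4 : AA α j ≤ Real.exp α * ((j:ℝ)+1)^α := AA_le hα j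
    have hAj : 0 < AA α j := AA_pos hα j
    have hrp : (0:ℝ) ≤ ((j:ℝ)+1)^α := Real.rpow_nonneg (by positivity) α
    calc B = (∑ n ∈ Finset.range (j+1), |bb α (j-n)| * AA α n) * M := hBdef
      _ ≤ ((∑ n ∈ Finset.range (j+1), |bb α n|) * AA α j) * M := by
          rw [← h2]
          exact mul_le_mul_of_nonneg_right h1 hM0
      _ ≤ (K * (Real.exp α * ((j:ℝ)+1)^α)) * M := by
          apply mul_le_mul_of_nonneg_right _ hM0
          exact mul_le_mul h3 h4 hAj.le hK0
      _ = M * K * Real.exp α * ((j:ℝ)+1)^α := by ring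
  rcases eq_or_ne (e j) 0 with hej | hej
  · rw [hej]
    simp only [norm_zero, zero_mul, zero_div]
    have : 0 ≤ M * K * Real.exp α * ((j:ℝ)+1)^α := by
      have := Real.exp_nonneg α
      have hrp : (0:ℝ) ≤ ((j:ℝ)+1)^α := Real.rpow_nonneg (by positivity) α
      positivity
    linarith
  · have hejn : 0 < ‖e j‖ := norm_pos_iff.mpr hej
    have hdn : 0 < ‖ψ j (e j)‖ := norm_pos_iff.mpr (hnz j)
    have hψ : ‖ψ j‖ ≤ B * ‖ψ j (e j)‖ / ‖e j‖ := by
      refine ContinuousLinearMap.opNorm_le_bound _ (by positivity) fun x => ?_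
      have hx := hBj x
      rw [norm_smul, norm_div] at hx
      -- hx : ‖ψ j x‖ / ‖ψ j (e j)‖ * ‖e j‖ ≤ B * ‖x‖
      rw [div_mul_eq_mul_div, div_le_iff₀ hdn] at hx
      rw [div_mul_eq_mul_div, le_div_iff₀ hejn]
      calc ‖ψ j x‖ * ‖e j‖ ≤ B * ‖x‖ * ‖ψ j (e j)‖ := hx
        _ = B * ‖ψ j (e j)‖ * ‖x‖ := by ring
    calc ‖e j‖ * ‖ψ j‖ / ‖ψ j (e j)‖
        ≤ ‖e j‖ * (B * ‖ψ j (e j)‖ / ‖e j‖) / ‖ψ j (e j)‖ := by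
          gcongr
      _ = B := by field_simp
      _ ≤ M * K * Real.exp α * ((j:ℝ)+1)^α := hBle
end

section
/- There exists a continuous function f ∈ C(𝕋) such that the partial sums of its Fourier series, s_n(f)(e^{it}) := Σ_{k=−n}^{n} f̂(k)e^{ikt}, do not converge to f in the weak topology of C(𝕋); that is, there is a bounded linear functional φ on C(𝕋) for which φ(s_n(f)) does not converge to φ(f). -/
open Filter Topology MeasureTheory

instance : Fact (0 < 2 * Real.pi) := ⟨by positivity⟩

open Finset

noncomputable def SS (N : ℕ) (t : ℝ) : ℝ := ∑ k ∈ Finset.Ioc 0 N, Real.sin (k * t) / k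

-- bound on partial sums of sin(k t)
lemma sin_partial_bound {t : ℝ} (h : 0 < Real.sin (t / 2)) (n : ℕ) :
    |∑ i ∈ Finset.range n, Real.sin (i * t)| ≤ 1 / Real.sin (t / 2) := by
  have key : ∀ i : ℕ, Real.cos (i * t - t / 2) - Real.cos ((i + 1) * t - t / 2)
      = 2 * Real.sin (i * t) * Real.sin (t / 2) := by
    intro i
    rw [Real.cos_sub_cos]
    have h1 : ((i : ℝ) * t - t / 2 + ((i + 1) * t - t / 2)) / 2 = i * t + (t/2) * 0 := by ring_nf
    have h2 : ((i : ℝ) * t - t / 2 - ((i + 1) * t - t / 2)) / 2 = -(t / 2) := by ring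
    rw [h1, h2, Real.sin_neg]
    ring_nf
  have tele : ∑ i ∈ Finset.range n,
      (Real.cos ((i : ℝ) * t - t / 2) - Real.cos (((i : ℕ) + 1 : ℕ) * t - t / 2))
      = Real.cos ((0 : ℕ) * t - t / 2) - Real.cos (n * t - t / 2) :=
    Finset.sum_range_sub' (fun i : ℕ => Real.cos (i * t - t / 2)) n
  have e : (2 * Real.sin (t / 2)) * ∑ i ∈ Finset.range n, Real.sin (i * t)
      = Real.cos ((0:ℕ) * t - t / 2) - Real.cos (n * t - t / 2) := by
    rw [Finset.mul_sum, ← tele]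
    refine Finset.sum_congr rfl fun i _ => ?_
    push_cast
    rw [key i]
    ring
  have habs : |(2 * Real.sin (t / 2)) * ∑ i ∈ Finset.range n, Real.sin (i * t)| ≤ 2 := by
    rw [e]
    have := Real.neg_one_le_cos ((0:ℕ) * t - t / 2)
    have := Real.cos_le_one ((0:ℕ) * t - t / 2)
    have := Real.neg_one_le_cos ((n:ℝ) * t - t / 2)
    have := Real.cos_le_one ((n:ℝ) * t - t / 2)
    rw [abs_le]; constructor <;> nlinarith
  rw [abs_mul, abs_of_pos (by positivity : (0:ℝ) < 2 * Real.sin (t/2))] at habs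
  rw [le_div_iff₀ h]
  nlinarith [abs_nonneg (∑ i ∈ Finset.range n, Real.sin (i * t))]

lemma telescope_Ioc (g : ℕ → ℝ) {a b : ℕ} (h : a ≤ b) :
    ∑ i ∈ Finset.Ioc a b, (g i - g (i + 1)) = g (a + 1) - g (b + 1) := by
  induction b, h using Nat.le_induction with
  | base => simp
  | succ n hn ih =>
      rw [Finset.sum_Ioc_succ_top hn, ih]
      ring

open Real in
lemma SS_bound_Icc {t : ℝ} (h0 : 0 ≤ t) (h1 : t ≤ π) (N : ℕ) :
    |SS N t| ≤ 1 + 3 * π := by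
  rcases eq_or_lt_of_le h0 with rfl | ht
  · simp [SS]
    positivity
  have hπ := Real.pi_pos
  have hs : 0 < Real.sin (t / 2) := by
    apply Real.sin_pos_of_pos_of_lt_pi (by linarith)
    linarith
  have hsin_ge : t / π ≤ Real.sin (t / 2) := by
    have := Real.mul_le_sin (x := t / 2) (by linarith) (by linarith)
    calc t / π = 2 / π * (t / 2) := by field_simp
    _ ≤ _ := this
  have hK : 1 / Real.sin (t / 2) ≤ π / t := by
    rw [div_le_div_iff₀ hs ht]
    calc 1 * t = t / π * π := by field_simp
    _ ≤ Real.sin (t/2) * π := by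
        apply mul_le_mul_of_nonneg_right hsin_ge (le_of_lt hπ)
    _ = π * Real.sin (t/2) := mul_comm _ _
  set K := 1 / Real.sin (t / 2) with hKdef
  have hK0 : 0 ≤ K := by positivity
  set m := ⌊1 / t⌋₊ with hm
  set m' := min m N with hm'
  have hsplit : SS N t = (∑ k ∈ Finset.Ioc 0 m', Real.sin (k * t) / k)
      + ∑ k ∈ Finset.Ioc m' N, Real.sin (k * t) / k := by
    rw [SS, Finset.sum_Ioc_consecutive _ (Nat.zero_le m') (min_le_right m N)]
  have head : |∑ k ∈ Finset.Ioc 0 m', Real.sin (k * t) / k| ≤ 1 := by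
    calc |∑ k ∈ Finset.Ioc 0 m', Real.sin (k * t) / k|
        ≤ ∑ k ∈ Finset.Ioc 0 m', |Real.sin (k * t) / k| := Finset.abs_sum_le_sum_abs _ _
      _ ≤ ∑ k ∈ Finset.Ioc 0 m', t := by
          apply Finset.sum_le_sum
          intro k hk
          have hk1 : 1 ≤ k := (Finset.mem_Ioc.mp hk).1
          have hkpos : (0:ℝ) < k := by exact_mod_cast hk1
          rw [abs_div, abs_of_pos hkpos, div_le_iff₀ hkpos]
          calc |Real.sin (k * t)| ≤ |(k:ℝ) * t| := Real.abs_sin_le_abs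
            _ = t * k := by rw [abs_of_nonneg (by positivity)]; ring
      _ = m' * t := by rw [Finset.sum_const, Nat.card_Ioc]; simp [nsmul_eq_mul]
      _ ≤ m * t := by
          apply mul_le_mul_of_nonneg_right _ (le_of_lt ht)
          exact_mod_cast min_le_left m N
      _ ≤ 1 := by
          have := Nat.floor_le (by positivity : (0:ℝ) ≤ 1 / t)
          rw [← hm] at this
          calc (m:ℝ) * t ≤ 1 / t * t := mul_le_mul_of_nonneg_right this (le_of_lt ht)
            _ = 1 := by field_simp
  have tail : |∑ k ∈ Finset.Ioc m' N, Real.sin (k * t) / k| ≤ 3 * π := by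
    rcases eq_or_lt_of_le (min_le_right m N) with heq | hlt
    · have hmn : m' = N := hm'.trans heq
      rw [hmn]
      simp
      positivity
    · -- m' < N, so m' = m and m < N
      have hmN : m' = m := by
        rw [hm']
        rcases le_total m N with h | h
        · exact min_eq_left h
        · exfalso; rw [min_eq_right h] at hlt; exact lt_irrefl _ hlt
      have habel := Finset.sum_Ioc_by_parts (fun i : ℕ => ((i:ℝ))⁻¹)
        (fun i : ℕ => Real.sin (i * t)) hlt
      have hG : ∀ n : ℕ, |∑ i ∈ Finset.range n, Real.sin (i * t)| ≤ K :=
        fun n => sin_partial_bound hs n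
      have hterms : (∑ k ∈ Finset.Ioc m' N, Real.sin (k * t) / k)
          = ∑ k ∈ Finset.Ioc m' N, ((k:ℝ))⁻¹ • Real.sin (k * t) := by
        refine Finset.sum_congr rfl fun k _ => ?_
        rw [smul_eq_mul, div_eq_inv_mul]
      have hf1 : (0:ℝ) ≤ ((m' + 1 : ℕ):ℝ)⁻¹ := by positivity
      -- telescoping bound for middle sum
      have hmid : |∑ i ∈ Finset.Ioc m' (N - 1),
          ((((i+1:ℕ):ℝ))⁻¹ - ((i:ℕ):ℝ)⁻¹) • ∑ j ∈ Finset.range (i+1), Real.sin (j * t)|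
          ≤ K * ((m' + 1 : ℕ):ℝ)⁻¹ := by
        calc |∑ i ∈ Finset.Ioc m' (N - 1),
            ((((i+1:ℕ):ℝ))⁻¹ - ((i:ℕ):ℝ)⁻¹) • ∑ j ∈ Finset.range (i+1), Real.sin (j * t)|
            ≤ ∑ i ∈ Finset.Ioc m' (N - 1),
              |((((i+1:ℕ):ℝ))⁻¹ - ((i:ℕ):ℝ)⁻¹) • ∑ j ∈ Finset.range (i+1), Real.sin (j * t)| :=
              Finset.abs_sum_le_sum_abs _ _
          _ ≤ ∑ i ∈ Finset.Ioc m' (N - 1), (((i:ℕ):ℝ)⁻¹ - (((i+1:ℕ):ℝ))⁻¹) * K := by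
              apply Finset.sum_le_sum
              intro i hi
              have hi1 : 1 ≤ i := Nat.one_le_iff_ne_zero.mpr (by
                rintro rfl
                exact absurd (Finset.mem_Ioc.mp hi).1 (by simp))
              have hipos : (0:ℝ) < i := by exact_mod_cast hi1
              have hmono : (((i+1:ℕ):ℝ))⁻¹ ≤ ((i:ℕ):ℝ)⁻¹ := by
                apply inv_anti₀ hipos
                push_cast; linarith
              rw [smul_eq_mul, abs_mul]
              apply mul_le_mul
              · rw [abs_of_nonpos (by linarith)]; push_cast; linarith
              · exact hG (i+1)
              · exact abs_nonneg _
              · linarith [sub_nonneg.mpr hmono]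
          _ = K * ∑ i ∈ Finset.Ioc m' (N - 1), (((i:ℕ):ℝ)⁻¹ - (((i+1:ℕ):ℝ))⁻¹) := by
              rw [Finset.mul_sum]; refine Finset.sum_congr rfl fun i _ => by push_cast; ring
          _ ≤ K * ((m' + 1 : ℕ):ℝ)⁻¹ := by
              apply mul_le_mul_of_nonneg_left _ hK0
              rcases le_or_gt (m' + 1) (N - 1) with hle | hgt
              · rw [telescope_Ioc (fun i => ((i:ℕ):ℝ)⁻¹) (le_trans (Nat.le_succ m') hle)]
                have h2 : (0:ℝ) ≤ ((N - 1 + 1 : ℕ):ℝ)⁻¹ := by positivity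
                linarith
              · rw [Finset.Ioc_eq_empty (by omega), Finset.sum_empty]
                positivity
      rw [hterms, habel]
      have hb1 : |((N:ℝ))⁻¹ • ∑ i ∈ Finset.range (N+1), Real.sin (i * t)| ≤ ((m'+1:ℕ):ℝ)⁻¹ * K := by
        rw [smul_eq_mul, abs_mul]
        apply mul_le_mul
        · rw [abs_of_nonneg (by positivity)]
          apply inv_anti₀ (by positivity)
          push_cast
          have : m' + 1 ≤ N := hlt
          exact_mod_cast this
        · exact hG (N+1)
        · exact abs_nonneg _
        · positivity
      have hb2 : |((m'+1:ℕ):ℝ)⁻¹ • ∑ i ∈ Finset.range (m'+1), Real.sin (i * t)|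
          ≤ ((m'+1:ℕ):ℝ)⁻¹ * K := by
        rw [smul_eq_mul, abs_mul, abs_of_nonneg hf1]
        exact mul_le_mul_of_nonneg_left (hG (m'+1)) hf1
      have hKm : ((m'+1:ℕ):ℝ)⁻¹ * K ≤ π := by
        have hlt1 : 1 / t < (m:ℝ) + 1 := by
          have := Nat.lt_floor_add_one (1 / t)
          rw [← hm] at this; exact this
        have hinv : ((m'+1:ℕ):ℝ)⁻¹ < t := by
          rw [hmN, show (((m+1:ℕ)):ℝ) = (m:ℝ)+1 by push_cast; ring]
          have hpos : (0:ℝ) < (m:ℝ)+1 := by positivity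
          have h2 : 1 < ((m:ℝ)+1) * t := by
            rw [div_lt_iff₀ ht] at hlt1
            linarith
          calc ((m:ℝ)+1)⁻¹ < ((m:ℝ)+1)⁻¹ * (((m:ℝ)+1)*t) := by
                nlinarith [inv_pos.mpr hpos]
          _ = t := by field_simp
        calc ((m'+1:ℕ):ℝ)⁻¹ * K ≤ t * (π / t) := by
              apply mul_le_mul (le_of_lt hinv) hK (by positivity) (le_of_lt ht)
        _ = π := by field_simp
      calc |((N:ℝ))⁻¹ • (∑ i ∈ Finset.range (N+1), Real.sin (i * t))
            - ((m'+1:ℕ):ℝ)⁻¹ • (∑ i ∈ Finset.range (m'+1), Real.sin (i * t))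
            - ∑ i ∈ Finset.Ioc m' (N - 1), ((((i+1:ℕ):ℝ))⁻¹ - ((i:ℕ):ℝ)⁻¹)
                • ∑ j ∈ Finset.range (i+1), Real.sin (j * t)|
          ≤ |((N:ℝ))⁻¹ • (∑ i ∈ Finset.range (N+1), Real.sin (i * t))|
            + |((m'+1:ℕ):ℝ)⁻¹ • (∑ i ∈ Finset.range (m'+1), Real.sin (i * t))|
            + |∑ i ∈ Finset.Ioc m' (N - 1), ((((i+1:ℕ):ℝ))⁻¹ - ((i:ℕ):ℝ)⁻¹)
                • ∑ j ∈ Finset.range (i+1), Real.sin (j * t)| := by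
            exact (abs_sub _ _).trans (by gcongr; exact abs_sub _ _) 
        _ ≤ ((m'+1:ℕ):ℝ)⁻¹ * K + ((m'+1:ℕ):ℝ)⁻¹ * K + K * ((m'+1:ℕ):ℝ)⁻¹ := by
            gcongr
        _ ≤ π + π + π := by nlinarith [hKm]
        _ = 3 * π := by ring
  calc |SS N t| ≤ |∑ k ∈ Finset.Ioc 0 m', Real.sin (k * t) / k|
      + |∑ k ∈ Finset.Ioc m' N, Real.sin (k * t) / k| := by rw [hsplit]; exact abs_add_le _ _
    _ ≤ 1 + 3 * π := add_le_add head tail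

open Real in
lemma SS_bound (t : ℝ) (N : ℕ) : |SS N t| ≤ 1 + 3 * π := by
  have hπ := Real.pi_pos
  set r : ℤ := round (t / (2 * π)) with hr
  set u : ℝ := t - 2 * π * r with hu
  have hub : |u| ≤ π := by
    have h1 : |t / (2 * π) - r| ≤ 1 / 2 := abs_sub_round _
    have h2 : u = (t / (2 * π) - r) * (2 * π) := by field_simp; exact hu
    rw [h2, abs_mul, abs_of_pos (by positivity : (0:ℝ) < 2 * π)]
    nlinarith [abs_nonneg (t / (2 * π) - r)]
  have hperiod : SS N t = SS N u := by
    unfold SS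
    refine Finset.sum_congr rfl fun k _ => ?_
    congr 1
    have : (k:ℝ) * t = k * u + (k * r : ℤ) * (2 * π) := by push_cast; ring
    rw [this, Real.sin_add_int_mul_two_pi]
  rw [hperiod]
  rcases le_total 0 u with h | h
  · exact SS_bound_Icc h ((abs_le.mp hub).2) N
  · have hodd : SS N u = -SS N (-u) := by
      unfold SS
      rw [← Finset.sum_neg_distrib]
      refine Finset.sum_congr rfl fun k _ => ?_
      rw [show (k:ℝ) * u = -((k:ℝ) * (-u)) by ring, Real.sin_neg]
      ring
    rw [hodd, abs_neg]
    refine SS_bound_Icc (by linarith) ?_ N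
    have := (abs_le.mp hub).1
    linarith

local notation "𝕋" => AddCircle (2 * Real.pi)

lemma integrable_fourier_smul (f : C(𝕋, ℂ)) (n : ℤ) :
    Integrable (fun t : 𝕋 => fourier (-n) t • f t) AddCircle.haarAddCircle := by
  have hc : Continuous (fun t : 𝕋 => fourier (-n) t • f t) :=
    (map_continuous (fourier (-n))).smul f.continuous
  exact hc.integrable_of_hasCompactSupport ((isClosed_tsupport _).isCompact)

lemma norm_fourierCoeff_le (f : C(𝕋, ℂ)) (n : ℤ) : ‖fourierCoeff (⇑f) n‖ ≤ ‖f‖ := by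
  rw [fourierCoeff]
  have := MeasureTheory.norm_integral_le_of_norm_le_const
    (μ := (AddCircle.haarAddCircle : Measure 𝕋)) (C := ‖f‖)
    (f := fun t : 𝕋 => fourier (-n) t • f t) ?_
  · simpa using this
  · filter_upwards with t
    rw [norm_smul]
    have h1 : ‖fourier (-n) t‖ = 1 := Circle.norm_coe _
    rw [h1, one_mul]
    exact f.norm_coe_le_norm t

noncomputable def fc (n : ℤ) : C(𝕋, ℂ) →L[ℂ] ℂ :=
  LinearMap.mkContinuous
    { toFun := fun f => fourierCoeff (⇑f) n
      map_add' := by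
        intro f g
        show fourierCoeff (⇑(f+g)) n = fourierCoeff (⇑f) n + fourierCoeff (⇑g) n
        unfold fourierCoeff
        rw [← integral_add (integrable_fourier_smul f n) (integrable_fourier_smul g n)]
        refine integral_congr_ae (Filter.Eventually.of_forall fun t => ?_)
        simp [smul_add, mul_add]
      map_smul' := by
        intro c f
        show fourierCoeff (⇑(c • f)) n = c • fourierCoeff (⇑f) n
        have : (⇑(c • f) : 𝕋 → ℂ) = c • (⇑f : 𝕋 → ℂ) := rfl
        rw [this, fourierCoeff.const_smul] }
    1 (fun f => by simpa using norm_fourierCoeff_le f n)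

@[simp] lemma fc_apply (n : ℤ) (f : C(𝕋, ℂ)) : fc n f = fourierCoeff (⇑f) n := rfl

lemma fc_fourier (n m : ℤ) : fc n (fourier m) = if n = m then 1 else 0 := by
  rw [fc_apply, fourierCoeff]
  have : ∀ t : 𝕋, fourier (-n) t • fourier m t = fourier (m - n) t := by
    intro t
    rw [smul_eq_mul, mul_comm, show m - n = m + (-n) by ring, fourier_add]
  simp_rw [this]
  split_ifs with h
  · subst h
    simp_rw [show n - n = 0 by ring]
    have : ∀ t : 𝕋, fourier (0 : ℤ) t = (1 : ℂ) := fun t => fourier_zero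
    simp_rw [this]
    simp
  · have hmn : m - n ≠ 0 := sub_ne_zero.mpr (Ne.symm h)
    exact integral_eq_zero_of_add_right_eq_neg
      (fourier_add_half_inv_index hmn (Fact.out : 0 < 2 * Real.pi))

noncomputable def PP (N : ℕ) : C(𝕋, ℂ) :=
  ∑ k ∈ Finset.Ioc 0 N,
    (((k:ℝ))⁻¹ : ℂ) • ((fourier ((N:ℤ) - k)) - fourier ((N:ℤ) + k))

lemma hfour (t : ℝ) (n : ℤ) :
    (fourier n (t : 𝕋) : ℂ) = Complex.exp ((n:ℂ) * t * Complex.I) := by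
  rw [fourier_coe_apply]
  congr 1
  have h2π : ((2 * Real.pi : ℝ) : ℂ) ≠ 0 := by
    simp [Real.pi_ne_zero]
  push_cast at h2π ⊢
  field_simp

lemma exp_sub_exp (a : ℝ) :
    Complex.exp (-(a:ℂ) * Complex.I) - Complex.exp ((a:ℂ) * Complex.I)
      = -2 * Complex.I * (Real.sin a : ℂ) := by
  rw [Complex.exp_mul_I, Complex.exp_mul_I, Complex.cos_neg, Complex.sin_neg,
    ← Complex.ofReal_sin]
  ring

lemma PP_apply (N : ℕ) (t : ℝ) :
    PP N (t : 𝕋) = Complex.exp ((N:ℂ) * t * Complex.I) * (-2 * Complex.I) * (SS N t : ℂ) := by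
  have h1 : PP N (t : 𝕋) = ∑ k ∈ Finset.Ioc 0 N,
      (((k:ℝ))⁻¹ : ℂ) * (fourier ((N:ℤ) - k) (t : 𝕋) - fourier ((N:ℤ) + k) (t : 𝕋)) := by
    simp [PP]
  rw [h1, show ((SS N t : ℝ):ℂ) = ∑ k ∈ Finset.Ioc 0 N, ((Real.sin (k*t)/k : ℝ) : ℂ) by
    rw [SS]; push_cast; rfl, Finset.mul_sum]
  refine Finset.sum_congr rfl fun k hk => ?_
  rw [hfour, hfour]
  have e1 : Complex.exp (((((N:ℤ) - k : ℤ)):ℂ) * t * Complex.I)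
      = Complex.exp ((N:ℂ) * t * Complex.I) * Complex.exp (-((k*t:ℝ):ℂ) * Complex.I) := by
    rw [← Complex.exp_add]; congr 1; push_cast; ring
  have e2 : Complex.exp (((((N:ℤ) + k : ℤ)):ℂ) * t * Complex.I)
      = Complex.exp ((N:ℂ) * t * Complex.I) * Complex.exp (((k*t:ℝ):ℂ) * Complex.I) := by
    rw [← Complex.exp_add]; congr 1; push_cast; ring
  rw [e1, e2, ← mul_sub, exp_sub_exp (k*t)]
  push_cast
  ring

lemma norm_PP_le (N : ℕ) : ‖PP N‖ ≤ 2 * (1 + 3 * Real.pi) := by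
  have hπ := Real.pi_pos
  rw [ContinuousMap.norm_le _ (by positivity)]
  intro x
  induction x using QuotientAddGroup.induction_on with
  | H t =>
    rw [PP_apply]
    rw [norm_mul, norm_mul]
    have h1 : ‖Complex.exp ((N:ℂ) * t * Complex.I)‖ = 1 := by
      rw [show (N:ℂ) * t * Complex.I = (((N:ℝ)*t : ℝ):ℂ) * Complex.I by push_cast; ring]
      exact Complex.norm_exp_ofReal_mul_I _
    have h2 : ‖(-2 : ℂ) * Complex.I‖ = 2 := by
      simp
    rw [h1, h2, one_mul]
    have h3 : ‖((SS N t : ℝ) : ℂ)‖ = |SS N t| := (Complex.norm_real _).trans (Real.norm_eq_abs _)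
    rw [h3]
    nlinarith [SS_bound t N, abs_nonneg (SS N t)]

noncomputable def TT (n : ℕ) : C(𝕋, ℂ) →L[ℂ] ℂ :=
  ∑ k ∈ Finset.Icc (-(n:ℤ)) (n:ℤ), fc k

lemma TT_PP (N : ℕ) :
    TT N (PP N) = ((∑ k ∈ Finset.Ioc 0 N, ((k:ℝ))⁻¹ : ℝ) : ℂ) := by
  rw [TT, ContinuousLinearMap.sum_apply]
  have hfc : ∀ j : ℤ, fc j (PP N) = ∑ k ∈ Finset.Ioc 0 N, (((k:ℝ))⁻¹:ℂ) *
      ((if j = (N:ℤ) - k then (1:ℂ) else 0) - (if j = (N:ℤ) + k then (1:ℂ) else 0)) := by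
    intro j
    rw [PP, map_sum]
    refine Finset.sum_congr rfl fun k hk => ?_
    rw [_root_.map_smul, map_sub, fc_fourier, fc_fourier, smul_eq_mul]
  simp_rw [hfc]
  rw [Finset.sum_comm]
  rw [show ((((∑ k ∈ Finset.Ioc 0 N, ((k:ℝ))⁻¹ : ℝ)) : ℂ))
      = ∑ k ∈ Finset.Ioc 0 N, (((k:ℝ))⁻¹ : ℂ) by push_cast; rfl]
  refine Finset.sum_congr rfl fun k hk => ?_
  obtain ⟨hk0, hkN⟩ := Finset.mem_Ioc.mp hk
  rw [← Finset.mul_sum, Finset.sum_sub_distrib, Finset.sum_ite_eq', Finset.sum_ite_eq']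
  have hin : (N:ℤ) - k ∈ Finset.Icc (-(N:ℤ)) (N:ℤ) := by
    rw [Finset.mem_Icc]
    constructor <;> [omega; omega]
  have hout : (N:ℤ) + k ∉ Finset.Icc (-(N:ℤ)) (N:ℤ)  := by
    rw [Finset.mem_Icc]
    push_neg
    intro _
    omega
  rw [if_pos hin, if_neg hout]
  ring

lemma harmonic_tendsto :
    Tendsto (fun N : ℕ => ∑ k ∈ Finset.Ioc 0 N, ((k:ℝ))⁻¹) atTop atTop := by
  have h := Real.tendsto_sum_range_one_div_nat_succ_atTop
  have heq : ∀ N : ℕ, ∑ k ∈ Finset.Ioc 0 N, ((k:ℝ))⁻¹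
      = ∑ i ∈ Finset.range N, 1 / ((i:ℝ) + 1) := by
    intro N
    have h1 : Finset.Ioc 0 N = Finset.Ico 1 (N+1) := by
      ext x; simp [Nat.lt_succ_iff]; omega
    rw [h1, Finset.sum_Ico_eq_sum_range]
    simp [one_div]
    refine Finset.sum_congr rfl fun i _ => ?_
    congr 1
    push_cast
    ring
  simp_rw [heq]
  exact h

/-- **Theorem 4.2 (2), weak form of du Bois-Reymond.** There exists a continuous function `f` on
the circle whose partial Fourier sums `s n f = Σ_{|k| ≤ n} f̂(k) e^{ikt}` fail to converge to `f`
in the weak topology of `C(𝕋)`: some bounded linear functional `φ` on `C(𝕋)` satisfies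
`φ (s n f) ↛ φ f`. -/
theorem fourier_partial_sums_not_weakly_convergent :
    ∃ f : C(AddCircle (2 * Real.pi), ℂ),
      ∃ φ : StrongDual ℂ C(AddCircle (2 * Real.pi), ℂ),
        ¬ Tendsto (fun n : ℕ =>
            φ (∑ k ∈ Finset.Icc (-(n : ℤ)) (n : ℤ), fourierCoeff (⇑f) k • fourier k))
          atTop (𝓝 (φ f)) := by
  by_contra hcon
  push_neg at hcon
  set φ : StrongDual ℂ C(𝕋, ℂ) := ContinuousMap.evalCLM ℂ (0 : 𝕋) with hφ
  have hφ_apply : ∀ g : C(𝕋, ℂ), φ g = g 0 := fun g => rfl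
  have key : ∀ f : C(𝕋, ℂ), Tendsto (fun n : ℕ => TT n f) atTop (𝓝 (f 0)) := by
    intro f
    have h := hcon f φ
    rw [hφ_apply] at h
    convert h using 2 with n
    rw [hφ_apply]
    rw [TT, ContinuousLinearMap.sum_apply]
    have : ((∑ k ∈ Finset.Icc (-(n : ℤ)) (n : ℤ), fourierCoeff (⇑f) k • fourier k) : C(𝕋,ℂ)) 0
        = ∑ k ∈ Finset.Icc (-(n : ℤ)) (n : ℤ), fourierCoeff (⇑f) k • (fourier k (0:𝕋)) := by
      simp
    rw [this]
    refine Finset.sum_congr rfl fun k _ => ?_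
    rw [fc_apply, fourier_eval_zero, smul_eq_mul, mul_one]
  have bdd : ∀ f : C(𝕋, ℂ), ∃ C, ∀ n : ℕ, ‖TT n f‖ ≤ C := by
    intro f
    obtain ⟨C, hC⟩ := ((key f).norm.bddAbove_range)
    exact ⟨C, fun n => hC (Set.mem_range_self n)⟩
  obtain ⟨C', hC'⟩ := banach_steinhaus bdd
  have hC'0 : 0 ≤ C' := le_trans (norm_nonneg (TT 0)) (hC' 0)
  have hπ := Real.pi_pos
  obtain ⟨N, hN⟩ := (harmonic_tendsto.eventually_gt_atTop (C' * (2 * (1 + 3 * Real.pi)))).exists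
  have h1 : ‖TT N (PP N)‖ ≤ C' * (2 * (1 + 3 * Real.pi)) := by
    calc ‖TT N (PP N)‖ ≤ ‖TT N‖ * ‖PP N‖ := (TT N).le_opNorm _
    _ ≤ C' * (2 * (1 + 3 * Real.pi)) :=
        mul_le_mul (hC' N) (norm_PP_le N) (norm_nonneg _) hC'0
  rw [TT_PP] at h1
  rw [Complex.norm_real] at h1
  have h2 : (0:ℝ) ≤ ∑ k ∈ Finset.Ioc 0 N, ((k:ℝ))⁻¹ :=
    Finset.sum_nonneg fun k _ => by positivity
  rw [Real.norm_eq_abs, abs_of_nonneg h2] at h1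
  linarith
end

section
/- Let H be a complex Hilbert space and let (T_n)_{n≥0} be a sequence of bounded, finite-rank operators on H such that T_nT_m(H) ⊆ T_m(H) and T_n*T_m*(H) ⊆ T_m*(H) for all m,n ≥ 0, where T* denotes the Hilbert-space adjoint. Then the following are equivalent: (i) T_n h → h weakly for all h ∈ H; (ii) T_n h → h in norm for all h ∈ H; (iii) T_n* h → h weakly for all h ∈ H; (iv) T_n* h → h in norm for all h ∈ H. -/
open Filter Topology

local notation "⟪" x ", " y "⟫" => @inner ℂ _ _ x y

private lemma adjoint_range_fd {H : Type*} [NormedAddCommGroup H] [InnerProductSpace ℂ H]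
    [CompleteSpace H] (A : H →L[ℂ] H) (h : FiniteDimensional ℂ (LinearMap.range (A : H →ₗ[ℂ] H))) :
    FiniteDimensional ℂ (LinearMap.range ((ContinuousLinearMap.adjoint A : H →L[ℂ] H) : H →ₗ[ℂ] H)) := by
  haveI := h
  set M : Submodule ℂ H := LinearMap.range (A : H →ₗ[ℂ] H) with hM
  haveI : Submodule.HasOrthogonalProjection M := by infer_instance
  have hle : LinearMap.range ((ContinuousLinearMap.adjoint A : H →L[ℂ] H) : H →ₗ[ℂ] H) ≤
      M.map (ContinuousLinearMap.adjoint A : H →ₗ[ℂ] H) := by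
    rintro _ ⟨x, rfl⟩
    have hxd : x - (Submodule.orthogonalProjection M x : H) ∈ Mᗮ :=
      Submodule.sub_starProjection_mem_orthogonal (K := M) x
    have hzero : ContinuousLinearMap.adjoint A (x - (Submodule.orthogonalProjection M x : H)) = 0 := by
      apply ext_inner_right ℂ
      intro y
      rw [ContinuousLinearMap.adjoint_inner_left, inner_zero_left]
      exact (Submodule.mem_orthogonal' M _).1 hxd (A y) (LinearMap.mem_range_self _ y)
    have h3 : ContinuousLinearMap.adjoint A x -
        ContinuousLinearMap.adjoint A (Submodule.orthogonalProjection M x : H) = 0 := by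
      rw [← map_sub]; exact hzero
    have : ContinuousLinearMap.adjoint A x =
        ContinuousLinearMap.adjoint A (Submodule.orthogonalProjection M x : H) := sub_eq_zero.1 h3
    rw [ContinuousLinearMap.coe_coe, this]
    exact Submodule.mem_map_of_mem (Submodule.coe_mem _)
  exact Submodule.finiteDimensional_of_le hle

private lemma key {H : Type*} [NormedAddCommGroup H] [InnerProductSpace ℂ H]
    [CompleteSpace H] (T : ℕ → H →L[ℂ] H)
    (hfr : ∀ n, FiniteDimensional ℂ (LinearMap.range (T n : H →ₗ[ℂ] H)))
    (hinv : ∀ m n : ℕ, ∀ x : H, T n (T m x) ∈ LinearMap.range (T m : H →ₗ[ℂ] H))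
    (hw : ∀ x y : H, Tendsto (fun n : ℕ => ⟪T n x, y⟫) atTop (𝓝 ⟪x, y⟫)) :
    ∀ x : H, Tendsto (fun n : ℕ => T n x) atTop (𝓝 x) := by
  -- Step A: uniform bound on ‖T n‖ via Banach–Steinhaus
  obtain ⟨C₀, hC₀⟩ : ∃ C, ∀ n, ‖T n‖ ≤ C := by
    apply banach_steinhaus
    intro x
    obtain ⟨C, hC⟩ : ∃ C, ∀ n, ‖innerSL ℂ (T n x)‖ ≤ C := by
      apply banach_steinhaus
      intro y
      obtain ⟨C, hC⟩ := ((hw x y).norm.bddAbove_range)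
      exact ⟨C, fun n => hC ⟨n, rfl⟩⟩
    refine ⟨C, fun n => ?_⟩
    simpa [innerSL_apply_norm] using hC n
  set C := max C₀ 0 with hCdef
  have hC : ∀ n, ‖T n‖ ≤ C := fun n => le_max_of_le_left (hC₀ n)
  have hCpos : (0 : ℝ) < C + 1 := by positivity
  -- Step B: convergence on each range
  have hrange : ∀ m : ℕ, ∀ x ∈ LinearMap.range (T m : H →ₗ[ℂ] H),
      Tendsto (fun n : ℕ => T n x) atTop (𝓝 x) := by
    intro m x hx
    haveI := hfr m
    set M := LinearMap.range (T m : H →ₗ[ℂ] H) with hMdef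
    have hmem : ∀ n, T n x ∈ M := by
      intro n
      obtain ⟨y, rfl⟩ := hx
      exact hinv m n y
    set u : ℕ → M := fun n => ⟨T n x, hmem n⟩ with hu
    set x' : M := ⟨x, hx⟩ with hx'
    have b := stdOrthonormalBasis ℂ M
    have hcoef : ∀ i, Tendsto (fun n => (⟪(b i : M), u n⟫ : ℂ)) atTop (𝓝 ⟪(b i : M), x'⟫) := by
      intro i
      have h1 : Tendsto (fun n : ℕ => ⟪T n x, ((b i : M) : H)⟫) atTop
          (𝓝 ⟪x, ((b i : M) : H)⟫) := hw x _
      have h2 := ((continuous_star.tendsto _).comp h1)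
      simp only [Function.comp_def] at h2
      convert h2 using 2 with n
      · exact (inner_conj_symm _ _).symm
      · exact (inner_conj_symm _ _).symm
    have hsum : Tendsto (fun n => ∑ i, (⟪(b i : M), u n⟫ : ℂ) • b i) atTop
        (𝓝 (∑ i, (⟪(b i : M), x'⟫ : ℂ) • b i)) := by
      apply tendsto_finset_sum
      intro i _
      exact (hcoef i).smul_const (b i)
    simp only [b.sum_repr'] at hsum
    have := (continuous_subtype_val.tendsto x').comp hsum
    simpa [Function.comp_def] using this
  -- Step D: convergence on the supremum of the ranges
  have hsup : ∀ x ∈ (⨆ m, LinearMap.range (T m : H →ₗ[ℂ] H) : Submodule ℂ H),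
      Tendsto (fun n : ℕ => T n x) atTop (𝓝 x) := by
    intro x hx
    refine Submodule.iSup_induction (motive := fun z => Tendsto (fun n : ℕ => T n z) atTop (𝓝 z))
      _ hx hrange ?_ ?_
    · simpa using tendsto_const_nhds (x := (0 : H)) (f := (atTop : Filter ℕ))
    · intro a b ha hb
      have := ha.add hb
      simpa using this
  -- Step C: density of the supremum
  set V := (⨆ m, LinearMap.range (T m : H →ₗ[ℂ] H) : Submodule ℂ H).topologicalClosure with hV
  have hVtop : V = ⊤ := by
    haveI : Submodule.HasOrthogonalProjection V := by
      haveI : CompleteSpace V :=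
        (Submodule.isClosed_topologicalClosure _).completeSpace_coe
      infer_instance
    rw [← Submodule.orthogonal_eq_bot_iff]
    rw [Submodule.eq_bot_iff]
    intro w hw'
    have hz : ∀ n, (⟪T n w, w⟫ : ℂ) = 0 := by
      intro n
      have hmem : T n w ∈ V :=
        (Submodule.le_topologicalClosure _)
          (Submodule.mem_iSup_of_mem n (LinearMap.mem_range_self _ w))
      exact ((Submodule.mem_orthogonal V w).1 hw' (T n w) hmem)
    have h1 : Tendsto (fun n : ℕ => (⟪T n w, w⟫ : ℂ)) atTop (𝓝 0) := by
      simpa [hz] using tendsto_const_nhds (x := (0 : ℂ)) (f := (atTop : Filter ℕ))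
    have h2 := tendsto_nhds_unique (hw w w) h1
    exact inner_self_eq_zero.1 h2
  -- Step E: extend by density
  intro x
  rw [Metric.tendsto_atTop]
  intro ε hε
  have hxV : x ∈ closure ((⨆ m, LinearMap.range (T m : H →ₗ[ℂ] H) : Submodule ℂ H) : Set H) := by
    have : x ∈ V := hVtop ▸ Submodule.mem_top
    exact this
  obtain ⟨y, hyD, hxy⟩ := Metric.mem_closure_iff.1 hxV (ε / (2 * (C + 1)))
    (by positivity)
  obtain ⟨N, hN⟩ := (Metric.tendsto_atTop.1 (hsup y hyD)) (ε / 2) (by positivity)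
  refine ⟨N, fun n hn => ?_⟩
  have h1 : ‖T n x - T n y‖ ≤ C * ‖x - y‖ := by
    calc ‖T n x - T n y‖ = ‖T n (x - y)‖ := by rw [map_sub]
    _ ≤ ‖T n‖ * ‖x - y‖ := (T n).le_opNorm _
    _ ≤ C * ‖x - y‖ := by
        apply mul_le_mul_of_nonneg_right (hC n) (norm_nonneg _)
  have h2 : ‖T n y - y‖ < ε / 2 := by
    have := hN n hn
    rwa [dist_eq_norm] at this
  have hxy' : ‖x - y‖ < ε / (2 * (C + 1)) := by
    rwa [dist_eq_norm] at hxy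
  have hbound : (C + 1) * ‖x - y‖ < ε / 2 := by
    have := mul_lt_mul_of_pos_left hxy' hCpos
    calc (C + 1) * ‖x - y‖ < (C + 1) * (ε / (2 * (C + 1))) := this
    _ = ε / 2 := by field_simp
  rw [dist_eq_norm]
  calc ‖T n x - x‖ ≤ ‖T n x - T n y‖ + ‖T n y - y‖ + ‖y - x‖ := by
        have : T n x - x = (T n x - T n y) + (T n y - y) + (y - x) := by abel
        rw [this]
        exact norm_add₃_le
  _ ≤ C * ‖x - y‖ + ‖T n y - y‖ + ‖x - y‖ := by
        rw [norm_sub_rev y x]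
        linarith [h1]
  _ = (C + 1) * ‖x - y‖ + ‖T n y - y‖ := by ring
  _ < ε / 2 + ε / 2 := by linarith
  _ = ε := by ring

/-- **Theorem 5.1.** For a sequence of bounded finite-rank operators `T n` on a complex Hilbert
space `H` such that the range of each `T m` is invariant under every `T n`, and the range of each
adjoint `T m *` is invariant under every adjoint `T n *`, the following are equivalent:
(i) `T n h → h` weakly for all `h`; (ii) `T n h → h` in norm for all `h`;
(iii) `T n * h → h` weakly for all `h`; (iv) `T n * h → h` in norm for all `h`. -/
theorem hilbert_norm_norm {H : Type*} [NormedAddCommGroup H] [InnerProductSpace ℂ H]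
    [CompleteSpace H] (T : ℕ → H →L[ℂ] H)
    (hfr : ∀ n, FiniteDimensional ℂ (LinearMap.range (T n : H →ₗ[ℂ] H)))
    (hinv : ∀ m n : ℕ, ∀ x : H, T n (T m x) ∈ LinearMap.range (T m : H →ₗ[ℂ] H))
    (hinv' : ∀ m n : ℕ, ∀ x : H,
      ContinuousLinearMap.adjoint (T n) (ContinuousLinearMap.adjoint (T m) x) ∈
        LinearMap.range ((ContinuousLinearMap.adjoint (T m) : H →L[ℂ] H) : H →ₗ[ℂ] H)) :
    List.TFAE
      [∀ x y : H, Tendsto (fun n : ℕ => (inner ℂ (T n x) y : ℂ)) atTop (𝓝 (inner ℂ x y)),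
        ∀ x : H, Tendsto (fun n : ℕ => T n x) atTop (𝓝 x),
        ∀ x y : H, Tendsto (fun n : ℕ => (inner ℂ (ContinuousLinearMap.adjoint (T n) x) y : ℂ))
          atTop (𝓝 (inner ℂ x y)),
        ∀ x : H, Tendsto (fun n : ℕ => ContinuousLinearMap.adjoint (T n) x) atTop (𝓝 x)] := by
  tfae_have 2 → 1 := by
    intro h x y
    exact (h x).inner tendsto_const_nhds
  tfae_have 4 → 3 := by
    intro h x y
    exact (h x).inner tendsto_const_nhds
  tfae_have 1 → 3 := by
    intro h x y
    have h1 := h y x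
    have h2 := (continuous_star.tendsto _).comp h1
    simp only [Function.comp_def] at h2
    convert h2 using 2 with n
    · rw [ContinuousLinearMap.adjoint_inner_left, ← inner_conj_symm]; rfl
    · rw [← inner_conj_symm]; rfl
  tfae_have 3 → 1 := by
    intro h x y
    have h1 := h y x
    have h2 := (continuous_star.tendsto _).comp h1
    simp only [Function.comp_def] at h2
    convert h2 using 2 with n
    · rw [← ContinuousLinearMap.adjoint_inner_right, ← inner_conj_symm]; rfl
    · rw [← inner_conj_symm]; rfl
  tfae_have 1 → 2 := fun h => key T hfr hinv h
  tfae_have 3 → 4 := fun h =>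
    key (fun n => ContinuousLinearMap.adjoint (T n))
      (fun n => adjoint_range_fd (T n) (hfr n)) hinv' h
  tfae_finish
end
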